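/- arXiv:2503.03243 — 12 statements merged into one kernel-verified Lean document; each statement's English description precedes it below -/
import Mathlib

section
/- Let n and k be natural numbers with k ≥ 1. For all a, b in F(n,k) one has the identity of real numbers ⟨s a, s b⟩ = ⟨s† a, s† b⟩ + ((n : ℝ) − 2·k)·⟨a, b⟩, where on the left s : F(n,k) → F(n,k+1) is the up operator, on the right s† : F(n,k) → F(n,k−1) is the down operator (defined by (s† a)(S) = Σ_{j ∉ S} a(S ∪ {j}) for (k−1)-element subsets S), and the coefficient n − 2k is taken in ℝ (it may be negative). -/
/-! Extended by zero to functions on all subsets of `Fin n`, the operators `s` and `s†` are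
adjoint to each other and satisfy the commutation relation
`s† s f (S) + |S| f(S) = s s† f (S) + |Sᶜ| f(S)`: both sides are `|S| f(S) + |Sᶜ| f(S)` plus the
sum of `f (S - j + i)` over `j ∈ S`, `i ∉ S`. Hence, for `a, b` supported on `k`-sets,
`⟨s a, s b⟩ = ⟨a, s† s b⟩ = ⟨a, s s† b⟩ + (n - 2k) ⟨a, b⟩ = ⟨s† a, s† b⟩ + (n - 2k) ⟨a, b⟩`. -/

/-- `FSub n k` is the real vector space of real-valued functions on the collection of
`k`-element subsets of `Fin n`. -/
abbrev FSub (n k : ℕ) : Type := {S : Finset (Fin n) // S.card = k} → ℝ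

/-- The up operator `s : F(n,k) → F(n,k+1)`, `(s a)(T) = Σ_{j ∈ T} a (T \ {j})`. -/
noncomputable def upOp (n k : ℕ) (a : FSub n k) : FSub n (k + 1) := fun T =>
  ∑ j ∈ T.1.attach, a ⟨T.1.erase j.1, by
    have h1 := Finset.card_erase_of_mem j.2
    have h2 := T.2
    omega⟩

/-- The down operator `s† : F(n,k) → F(n,k-1)`, `(s† a)(S) = Σ_{j ∉ S} a (S ∪ {j})`
(for `k ≥ 1`; the guard is provably satisfied in that case). -/
noncomputable def downOp (n k : ℕ) (a : FSub n k) : FSub n (k - 1) := fun S =>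
  ∑ j ∈ (S.1ᶜ).attach,
    if h : (insert j.1 S.1).card = k then a ⟨insert j.1 S.1, h⟩ else 0

/-- The standard inner product on `F(n,k)`: `⟨a,b⟩ = Σ_S a(S)·b(S)`. -/
noncomputable def ip (n k : ℕ) (a b : FSub n k) : ℝ :=
  ∑ S : {S : Finset (Fin n) // S.card = k}, a S * b S

open Finset

section UpDown

variable {α M : Type*} [DecidableEq α]

def upSum [AddCommMonoid M] (f : Finset α → M) (T : Finset α) : M :=
  ∑ j ∈ T, f (T.erase j)

def downSum [Fintype α] [AddCommMonoid M] (f : Finset α → M) (S : Finset α) : M :=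
  ∑ j ∈ Sᶜ, f (insert j S)

variable [Fintype α]

theorem sum_upSum_mul [NonUnitalNonAssocSemiring M] (f g : Finset α → M) :
    ∑ T, upSum f T * g T = ∑ S, f S * downSum g S := by
  simp only [upSum, downSum, sum_mul, mul_sum]
  rw [sum_sigma' univ (fun T : Finset α => T), sum_sigma' univ (fun S : Finset α => Sᶜ)]
  refine sum_nbij' (fun p => ⟨p.1.erase p.2, p.2⟩) (fun p => ⟨insert p.2 p.1, p.2⟩)
    ?_ ?_ ?_ ?_ ?_ <;>
  rintro ⟨S, j⟩ h <;>
  simp only [mem_sigma, mem_univ, true_and, mem_compl] at h <;>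
  simp [h]

theorem downSum_upSum [AddCommMonoid M] (f : Finset α → M) (S : Finset α) :
    downSum (upSum f) S = #Sᶜ • f S + ∑ i ∈ Sᶜ, ∑ j ∈ S, f (insert i (S.erase j)) := by
  rw [← sum_const, ← sum_add_distrib]
  refine sum_congr rfl fun i hi => ?_
  have hiS : i ∉ S := mem_compl.1 hi
  rw [upSum, sum_insert hiS, erase_insert hiS]
  congr 1
  refine sum_congr rfl fun j hj => ?_
  rw [erase_insert_of_ne (ne_of_mem_of_not_mem hj hiS).symm]

theorem upSum_downSum [AddCommMonoid M] (f : Finset α → M) (S : Finset α) :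
    upSum (downSum f) S = #S • f S + ∑ j ∈ S, ∑ i ∈ Sᶜ, f (insert i (S.erase j)) := by
  rw [← sum_const, ← sum_add_distrib]
  refine sum_congr rfl fun j hj => ?_
  have hcompl : (S.erase j)ᶜ = insert j Sᶜ := by
    ext x
    by_cases hx : x = j <;> simp [hx, hj]
  rw [downSum, hcompl, sum_insert (by simpa using hj), insert_erase hj]

theorem downSum_upSum_add_card_nsmul [AddCommMonoid M] (f : Finset α → M) (S : Finset α) :
    downSum (upSum f) S + #S • f S = upSum (downSum f) S + #Sᶜ • f S := by
  rw [downSum_upSum, upSum_downSum, sum_comm]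
  abel

end UpDown

noncomputable def extendByZero {n k : ℕ} (a : FSub n k) (S : Finset (Fin n)) : ℝ :=
  if h : #S = k then a ⟨S, h⟩ else 0

section ExtendByZero

variable {n k : ℕ}

@[simp]
theorem extendByZero_apply (a : FSub n k) (S : {S : Finset (Fin n) // #S = k}) :
    extendByZero a S = a S := dif_pos S.2

theorem extendByZero_of_card_ne (a : FSub n k) {S : Finset (Fin n)} (h : #S ≠ k) :
    extendByZero a S = 0 := dif_neg h

theorem ip_eq_sum_extendByZero (a b : FSub n k) :
    ip n k a b = ∑ S, extendByZero a S * extendByZero b S := by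
  rw [← Fintype.sum_subtype_add_sum_subtype (fun S : Finset (Fin n) => #S = k)]
  have hzero : ∀ S : {S : Finset (Fin n) // ¬#S = k},
      extendByZero a S * extendByZero b S = 0 := fun S => by
    rw [extendByZero_of_card_ne a S.2, zero_mul]
  simp only [ip, extendByZero_apply, hzero, sum_const_zero, add_zero]

theorem extendByZero_upOp (a : FSub n k) :
    extendByZero (upOp n k a) = upSum (extendByZero a) := by
  funext T
  by_cases hT : #T = k + 1
  · rw [upSum, ← sum_attach]
    exact (extendByZero_apply _ ⟨T, hT⟩).trans
      (sum_congr rfl fun j _ => (extendByZero_apply a _).symm)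
  · rw [extendByZero_of_card_ne _ hT]
    refine (sum_eq_zero fun j hj => extendByZero_of_card_ne a ?_).symm
    have := card_erase_add_one hj
    omega

theorem extendByZero_downOp (hk : 1 ≤ k) (a : FSub n k) :
    extendByZero (downOp n k a) = downSum (extendByZero a) := by
  funext S
  have hcard : ∀ j ∉ S, #(insert j S) = #S + 1 := fun j hj => card_insert_of_notMem hj
  by_cases hS : #S = k - 1
  · rw [downSum, ← sum_attach]
    refine (extendByZero_apply _ ⟨S, hS⟩).trans (sum_congr rfl fun j _ => ?_)
    have hjS : j.1 ∉ S := mem_compl.1 j.2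
    rw [dif_pos (by rw [hcard j hjS]; omega), ← extendByZero_apply a]
  · rw [extendByZero_of_card_ne _ hS]
    refine (sum_eq_zero fun j hj => extendByZero_of_card_ne a ?_).symm
    rw [hcard j (mem_compl.1 hj)]
    omega

end ExtendByZero

/-- For `k ≥ 1` and all `a, b ∈ F(n,k)`:
`⟨s a, s b⟩ = ⟨s† a, s† b⟩ + (n − 2k)·⟨a, b⟩`, the coefficient taken in `ℝ`. -/
theorem up_up_inner_eq_down_down_add (n k : ℕ) (hk : 1 ≤ k) (a b : FSub n k) :
    ip n (k + 1) (upOp n k a) (upOp n k b) =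
      ip n (k - 1) (downOp n k a) (downOp n k b) + ((n : ℝ) - 2 * k) * ip n k a b := by
  simp only [ip_eq_sum_extendByZero, extendByZero_upOp, extendByZero_downOp hk]
  set f := extendByZero a
  set g := extendByZero b
  have hdown : ∑ S, downSum f S * downSum g S = ∑ S, f S * upSum (downSum g) S := by
    simp only [mul_comm (downSum f _), mul_comm (f _), sum_upSum_mul]
  rw [sum_upSum_mul, hdown, mul_sum, ← sum_add_distrib]
  refine sum_congr rfl fun S _ => ?_
  by_cases hS : #S = k
  · have hcomm := downSum_upSum_add_card_nsmul g S
    have hcompl : (#Sᶜ : ℝ) = n - k := by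
      have hn : k + #Sᶜ = n := by simpa [hS] using card_add_card_compl S
      rw [eq_sub_iff_add_eq', ← Nat.cast_add, hn]
    rw [nsmul_eq_mul, nsmul_eq_mul, hcompl, hS] at hcomm
    linear_combination f S * hcomm
  · simp [f, extendByZero_of_card_ne a hS]
end

section
/- Let n, k, p be natural numbers with n ≥ 2k and 1 ≤ p ≤ k. For all a, b in F(n,k) one has ⟨s_[p] a, s_[p] b⟩ = Σ_{q=0}^{p} C(n−2k, p−q)·⟨s†_[q] a, s†_[q] b⟩, where the inner product on the left is taken in F(n,k+p), the inner product in the q-th summand is taken in F(n,k−q), s†_[0] is the identity, and C(·,·) denotes the ordinary binomial coefficient. -/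
/-- The iterated up operator `s_[p] : F(n,k) → F(n,k+p)`,
`(s_[p] a)(T) = Σ_{S ⊆ T, |S| = k} a(S)` for every `(k+p)`-element subset `T`. -/
noncomputable def upIter (n k p : ℕ) (a : FSub n k) : FSub n (k + p) := fun T =>
  ∑ S : {S : Finset (Fin n) // S.card = k}, if S.1 ⊆ T.1 then a S else 0

/-- The iterated down operator `s†_[p] : F(n,k) → F(n,k−p)`,
`(s†_[p] a)(S) = Σ_{T ⊇ S, |T| = k} a(T)` for every `(k−p)`-element subset `S`;
`s†_[0]` is the identity. -/
noncomputable def downIter (n k p : ℕ) (a : FSub n k) : FSub n (k - p) := fun S =>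
  ∑ T : {T : Finset (Fin n) // T.card = k}, if S.1 ⊆ T.1 then a T else 0

/-! Expanding both inner products bilinearly, each side becomes `∑_{S,S'} a(S) b(S') K(S,S')`,
where on the left `K` counts the common `(k+p)`-supersets of `S` and `S'` and on the right the
common `(k-q)`-subsets, i.e. the `(k-q)`-subsets of `S ∩ S'`. With `j = |S ∩ S'|` the first count
is `C(n-2k+j, n-k-p)` and the second is `C(j, k-q)`, so the two kernels agree by Vandermonde's
convolution. -/

open Finset

theorem sum_range_choose_mul_choose_add (m j c p : ℕ) (h : j ≤ p + c) :
    ∑ i ∈ range (p + 1), m.choose i * j.choose (c + i) = (m + j).choose (m + c) := by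
  rcases le_or_gt c j with hc | hc
  · have hrange : ∑ i ∈ range (p + 1), m.choose i * j.choose (c + i) =
        ∑ i ∈ range (j - c + 1), m.choose i * j.choose (c + i) := by
      refine (sum_subset (range_subset_range.2 (by omega)) fun i _ hi => ?_).symm
      rw [mem_range] at hi
      rw [Nat.choose_eq_zero_of_lt (show j < c + i by omega), mul_zero]
    rw [hrange, Nat.choose_symm_of_eq_add (show m + j = m + c + (j - c) by omega),
      Nat.add_choose_eq, Nat.sum_antidiagonal_eq_sum_range_succ fun a b => m.choose a * j.choose b]
    refine sum_congr rfl fun i hi => ?_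
    rw [mem_range] at hi
    rw [Nat.choose_symm_of_eq_add (show j = c + i + (j - c - i) by omega)]
  · rw [Nat.choose_eq_zero_of_lt (by omega)]
    exact sum_eq_zero fun i _ => by
      rw [Nat.choose_eq_zero_of_lt (show j < c + i by omega), mul_zero]

theorem sum_incidence_mul_incidence {R α β : Type*} [CommSemiring R] [Fintype α] [Fintype β]
    (r : α → β → Prop) [DecidableRel r] (a b : α → R) :
    ∑ y, (∑ x, if r x y then a x else 0) * (∑ x, if r x y then b x else 0) =
      ∑ x, ∑ x', a x * b x' * #{y | r x y ∧ r x' y} := by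
  simp_rw [sum_mul_sum, ite_zero_mul_ite_zero]
  rw [sum_comm]
  refine sum_congr rfl fun x _ => ?_
  rw [sum_comm]
  refine sum_congr rfl fun x' _ => ?_
  rw [← sum_filter, sum_const, nsmul_eq_mul, mul_comm]

theorem ip_upIter (n k p : ℕ) (a b : FSub n k) :
    ip n (k + p) (upIter n k p a) (upIter n k p b) =
      ∑ S, ∑ S', a S * b S' *
        #{T : {T : Finset (Fin n) // T.card = k + p} | S.1 ⊆ T.1 ∧ S'.1 ⊆ T.1} :=
  sum_incidence_mul_incidence (fun (S : {S : Finset (Fin n) // S.card = k})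
    (T : {T : Finset (Fin n) // T.card = k + p}) => S.1 ⊆ T.1) a b

theorem ip_downIter (n k q : ℕ) (a b : FSub n k) :
    ip n (k - q) (downIter n k q a) (downIter n k q b) =
      ∑ S, ∑ S', a S * b S' *
        #{U : {U : Finset (Fin n) // U.card = k - q} | U.1 ⊆ S.1 ∧ U.1 ⊆ S'.1} :=
  sum_incidence_mul_incidence (fun (S : {S : Finset (Fin n) // S.card = k})
    (U : {U : Finset (Fin n) // U.card = k - q}) => U.1 ⊆ S.1) a b

section Counting

variable {α : Type*} [Fintype α] [DecidableEq α]

theorem card_subsets_of_card (A : Finset α) (r : ℕ) :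
    #{U : {U : Finset α // U.card = r} | U.1 ⊆ A} = (#A).choose r := by
  rw [← card_powersetCard r A, ← card_map (Function.Embedding.subtype _)]
  congr 1
  ext U
  simp [mem_powersetCard]

/-- Counting the complements `Tᶜ ⊆ Aᶜ` gives a formula that stays correct when `t < #A`. -/
theorem card_supersets_of_card (A : Finset α) {t : ℕ} (ht : t ≤ Fintype.card α) :
    #{T : {T : Finset α // T.card = t} | A ⊆ T.1} =
      (Fintype.card α - #A).choose (Fintype.card α - t) := by
  rw [← card_compl, ← card_subsets_of_card]
  refine card_nbij' (fun T => ⟨T.1ᶜ, by rw [card_compl, T.2]⟩)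
    (fun U => ⟨U.1ᶜ, by rw [card_compl, U.2]; omega⟩) ?_ ?_ ?_ ?_ <;>
    intro T <;> simp [subset_compl_comm]

theorem card_common_supersets_eq_sum {k p : ℕ} (hk : 2 * k ≤ Fintype.card α) (hp : p ≤ k)
    (S S' : {S : Finset α // S.card = k}) :
    #{T : {T : Finset α // T.card = k + p} | S.1 ⊆ T.1 ∧ S'.1 ⊆ T.1} =
      ∑ q ∈ range (p + 1), (Fintype.card α - 2 * k).choose (p - q) *
        #{U : {U : Finset α // U.card = k - q} | U.1 ⊆ S.1 ∧ U.1 ⊆ S'.1} := by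
  set j := #(S.1 ∩ S'.1)
  have hj : j ≤ k := S.2 ▸ card_le_card inter_subset_left
  have hunion : #(S.1 ∪ S'.1) = 2 * k - j := by
    have := card_union_add_card_inter S.1 S'.1
    omega
  simp only [← union_subset_iff, ← subset_inter_iff, card_subsets_of_card]
  rw [card_supersets_of_card _ (by omega), hunion,
    show Fintype.card α - (2 * k - j) = Fintype.card α - 2 * k + j by omega,
    show Fintype.card α - (k + p) = Fintype.card α - 2 * k + (k - p) by omega,
    ← sum_range_choose_mul_choose_add _ _ _ p (by omega), ← sum_range_reflect]
  refine sum_congr rfl fun q hq => ?_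
  rw [mem_range] at hq
  congr 2
  omega

end Counting

theorem upIter_inner_eq_sum_downIter_general (n k p : ℕ) (hn : 2 * k ≤ n)
    (hpk : p ≤ k) (a b : FSub n k) :
    ip n (k + p) (upIter n k p a) (upIter n k p b) =
      ∑ q ∈ Finset.range (p + 1),
        (Nat.choose (n - 2 * k) (p - q) : ℝ) *
          ip n (k - q) (downIter n k q a) (downIter n k q b) := by
  have hcount := card_common_supersets_eq_sum (α := Fin n) (p := p) (by simpa using hn) hpk
  simp only [ip_upIter, ip_downIter, hcount, Fintype.card_fin, Nat.cast_sum, Nat.cast_mul, mul_sum]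
  conv_rhs => rw [sum_comm]; enter [2, S]; rw [sum_comm]
  refine sum_congr rfl fun S _ => sum_congr rfl fun S' _ => sum_congr rfl fun q _ => ?_
  ring

/-- For `n ≥ 2k` and `1 ≤ p ≤ k`, for all `a, b ∈ F(n,k)`:
`⟨s_[p] a, s_[p] b⟩ = Σ_{q=0}^{p} C(n−2k, p−q)·⟨s†_[q] a, s†_[q] b⟩`. -/
theorem upIter_inner_eq_sum_downIter (n k p : ℕ) (hn : 2 * k ≤ n) (hp1 : 1 ≤ p)
    (hpk : p ≤ k) (a b : FSub n k) :
    ip n (k + p) (upIter n k p a) (upIter n k p b) =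
      ∑ q ∈ Finset.range (p + 1),
        (Nat.choose (n - 2 * k) (p - q) : ℝ) *
          ip n (k - q) (downIter n k q a) (downIter n k q b) :=
  upIter_inner_eq_sum_downIter_general n k p hn hpk a b
end

section
/- Let n, k, p be natural numbers with p ≥ 1. (1) If n ≥ 2k+p, then the iterated up operator s_[p] : F(n,k) → F(n,k+p) is injective and the iterated down operator s†_[p] : F(n,k+p) → F(n,k) is surjective. (2) If p ≤ k and n ≤ 2k−p, then the iterated up operator s_[p] : F(n,k−p) → F(n,k) is surjective and the iterated down operator s†_[p] : F(n,k) → F(n,k−p) is injective. -/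
open Finset

section Aux

lemma adj_surj {ι κ : Type*} [Fintype ι] [Fintype κ]
    (f : (ι → ℝ) → (κ → ℝ)) (g : (κ → ℝ) → (ι → ℝ))
    (hg : IsLinearMap ℝ g)
    (hfg : ∀ a b, (∑ t, f a t * b t) = ∑ s, a s * g b s)
    (hf : Function.Injective f) (hf0 : f 0 = 0) : Function.Surjective g := by
  let G : EuclideanSpace ℝ κ →ₗ[ℝ] EuclideanSpace ℝ ι :=
    { toFun := fun b => WithLp.toLp 2 (g b.ofLp), map_add' := fun x y => by simp [hg.map_add],
      map_smul' := fun c x => by simp [hg.map_smul] }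
  suffices h : LinearMap.range G = ⊤ by
    intro v
    obtain ⟨b, hb⟩ := LinearMap.range_eq_top.mp h (WithLp.toLp 2 v)
    exact ⟨b.ofLp, congrArg WithLp.ofLp hb⟩
  by_contra hne
  have hbot : (LinearMap.range G)ᗮ ≠ ⊥ := by
    intro hb
    exact hne (Submodule.orthogonal_eq_bot_iff.mp hb)
  obtain ⟨a, ha, ha0⟩ := Submodule.exists_mem_ne_zero_of_ne_bot hbot
  have hinner : ∀ b : EuclideanSpace ℝ κ, (∑ s, a s * G b s) = 0 := by
    intro b
    have := Submodule.inner_right_of_mem_orthogonal (K := LinearMap.range G)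
      (LinearMap.mem_range_self G b) ha
    -- inner (G b) a = 0 ; inner = ∑ conj((G b) i) * a i
    simp only [PiLp.inner_apply, RCLike.inner_apply, starRingEnd_apply, star_trivial] at this
    calc (∑ s, a s * G b s) = ∑ s, G b s * a s := by simp [mul_comm]
    _ = 0 := by rw [← this]; exact Finset.sum_congr rfl fun s _ => mul_comm _ _
  have hfa : f a = 0 := by
    have h0 : (∑ t, f a t * f a t) = 0 := by
      rw [hfg a (f a)]
      exact hinner (WithLp.toLp 2 (f a))
    funext t
    have := (Finset.sum_eq_zero_iff_of_nonneg (fun i _ => mul_self_nonneg (f a i))).mp h0 t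
      (Finset.mem_univ t)
    exact mul_self_eq_zero.mp this
  exact ha0 (by ext i; simpa using congrFun (hf (hfa.trans hf0.symm)) i)


lemma card_superset {n : ℕ} (A : Finset (Fin n)) (m : ℕ) :
    ((Finset.univ.powersetCard m).filter (fun T => A ⊆ T)).card
      = if A.card ≤ m then (n - A.card).choose (m - A.card) else 0 := by
  split_ifs with h
  · have : ((Finset.univ.powersetCard m).filter (fun T => A ⊆ T)).card
        = (Aᶜ.powersetCard (m - A.card)).card := by
      apply Finset.card_nbij' (fun T => T \ A) (fun B => B ∪ A)
      · intro T hT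
        simp only [mem_coe, mem_filter, mem_powersetCard_univ] at hT
        rw [mem_coe, mem_powersetCard]
        refine ⟨fun x hx => ?_, ?_⟩
        · simp only [mem_sdiff] at hx
          simp [hx.2]
        · rw [card_sdiff_of_subset hT.2, hT.1]
      · intro B hB
        rw [mem_coe, mem_powersetCard] at hB
        have hdisj : Disjoint B A := by
          rw [Finset.disjoint_left]
          intro x hx
          have := hB.1 hx
          simp only [Finset.mem_compl] at this
          exact this
        simp only [mem_coe, mem_filter, mem_powersetCard_univ]
        refine ⟨?_, subset_union_right⟩
        rw [card_union_of_disjoint hdisj, hB.2]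
        omega
      · intro T hT
        simp only [mem_coe, mem_filter, mem_powersetCard_univ] at hT
        exact sdiff_union_of_subset hT.2
      · intro B hB
        rw [mem_coe, mem_powersetCard] at hB
        apply union_sdiff_cancel_right
        rw [Finset.disjoint_left]
        intro x hx
        have := hB.1 hx
        simp only [Finset.mem_compl] at this
        exact this
    rw [this, card_powersetCard, card_compl, Fintype.card_fin]
  · rw [Finset.card_eq_zero, Finset.filter_eq_empty_iff]
    intro T hT
    rw [mem_powersetCard_univ] at hT
    intro hsub
    exact h (hT ▸ card_le_card hsub)

lemma key_nat (m k p i : ℕ) (hik : i ≤ k) (hpm : p ≤ m) :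
    (if i ≤ p then (m + (k - i)).choose (p - i) else 0)
      = ∑ j ∈ range (min p k + 1), m.choose (p - j) * (k - i).choose (k - j) := by
  split_ifs with hip
  · have hvdm : (m + (k - i)).choose (p - i)
        = ∑ t ∈ range (p - i + 1), m.choose (p - i - t) * (k - i).choose t := by
      rw [Nat.add_choose_eq, Finset.Nat.sum_antidiagonal_eq_sum_range_succ_mk]
      rw [← Finset.sum_range_reflect]
      apply Finset.sum_congr rfl
      intro t ht
      rw [mem_range] at ht
      congr 1 <;> congr 1 <;> omega
    rw [hvdm]
    symm
    have hiq : i ≤ min p k := le_min hip hik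
    rw [range_eq_Ico, ← Finset.sum_Ico_consecutive _ (Nat.zero_le i) (by omega : i ≤ min p k + 1)]
    rw [Finset.sum_eq_zero (fun j hj => by
      rw [mem_Ico] at hj
      rw [Nat.choose_eq_zero_of_lt (by omega : k - i < k - j), mul_zero]), zero_add]
    rw [Finset.sum_Ico_eq_sum_range]
    have hstep : ∀ t ∈ range (min p k + 1 - i),
        m.choose (p - (i + t)) * (k - i).choose (k - (i + t))
          = m.choose (p - i - t) * (k - i).choose t := by
      intro t ht
      rw [mem_range] at ht
      have h1 : k - (i + t) = (k - i) - t := by omega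
      have h2 : p - (i + t) = (p - i) - t := by omega
      rw [h1, h2, Nat.choose_symm (by omega : t ≤ k - i)]
    rw [Finset.sum_congr rfl hstep]
    apply Finset.sum_subset
    · apply Finset.range_subset_range.mpr; omega
    · intro t ht1 ht2
      rw [mem_range] at ht1 ht2
      rw [Nat.choose_eq_zero_of_lt (by omega : k - i < t), mul_zero]
  · symm
    apply Finset.sum_eq_zero
    intro j hj
    rw [mem_range] at hj
    rw [Nat.choose_eq_zero_of_lt (by omega : k - i < k - j), mul_zero]

lemma expand_sq {X Y : Type*} (C : Finset X) (A : Finset Y)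
    (cond : Y → X → Prop) [∀ y x, Decidable (cond y x)] (g : Y → ℝ) :
    ∑ T ∈ C, (∑ S ∈ A.filter (fun S => cond S T), g S)^2
      = ∑ S ∈ A, ∑ S' ∈ A,
          g S * g S' * ((C.filter (fun T => cond S T ∧ cond S' T)).card : ℝ) := by
  have step1 : ∀ T ∈ C, (∑ S ∈ A.filter (fun S => cond S T), g S)^2
      = ∑ S ∈ A, ∑ S' ∈ A,
          (if cond S T ∧ cond S' T then g S * g S' else 0) := by
    intro T _
    rw [sq, Finset.sum_filter, Finset.sum_mul_sum]
    apply Finset.sum_congr rfl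
    intro S _
    apply Finset.sum_congr rfl
    intro S' _
    split_ifs with h1 h2 h3 h4 <;> simp_all
  rw [Finset.sum_congr rfl step1, Finset.sum_comm]
  apply Finset.sum_congr rfl
  intro S _
  rw [Finset.sum_comm]
  apply Finset.sum_congr rfl
  intro S' _
  rw [← Finset.sum_filter, Finset.sum_const, nsmul_eq_mul, mul_comm]

lemma up_ker (n k p : ℕ) (h : 2*k+p ≤ n) (a : FSub n k)
    (ha : ∀ T : {T : Finset (Fin n) // T.card = k + p},
      (∑ S : {S : Finset (Fin n) // S.card = k}, if S.1 ⊆ T.1 then a S else 0) = 0) :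
    a = 0 := by
  classical
  set g : Finset (Fin n) → ℝ := fun S => if h : S.card = k then a ⟨S, h⟩ else 0 with hgdef
  -- the filtered family of card-k subsets of T is `A.filter (· ⊆ T)`
  have hfil : ∀ (m : ℕ) (T : Finset (Fin n)),
      ((univ.powersetCard m).filter (fun S => S ⊆ T)) = T.powersetCard m := by
    intro m T
    ext S
    simp only [mem_filter, mem_powersetCard_univ, mem_powersetCard, subset_univ]
    tauto
  have hT0 : ∀ T ∈ (univ : Finset (Fin n)).powersetCard (k+p),
      (∑ S ∈ (univ.powersetCard k).filter (fun S => S ⊆ T), g S) = 0 := by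
    intro T hT
    rw [mem_powersetCard_univ] at hT
    have h1 := ha ⟨T, hT⟩
    calc ∑ S ∈ (univ.powersetCard k).filter (fun S => S ⊆ T), g S
        = ∑ S ∈ univ.powersetCard k, if S ⊆ T then g S else 0 := by rw [Finset.sum_filter]
      _ = ∑ S : {S : Finset (Fin n) // S.card = k}, if S.1 ⊆ T then g S.1 else 0 :=
          Finset.sum_subtype _ (fun S => mem_powersetCard_univ) _
      _ = ∑ S : {S : Finset (Fin n) // S.card = k}, if S.1 ⊆ T then a S else 0 := by
          apply Finset.sum_congr rfl
          rintro ⟨S, hS⟩ _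
          simp [hgdef, hS]
      _ = 0 := h1
  -- counting per pair
  have hcount : ∀ S S' : Finset (Fin n), S.card = k → S'.card = k →
      (((univ : Finset (Fin n)).powersetCard (k+p)).filter
          (fun T => S ⊆ T ∧ S' ⊆ T)).card
        = ∑ j ∈ range (min p k + 1),
            (n-2*k).choose (p-j) * ((S ∩ S').card).choose (k-j) := by
    intro S S' hS hS'
    have hc : (S ∪ S').card + (S ∩ S').card = 2*k := by
      rw [card_union_add_card_inter, hS, hS']; ring
    have hck : (S ∩ S').card ≤ k := by
      have h2 : S ∩ S' ⊆ S := inter_subset_left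
      have h3 := card_le_card h2
      omega
    have hfe : ((univ : Finset (Fin n)).powersetCard (k+p)).filter (fun T => S ⊆ T ∧ S' ⊆ T)
        = ((univ : Finset (Fin n)).powersetCard (k+p)).filter (fun T => S ∪ S' ⊆ T) := by
      apply filter_congr; intro T _; simp [union_subset_iff]
    rw [hfe, card_superset]
    have hkey := key_nat (n - 2*k) k p (k - (S ∩ S').card) (by omega) (by omega)
    rw [show k - (k - (S ∩ S').card) = (S ∩ S').card by omega] at hkey
    rw [← hkey]
    by_cases hle : (S ∪ S').card ≤ k + p
    · rw [if_pos hle, if_pos (by omega)]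
      congr 1 <;> omega
    · rw [if_neg hle, if_neg (by omega)]
  have hQcount : ∀ (j : ℕ) (S S' : Finset (Fin n)), S.card = k → S'.card = k →
      (((univ : Finset (Fin n)).powersetCard (k - j)).filter
        (fun R => R ⊆ S ∧ R ⊆ S')).card = ((S ∩ S').card).choose (k - j) := by
    intro j S S' hS hS'
    have he : ((univ : Finset (Fin n)).powersetCard (k - j)).filter (fun R => R ⊆ S ∧ R ⊆ S')
        = (S ∩ S').powersetCard (k - j) := by
      ext R
      simp only [mem_filter, mem_powersetCard_univ, mem_powersetCard, subset_inter_iff,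
        subset_univ]
      tauto
    rw [he, card_powersetCard]
  have rhs1 : ∀ j : ℕ, (∑ R ∈ (univ : Finset (Fin n)).powersetCard (k - j),
      (∑ S ∈ (univ.powersetCard k).filter (fun S => R ⊆ S), g S)^2)
      = ∑ S ∈ univ.powersetCard k, ∑ S' ∈ univ.powersetCard k,
          g S * g S' *
            ((((univ : Finset (Fin n)).powersetCard (k-j)).filter
                (fun R => R ⊆ S ∧ R ⊆ S')).card : ℝ) :=
    fun j => expand_sq ((univ : Finset (Fin n)).powersetCard (k-j)) (univ.powersetCard k)
      (fun S R => R ⊆ S) g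
  have main : (0:ℝ)
      = ∑ j ∈ range (min p k + 1), ((n - 2*k).choose (p - j) : ℝ) *
          ∑ R ∈ (univ : Finset (Fin n)).powersetCard (k - j),
            (∑ S ∈ (univ.powersetCard k).filter (fun S => R ⊆ S), g S)^2 := by
    have lhs1 : (0:ℝ) = ∑ T ∈ (univ : Finset (Fin n)).powersetCard (k+p),
        (∑ S ∈ (univ.powersetCard k).filter (fun S => S ⊆ T), g S)^2 := by
      symm; apply Finset.sum_eq_zero; intro T hT; rw [hT0 T hT]; ring
    rw [lhs1]
    rw [expand_sq ((univ : Finset (Fin n)).powersetCard (k+p)) (univ.powersetCard k)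
      (fun S T => S ⊆ T) g]
    simp only [rhs1]
    have swap : ∑ j ∈ range (min p k + 1), ((n - 2*k).choose (p - j) : ℝ) *
        ∑ S ∈ univ.powersetCard k, ∑ S' ∈ univ.powersetCard k,
          g S * g S' *
            ((((univ : Finset (Fin n)).powersetCard (k-j)).filter
                (fun R => R ⊆ S ∧ R ⊆ S')).card : ℝ)
        = ∑ S ∈ univ.powersetCard k, ∑ S' ∈ univ.powersetCard k,
            ∑ j ∈ range (min p k + 1), ((n - 2*k).choose (p - j) : ℝ) *
              (g S * g S' *
                ((((univ : Finset (Fin n)).powersetCard (k-j)).filter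
                    (fun R => R ⊆ S ∧ R ⊆ S')).card : ℝ)) := by
      simp only [Finset.mul_sum]
      rw [Finset.sum_comm]
      apply Finset.sum_congr rfl
      intro S _
      rw [Finset.sum_comm]
    rw [swap]
    apply Finset.sum_congr rfl
    intro S hS
    apply Finset.sum_congr rfl
    intro S' hS'
    rw [mem_powersetCard_univ] at hS hS'
    rw [hcount S S' hS hS']
    push_cast
    rw [Finset.mul_sum]
    apply Finset.sum_congr rfl
    intro j hj
    rw [hQcount j S S' hS hS']
    ring
  have hnn : ∀ j ∈ range (min p k + 1), (0:ℝ) ≤ ((n - 2*k).choose (p - j) : ℝ) *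
      ∑ R ∈ (univ : Finset (Fin n)).powersetCard (k - j),
        (∑ S ∈ (univ.powersetCard k).filter (fun S => R ⊆ S), g S)^2 :=
    fun j _ => mul_nonneg (Nat.cast_nonneg _) (Finset.sum_nonneg fun R _ => sq_nonneg _)
  have h0 := (Finset.sum_eq_zero_iff_of_nonneg hnn).mp main.symm 0
    (mem_range.mpr (Nat.succ_pos _))
  have hc0 : ((n - 2*k).choose (p - 0) : ℝ) ≠ 0 := by
    simp only [Nat.sub_zero, Nat.cast_ne_zero]
    exact (Nat.choose_pos (by omega : p ≤ n - 2*k)).ne'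
  have hQ0 : ∑ R ∈ (univ : Finset (Fin n)).powersetCard (k - 0),
      (∑ S ∈ (univ.powersetCard k).filter (fun S => R ⊆ S), g S)^2 = 0 := by
    rcases mul_eq_zero.mp h0 with h1 | h1
    · exact absurd h1 hc0
    · exact h1
  funext S
  rcases S with ⟨S, hS⟩
  have hmem : S ∈ (univ : Finset (Fin n)).powersetCard (k - 0) := by
    rw [mem_powersetCard_univ]; omega
  have hsq := (Finset.sum_eq_zero_iff_of_nonneg (fun R _ => sq_nonneg _)).mp hQ0 S hmem
  have hsum0 : (∑ S' ∈ (univ.powersetCard k).filter (fun S' => S ⊆ S'), g S') = 0 :=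
    pow_eq_zero_iff (two_ne_zero) |>.mp hsq
  have hsingle : (univ.powersetCard k).filter (fun S' => S ⊆ S') = {S} := by
    ext S'
    simp only [mem_filter, mem_powersetCard_univ, mem_singleton]
    constructor
    · rintro ⟨h1, h2⟩
      exact (Finset.eq_of_subset_of_card_le h2 (by omega)).symm
    · rintro rfl
      exact ⟨hS, Finset.Subset.refl _⟩
  rw [hsingle, Finset.sum_singleton] at hsum0
  have hga : g S = a ⟨S, hS⟩ := by simp [hgdef, hS]
  show a ⟨S, hS⟩ = 0
  rw [← hga]
  exact hsum0


lemma compl_card {n j m : ℕ} (S : {S : Finset (Fin n) // S.card = j}) (h : n - j = m) :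
    (S.1ᶜ).card = m := by
  rw [card_compl, S.2, Fintype.card_fin, h]

lemma up_inj_flex (n k m p : ℕ) (hm : m = k + p) (h : 2*k+p ≤ n) :
    Function.Injective (fun (a : FSub n k) (T : {T : Finset (Fin n) // T.card = m}) =>
      ∑ S : {S : Finset (Fin n) // S.card = k}, if S.1 ⊆ T.1 then a S else 0) := by
  subst hm
  intro a b hab
  have hz := up_ker n k p h (fun S => a S - b S) (fun T => by
    have h1 := congrFun hab T
    simp only at h1
    have h2 : (∑ S : {S : Finset (Fin n) // S.card = k}, if S.1 ⊆ T.1 then a S else 0)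
        - (∑ S : {S : Finset (Fin n) // S.card = k}, if S.1 ⊆ T.1 then b S else 0) = 0 := by
      rw [h1]; ring
    have h3 : (∑ S : {S : Finset (Fin n) // S.card = k},
        if S.1 ⊆ T.1 then a S - b S else 0)
        = ∑ S : {S : Finset (Fin n) // S.card = k},
            ((if S.1 ⊆ T.1 then a S else 0) - (if S.1 ⊆ T.1 then b S else 0)) :=
      Finset.sum_congr rfl fun S _ => by split_ifs <;> simp
    rw [h3, Finset.sum_sub_distrib, h1, sub_self])
  funext S
  have := congrFun hz S
  simp only [Pi.zero_apply] at this ⊢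
  linarith [this]

lemma down_inj (n k p : ℕ) (hpk : p ≤ k) (hn : n + p ≤ 2*k) :
    Function.Injective (downIter n k p) := by
  by_cases hkn : k ≤ n
  · intro a b hab
    have key : ∀ (c : FSub n k) (T : {T : Finset (Fin n) // T.card = (n-k) + p}),
        (∑ S : {S : Finset (Fin n) // S.card = n - k},
          if S.1 ⊆ T.1 then
            c ⟨S.1ᶜ, compl_card S (by omega)⟩ else 0)
        = downIter n k p c ⟨T.1ᶜ, compl_card T (by omega)⟩ := by
      intro c T
      rw [downIter]
      apply Fintype.sum_equiv
        (⟨fun S => ⟨S.1ᶜ, compl_card S (by omega)⟩,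
          fun S => ⟨S.1ᶜ, compl_card S (by omega)⟩,
          fun S => by apply Subtype.ext; simp,
          fun S => by apply Subtype.ext; simp⟩ :
          {S : Finset (Fin n) // S.card = n - k} ≃ {S : Finset (Fin n) // S.card = k})
      intro S
      simp only [Equiv.coe_fn_mk]
      congr 1
      · rw [eq_iff_iff]
        constructor
        · intro hs
          exact Finset.compl_subset_compl.mpr hs
        · intro hs
          have := Finset.compl_subset_compl.mpr hs
          simpa using this
    have hup := up_inj_flex n (n-k) ((n-k)+p) p rfl (by omega)
    have hfab : (fun (S : {S : Finset (Fin n) // S.card = n - k}) =>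
        a ⟨S.1ᶜ, compl_card S (by omega)⟩)
        = (fun S => b ⟨S.1ᶜ, compl_card S (by omega)⟩) := by
      apply hup
      funext T
      simp only
      rw [key a T, key b T, hab]
    funext S
    have := congrFun hfab ⟨S.1ᶜ, compl_card S (by omega)⟩
    simp only at this
    have ha' : a S = a ⟨S.1ᶜᶜ, by simp [S.2]⟩ := by congr 1; apply Subtype.ext; simp
    have hb' : b S = b ⟨S.1ᶜᶜ, by simp [S.2]⟩ := by congr 1; apply Subtype.ext; simp
    rw [ha', hb']
    convert this using 2
  · have hE : IsEmpty {S : Finset (Fin n) // S.card = k} := by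
      constructor
      intro S
      have h1 : S.1.card ≤ n := by
        have := Finset.card_le_univ S.1
        simpa [Fintype.card_fin] using this
      omega
    intro a b _
    funext S
    exact (hE.false S).elim


lemma down_inj_flex (n k p m : ℕ) (hm : m = k) (hpk : p ≤ k) (hn : n + p ≤ 2*k) :
    Function.Injective (fun (b : FSub n m) (S : {S : Finset (Fin n) // S.card = k - p}) =>
      ∑ T : {T : Finset (Fin n) // T.card = m}, if S.1 ⊆ T.1 then b T else 0) := by
  subst hm
  exact down_inj n m p hpk hn

/-- pairing between up-type sums and down-type sums -/
lemma pairing (n j m : ℕ) (a : FSub n j) (b : FSub n m) :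
    (∑ T : {T : Finset (Fin n) // T.card = m},
      (∑ S : {S : Finset (Fin n) // S.card = j}, if S.1 ⊆ T.1 then a S else 0) * b T)
    = ∑ S : {S : Finset (Fin n) // S.card = j},
        a S * (∑ T : {T : Finset (Fin n) // T.card = m}, if S.1 ⊆ T.1 then b T else 0) := by
  have lhs : ∀ T : {T : Finset (Fin n) // T.card = m},
      (∑ S : {S : Finset (Fin n) // S.card = j}, if S.1 ⊆ T.1 then a S else 0) * b T
        = ∑ S : {S : Finset (Fin n) // S.card = j},
            (if S.1 ⊆ T.1 then a S * b T else 0) := by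
    intro T
    rw [Finset.sum_mul]
    apply Finset.sum_congr rfl
    intro S _
    split_ifs <;> simp
  have rhs : ∀ S : {S : Finset (Fin n) // S.card = j},
      a S * (∑ T : {T : Finset (Fin n) // T.card = m}, if S.1 ⊆ T.1 then b T else 0)
        = ∑ T : {T : Finset (Fin n) // T.card = m},
            (if S.1 ⊆ T.1 then a S * b T else 0) := by
    intro S
    rw [Finset.mul_sum]
    apply Finset.sum_congr rfl
    intro T _
    split_ifs <;> simp
  simp only [lhs, rhs]
  exact Finset.sum_comm
lemma down_linear (n k p : ℕ) : IsLinearMap ℝ (downIter n k p) := by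
  constructor
  · intro x y
    funext S
    simp only [downIter, Pi.add_apply]
    rw [← Finset.sum_add_distrib]
    apply Finset.sum_congr rfl
    intro T _
    split_ifs <;> simp
  · intro c x
    funext S
    simp only [downIter, Pi.smul_apply, smul_eq_mul]
    rw [Finset.mul_sum]
    apply Finset.sum_congr rfl
    intro T _
    split_ifs <;> simp

lemma up_linear (n k p : ℕ) : IsLinearMap ℝ (upIter n k p) := by
  constructor
  · intro x y
    funext T
    simp only [upIter, Pi.add_apply]
    rw [← Finset.sum_add_distrib]
    apply Finset.sum_congr rfl
    intro S _
    split_ifs <;> simp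
  · intro c x
    funext T
    simp only [upIter, Pi.smul_apply, smul_eq_mul]
    rw [Finset.mul_sum]
    apply Finset.sum_congr rfl
    intro S _
    split_ifs <;> simp


end Aux

/-- (1) If `n ≥ 2k+p`, the iterated up operator `s_[p] : F(n,k) → F(n,k+p)` is injective
and the iterated down operator `s†_[p] : F(n,k+p) → F(n,k)` is surjective.
(2) If `p ≤ k` and `n ≤ 2k−p`, the iterated up operator `s_[p] : F(n,k−p) → F(n,k)` is
surjective and the iterated down operator `s†_[p] : F(n,k) → F(n,k−p)` is injective. -/

theorem upIter_downIter_inj_surj (n k p : ℕ) (hp : 1 ≤ p) :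
    (2 * k + p ≤ n →
      Function.Injective (upIter n k p) ∧ Function.Surjective (downIter n (k + p) p)) ∧
    (p ≤ k → n ≤ 2 * k - p →
      Function.Surjective (upIter n (k - p) p) ∧ Function.Injective (downIter n k p)) := by
  constructor
  · intro h1
    constructor
    · exact up_inj_flex n k (k + p) p rfl (by omega)
    · apply adj_surj
        (f := fun (a : FSub n (k + p - p)) (T : {T : Finset (Fin n) // T.card = k + p}) =>
          ∑ S : {S : Finset (Fin n) // S.card = k + p - p}, if S.1 ⊆ T.1 then a S else 0)
        (g := downIter n (k + p) p)
      · exact down_linear n (k + p) p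
      · intro a b
        exact pairing n (k + p - p) (k + p) a b
      · exact up_inj_flex n (k + p - p) (k + p) p (by omega) (by omega)
      · funext T; simp
  · intro hpk hn
    have hn' : n + p ≤ 2 * k := by omega
    constructor
    · apply adj_surj
        (f := fun (a : FSub n (k - p + p)) (S : {S : Finset (Fin n) // S.card = k - p}) =>
          ∑ T : {T : Finset (Fin n) // T.card = k - p + p}, if S.1 ⊆ T.1 then a T else 0)
        (g := upIter n (k - p) p)
      · exact up_linear n (k - p) p
      · intro a b
        calc (∑ S : {S : Finset (Fin n) // S.card = k - p},
              (∑ T : {T : Finset (Fin n) // T.card = k - p + p},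
                if S.1 ⊆ T.1 then a T else 0) * b S)
            = ∑ S : {S : Finset (Fin n) // S.card = k - p},
                b S * (∑ T : {T : Finset (Fin n) // T.card = k - p + p},
                  if S.1 ⊆ T.1 then a T else 0) := by
              apply Finset.sum_congr rfl; intros; ring
          _ = ∑ T : {T : Finset (Fin n) // T.card = k - p + p},
                (∑ S : {S : Finset (Fin n) // S.card = k - p},
                  if S.1 ⊆ T.1 then b S else 0) * a T := (pairing n (k - p) (k - p + p) b a).symm
          _ = ∑ T : {T : Finset (Fin n) // T.card = k - p + p},
                a T * upIter n (k - p) p b T := by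
              apply Finset.sum_congr rfl; intros; rw [upIter]; ring
      · exact down_inj_flex n k p (k - p + p) (by omega) hpk hn'
      · funext S; simp
    · exact down_inj n k p hpk hn'
end

section
/- Let n, k, ℓ, p be natural numbers with p ≥ 1 and p ≤ ℓ, and let F and G be subsets of Fin n. The double-index up operator S_[p] maps the subspace Y_{F,G}(n,k,ℓ) of FX(n,k,ℓ) into Y_{F,G}(n,k+p,ℓ−p), the double-index down operator S†_[p] maps Y_{F,G}(n,k+p,ℓ−p) into Y_{F,G}(n,k,ℓ), and moreover: (1) if k+p ≤ ℓ, then S_[p] restricted to Y_{F,G}(n,k,ℓ) is injective, and S†_[p] maps Y_{F,G}(n,k+p,ℓ−p) onto Y_{F,G}(n,k,ℓ); (2) if k+p ≥ ℓ, then S_[p] maps Y_{F,G}(n,k,ℓ) onto Y_{F,G}(n,k+p,ℓ−p), and S†_[p] restricted to Y_{F,G}(n,k+p,ℓ−p) is injective. -/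
noncomputable def triSolve (p : ℕ) (B : ℕ → ℕ → ℝ) (b : ℕ → ℝ) : ℕ → ℝ
  | m => (b m - ∑ s ∈ (Finset.Icc 1 (min p m)).attach,
      B m s.1 * triSolve p B b (m - s.1)) / B m 0
  decreasing_by
    have hs := Finset.mem_Icc.mp s.2
    omega

lemma triSolve_spec (p : ℕ) (B : ℕ → ℕ → ℝ) (b : ℕ → ℝ) (m : ℕ)
    (hpiv : B m 0 ≠ 0) (hz : ∀ s, s ≤ p → m < s → B m s = 0) :
    ∑ s ∈ Finset.range (p+1), B m s * triSolve p B b (m - s) = b m := by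
  have hsplit : Finset.range (p+1) = insert 0 (Finset.Icc 1 p) := by
    ext s; simp [Finset.mem_Icc, Finset.mem_range]; omega
  have h1 : ∑ s ∈ Finset.Icc 1 (min p m), B m s * triSolve p B b (m - s)
      = ∑ s ∈ Finset.Icc 1 p, B m s * triSolve p B b (m - s) := by
    apply Finset.sum_subset
    · intro s hs; simp only [Finset.mem_Icc] at *; omega
    · intro s hs hns
      simp only [Finset.mem_Icc] at hs hns
      rw [hz s hs.2 (by omega), zero_mul]
  rw [hsplit, Finset.sum_insert (by simp), Nat.sub_zero, ← h1]
  rw [triSolve, Finset.sum_attach _ (fun s => B m s * triSolve p B b (m - s))]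
  rw [mul_comm, div_mul_cancel₀ _ hpiv]
  ring

open Finset

variable {n : ℕ}

lemma card_fiber (p s : ℕ) (hsp : s ≤ p) (A W : Finset (Fin n)) (hAW : A ⊆ W) :
    ((Finset.powersetCard p W).filter (fun P => (P ∩ A).card = s)).card
      = A.card.choose s * (W.card - A.card).choose (p - s) := by
  rw [show A.card.choose s = (Finset.powersetCard s A).card from
        (Finset.card_powersetCard _ _).symm,
      show (W.card - A.card).choose (p - s) = (Finset.powersetCard (p-s) (W \ A)).card from by
        rw [Finset.card_powersetCard, Finset.card_sdiff_of_subset hAW],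
      ← Finset.card_product]
  apply Finset.card_nbij' (fun P => (P ∩ A, P \ A)) (fun q => q.1 ∪ q.2)
  · intro P hP
    simp only [Finset.mem_coe, Finset.mem_filter, Finset.mem_powersetCard] at hP
    obtain ⟨⟨hPW, hPc⟩, hPs⟩ := hP
    simp only [Finset.mem_coe, Finset.mem_product, Finset.mem_powersetCard]
    refine ⟨⟨Finset.inter_subset_right, hPs⟩, ?_, ?_⟩
    · exact Finset.sdiff_subset_sdiff hPW (le_refl _)
    · have := Finset.card_inter_add_card_sdiff P A
      omega
  · intro q hq
    simp only [Finset.mem_coe, Finset.mem_product, Finset.mem_powersetCard] at hq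
    obtain ⟨⟨h1A, h1c⟩, h2WA, h2c⟩ := hq
    have hdis : Disjoint q.1 q.2 := by
      rw [Finset.disjoint_left]
      intro x hx hx2
      exact (Finset.mem_sdiff.mp (h2WA hx2)).2 (h1A hx)
    have hq1 : q.1 ∩ A = q.1 := Finset.inter_eq_left.mpr h1A
    have hq2A : q.2 ∩ A = ∅ := by
      rw [Finset.eq_empty_iff_forall_notMem]
      intro x hx
      rcases Finset.mem_inter.mp hx with ⟨hx2, hxA⟩
      exact (Finset.mem_sdiff.mp (h2WA hx2)).2 hxA
    simp only [Finset.mem_coe, Finset.mem_filter, Finset.mem_powersetCard]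
    refine ⟨⟨Finset.union_subset (h1A.trans hAW) (h2WA.trans Finset.sdiff_subset), ?_⟩, ?_⟩
    · rw [Finset.card_union_of_disjoint hdis]
      have := Finset.card_sdiff_of_subset hAW
      have := Finset.card_le_card hAW
      omega
    · rw [Finset.union_inter_distrib_right, hq1, hq2A, Finset.union_empty, h1c]
  · intro P hP
    dsimp only
    rw [Finset.union_comm]
    exact Finset.sdiff_union_inter P A
  · intro q hq
    simp only [Finset.mem_coe, Finset.mem_product, Finset.mem_powersetCard] at hq
    obtain ⟨⟨h1A, h1c⟩, h2WA, h2c⟩ := hq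
    have hq1 : q.1 ∩ A = q.1 := Finset.inter_eq_left.mpr h1A
    have hq2A : q.2 ∩ A = ∅ := by
      rw [Finset.eq_empty_iff_forall_notMem]
      intro x hx
      rcases Finset.mem_inter.mp hx with ⟨hx2, hxA⟩
      exact (Finset.mem_sdiff.mp (h2WA hx2)).2 hxA
    have hdisA : q.1 \ A = ∅ := by
      rw [Finset.sdiff_eq_empty_iff_subset]; exact h1A
    have hq2s : q.2 \ A = q.2 := by
      rw [Finset.sdiff_eq_self_iff_disjoint, Finset.disjoint_left]
      intro x hx hxA
      exact (Finset.mem_sdiff.mp (h2WA hx)).2 hxA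
    refine Prod.ext ?_ ?_ <;> dsimp only
    · rw [Finset.union_inter_distrib_right, hq1, hq2A, Finset.union_empty]
    · rw [Finset.union_sdiff_distrib, hdisA, hq2s, Finset.empty_union]

lemma count_sum (p : ℕ) (A W : Finset (Fin n)) (hAW : A ⊆ W) (φ : ℕ → ℝ) :
    ∑ P ∈ Finset.powersetCard p W, φ ((P ∩ A).card)
      = ∑ s ∈ Finset.range (p+1),
          (A.card.choose s * (W.card - A.card).choose (p - s) : ℝ) * φ s := by
  rw [← Finset.sum_fiberwise_of_maps_to (g := fun P => (P ∩ A).card)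
      (t := Finset.range (p+1)) (fun P hP => by
        simp only [Finset.mem_range]
        have h1 : (P ∩ A).card ≤ P.card := Finset.card_le_card Finset.inter_subset_left
        have h2 := (Finset.mem_powersetCard.mp hP).2
        omega)]
  apply Finset.sum_congr rfl
  intro s hs
  have : ∀ P ∈ (Finset.powersetCard p W).filter (fun P => (P ∩ A).card = s),
      φ ((P ∩ A).card) = φ s := by
    intro P hP
    rw [(Finset.mem_filter.mp hP).2]
  rw [Finset.sum_congr rfl this, Finset.sum_const, card_fiber p s
      (Finset.mem_range.mp hs |> Nat.lt_succ_iff.mp) A W hAW]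
  push_cast
  ring

def cls (F G : Finset (Fin n)) (q : ℕ) : Finset (Finset (Fin n)) :=
  (Finset.powersetCard q F).filter (fun K => G ⊆ K)

lemma mem_cls {F G : Finset (Fin n)} {q : ℕ} {K : Finset (Fin n)} :
    K ∈ cls F G q ↔ K ⊆ F ∧ G ⊆ K ∧ K.card = q := by
  simp only [cls, Finset.mem_filter, Finset.mem_powersetCard]
  tauto

lemma reindex_sum (p k : ℕ) (F G : Finset (Fin n)) (hGF : G ⊆ F)
    (h : Finset (Fin n) → Finset (Fin n) → ℝ) :
    ∑ I' ∈ cls F G (k+p), ∑ P ∈ Finset.powersetCard p (I' \ G), h (I' \ P) I'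
      = ∑ K ∈ cls F G k, ∑ Q ∈ Finset.powersetCard p (F \ K), h K (K ∪ Q) := by
  rw [Finset.sum_sigma', Finset.sum_sigma']
  apply Finset.sum_nbij' (i := fun x => ⟨x.1 \ x.2, x.2⟩) (j := fun x => ⟨x.1 ∪ x.2, x.2⟩)
  · rintro ⟨I', P⟩ hx
    simp only [Finset.mem_sigma, Finset.mem_powersetCard] at hx ⊢
    obtain ⟨hI', ⟨hPsub, hPcard⟩⟩ := hx
    rw [mem_cls] at hI'
    obtain ⟨hIF, hGI, hIc⟩ := hI'
    have hPI : P ⊆ I' := hPsub.trans Finset.sdiff_subset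
    have hPG : ∀ x ∈ P, x ∉ G := fun x hx => (Finset.mem_sdiff.mp (hPsub hx)).2
    refine ⟨mem_cls.mpr ⟨Finset.sdiff_subset.trans hIF, ?_, ?_⟩, ?_, ?_⟩
    · intro x hx
      exact Finset.mem_sdiff.mpr ⟨hGI hx, fun hxP => hPG x hxP hx⟩
    · rw [Finset.card_sdiff_of_subset hPI, hIc, hPcard]; omega
    · intro x hx
      exact Finset.mem_sdiff.mpr ⟨hIF (hPI hx), fun hmem => (Finset.mem_sdiff.mp hmem).2 hx⟩
    · exact hPcard
  · rintro ⟨K, Q⟩ hx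
    simp only [Finset.mem_sigma, Finset.mem_powersetCard] at hx ⊢
    obtain ⟨hK, ⟨hQsub, hQcard⟩⟩ := hx
    rw [mem_cls] at hK
    obtain ⟨hKF, hGK, hKc⟩ := hK
    have hQF : Q ⊆ F := hQsub.trans Finset.sdiff_subset
    have hQK : ∀ x ∈ Q, x ∉ K := fun x hx => (Finset.mem_sdiff.mp (hQsub hx)).2
    have hdis : Disjoint K Q := Finset.disjoint_right.mpr hQK
    refine ⟨mem_cls.mpr ⟨Finset.union_subset hKF hQF, hGK.trans Finset.subset_union_left, ?_⟩,
        ?_, ?_⟩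
    · rw [Finset.card_union_of_disjoint hdis, hKc, hQcard]
    · intro x hx
      refine Finset.mem_sdiff.mpr ⟨Finset.subset_union_right hx, fun hxG => hQK x hx (hGK hxG)⟩
    · exact hQcard
  · rintro ⟨I', P⟩ hx
    simp only [Finset.mem_sigma, Finset.mem_powersetCard] at hx
    obtain ⟨hI', ⟨hPsub, hPcard⟩⟩ := hx
    have hPI : P ⊆ I' := hPsub.trans Finset.sdiff_subset
    exact Sigma.ext (Finset.sdiff_union_of_subset hPI) (heq_of_eq rfl)
  · rintro ⟨K, Q⟩ hx
    simp only [Finset.mem_sigma, Finset.mem_powersetCard] at hx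
    obtain ⟨hK, ⟨hQsub, hQcard⟩⟩ := hx
    have hQK : ∀ x ∈ Q, x ∉ K := fun x hx => (Finset.mem_sdiff.mp (hQsub hx)).2
    exact Sigma.ext (Finset.union_sdiff_cancel_right (Finset.disjoint_right.mpr hQK))
      (heq_of_eq rfl)
  · rintro ⟨I', P⟩ hx
    simp only [Finset.mem_sigma, Finset.mem_powersetCard] at hx
    obtain ⟨hI', hPsub, hPcard⟩ := hx
    have hPI : P ⊆ I' := hPsub.trans Finset.sdiff_subset
    dsimp only
    rw [Finset.sdiff_union_of_subset hPI]

lemma masterInj (p k : ℕ) (F G : Finset (Fin n)) (hGF : G ⊆ F)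
    (hcond : 2*k + p ≤ F.card + G.card)
    (f : Finset (Fin n) → ℝ)
    (hup : ∀ I' ∈ cls F G (k+p), ∑ P ∈ Finset.powersetCard p (I' \ G), f (I' \ P) = 0)
    (I : Finset (Fin n)) (hI : I ∈ cls F G k) : f I = 0 := by
  obtain ⟨hIF, hGI, hIc⟩ := mem_cls.mp hI
  set B : ℕ → ℕ → ℝ := fun m s =>
    (m.choose s : ℝ) * (((F.card + k) - (2*k + m)).choose (p - s) : ℝ) with hB
  set x : ℕ → ℝ := triSolve p B (fun m => if m = 0 then 1 else 0) with hx
  have hgk : G.card ≤ k := hIc ▸ Finset.card_le_card hGI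
  have hkF : k ≤ F.card := hIc ▸ Finset.card_le_card hIF
  have key : ∀ K ∈ cls F G k,
      ∑ Q ∈ Finset.powersetCard p (F \ K), x (k - (I ∩ (K ∪ Q)).card)
        = if K = I then 1 else 0 := by
    intro K hK
    obtain ⟨hKF, hGK, hKc⟩ := mem_cls.mp hK
    set i := (I ∩ K).card with hi
    have hik : i ≤ k := by
      rw [hi, ← hIc]; exact Finset.card_le_card Finset.inter_subset_left
    have hgi : G.card ≤ i := Finset.card_le_card (Finset.subset_inter hGI hGK)
    set m := k - i with hm
    have hA : (I \ K).card = m := by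
      have := Finset.card_inter_add_card_sdiff I K
      omega
    have hAW : I \ K ⊆ F \ K := by
      intro y hy
      rcases Finset.mem_sdiff.mp hy with ⟨h1, h2⟩
      exact Finset.mem_sdiff.mpr ⟨hIF h1, h2⟩
    have hW : (F \ K).card + k = F.card := by
      have := Finset.card_sdiff_add_card_eq_card hKF
      omega
    have hterm : ∀ Q ∈ Finset.powersetCard p (F \ K),
        x (k - (I ∩ (K ∪ Q)).card) = x (m - (Q ∩ (I \ K)).card) := by
      intro Q hQ
      obtain ⟨hQsub, hQc⟩ := Finset.mem_powersetCard.mp hQ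
      have hQK : ∀ y ∈ Q, y ∉ K := fun y hy => (Finset.mem_sdiff.mp (hQsub hy)).2
      have hsets : I ∩ (K ∪ Q) = (I ∩ K) ∪ (Q ∩ (I \ K)) := by
        ext y
        simp only [Finset.mem_inter, Finset.mem_union, Finset.mem_sdiff]
        constructor
        · rintro ⟨hyI, hyK | hyQ⟩
          · exact Or.inl ⟨hyI, hyK⟩
          · by_cases hyK : y ∈ K
            · exact Or.inl ⟨hyI, hyK⟩
            · exact Or.inr ⟨hyQ, hyI, hyK⟩
        · rintro (⟨hyI, hyK⟩ | ⟨hyQ, hyI, _⟩)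
          · exact ⟨hyI, Or.inl hyK⟩
          · exact ⟨hyI, Or.inr hyQ⟩
      have hdisj : Disjoint (I ∩ K) (Q ∩ (I \ K)) := by
        rw [Finset.disjoint_left]
        rintro y hy1 hy2
        exact (Finset.mem_sdiff.mp (Finset.mem_inter.mp hy2).2).2 (Finset.mem_inter.mp hy1).2
      rw [hsets, Finset.card_union_of_disjoint hdisj, ← hi]
      congr 1
      omega
    rw [Finset.sum_congr rfl hterm,
      count_sum p (I \ K) (F \ K) hAW (fun s => x (m - s))]
    have hcoef : ∀ s ∈ Finset.range (p+1),
        ((I \ K).card.choose s * ((F \ K).card - (I \ K).card).choose (p - s) : ℝ)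
            * x (m - s)
          = B m s * x (m - s) := by
      intro s hs
      simp only [hB]
      rw [hA, show (F \ K).card - m = (F.card + k) - (2*k + m) from by omega]
    rw [Finset.sum_congr rfl hcoef, triSolve_spec]
    · have hmk : m = 0 ↔ K = I := by
        constructor
        · intro hm0
          have hik' : i = k := by omega
          have : I ∩ K = I := Finset.eq_of_subset_of_card_le Finset.inter_subset_left
            (by rw [hi] at hik'; omega)
          have hIK : I ⊆ K := by rw [← this]; exact Finset.inter_subset_right
          exact (Finset.eq_of_subset_of_card_le hIK (by omega)).symm
        · intro hKI
          have : i = k := by rw [hi, hKI, Finset.inter_self, hIc]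
          omega
      by_cases h0 : m = 0
      · rw [if_pos h0, if_pos (hmk.mp h0)]
      · rw [if_neg h0, if_neg (fun hc => h0 (hmk.mpr hc))]
    · simp only [hB]
      have hch : 0 < ((F.card + k) - (2*k + m)).choose (p - 0) := by
        apply Nat.choose_pos
        omega
      simp only [Nat.choose_zero_right, Nat.cast_one, one_mul, ne_eq, Nat.cast_eq_zero]
      omega
    · intro s hsp hms
      simp only [hB]
      rw [Nat.choose_eq_zero_of_lt hms, Nat.cast_zero, zero_mul]
  -- main chain
  have step1 : f I = ∑ K ∈ cls F G k, (if K = I then 1 else 0) * f K := by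
    rw [Finset.sum_congr rfl (fun K _ => by rw [ite_mul, one_mul, zero_mul]),
      Finset.sum_ite_eq' (cls F G k) I f, if_pos hI]
  rw [step1, Finset.sum_congr rfl (fun K hK => by rw [← key K hK]),
    Finset.sum_congr rfl (fun K _ => Finset.sum_mul _ _ _),
    ← reindex_sum p k F G hGF (fun K C => x (k - (I ∩ C).card) * f K)]
  apply Finset.sum_eq_zero
  intro I' hI'
  rw [← Finset.mul_sum, hup I' hI', mul_zero]

lemma masterSurj (p k : ℕ) (F G : Finset (Fin n)) (hGF : G ⊆ F)
    (hcond : F.card + G.card ≤ 2*k + p)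
    (g : Finset (Fin n) → ℝ) :
    ∃ f : Finset (Fin n) → ℝ, (∀ K, K ∉ cls F G k → f K = 0) ∧
      ∀ I' ∈ cls F G (k+p), ∑ P ∈ Finset.powersetCard p (I' \ G), f (I' \ P) = g I' := by
  classical
  set B : ℕ → ℕ → ℝ := fun m s =>
    (m.choose s : ℝ) * (((k+p) - (m + G.card)).choose (p - s) : ℝ) with hB
  set x : ℕ → ℝ := triSolve p B (fun m => if m = 0 then 1 else 0) with hx
  refine ⟨fun K => if K ∈ cls F G k then
      ∑ I'' ∈ cls F G (k+p), x (k - (K ∩ I'').card) * g I'' else 0,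
    fun K hK => if_neg hK, ?_⟩
  intro I' hI'
  obtain ⟨hIF, hGI, hIc⟩ := mem_cls.mp hI'
  have hterm : ∀ P ∈ Finset.powersetCard p (I' \ G),
      (if I' \ P ∈ cls F G k then
        ∑ I'' ∈ cls F G (k+p), x (k - ((I' \ P) ∩ I'').card) * g I'' else 0)
      = ∑ I'' ∈ cls F G (k+p), x (k - ((I' \ P) ∩ I'').card) * g I'' := by
    intro P hP
    obtain ⟨hPsub, hPc⟩ := Finset.mem_powersetCard.mp hP
    have hPI : P ⊆ I' := hPsub.trans Finset.sdiff_subset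
    refine if_pos (mem_cls.mpr ⟨Finset.sdiff_subset.trans hIF, ?_, ?_⟩)
    · intro y hy
      exact Finset.mem_sdiff.mpr ⟨hGI hy, fun hyP => (Finset.mem_sdiff.mp (hPsub hyP)).2 hy⟩
    · rw [Finset.card_sdiff_of_subset hPI, hIc, hPc]; omega
  rw [Finset.sum_congr rfl hterm, Finset.sum_comm]
  have key2 : ∀ I'' ∈ cls F G (k+p),
      ∑ P ∈ Finset.powersetCard p (I' \ G), x (k - ((I' \ P) ∩ I'').card)
        = if I'' = I' then 1 else 0 := by
    intro I'' hI''
    obtain ⟨hI2F, hGI2, hI2c⟩ := mem_cls.mp hI''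
    set j := (I' ∩ I'').card with hj
    have hgj : G.card ≤ j := Finset.card_le_card (Finset.subset_inter hGI hGI2)
    have hjkp : j ≤ k + p := by
      rw [hj, ← hIc]; exact Finset.card_le_card Finset.inter_subset_left
    have hjlow : 2*(k+p) ≤ F.card + j := by
      have h1 := Finset.card_union_add_card_inter I' I''
      have h2 : (I' ∪ I'').card ≤ F.card := Finset.card_le_card (Finset.union_subset hIF hI2F)
      omega
    have hjgp : G.card + p ≤ j := by omega
    have hAW : (I' ∩ I'') \ G ⊆ I' \ G :=
      Finset.sdiff_subset_sdiff Finset.inter_subset_left (le_refl _)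
    have hA : ((I' ∩ I'') \ G).card = j - G.card := by
      rw [Finset.card_sdiff_of_subset (Finset.subset_inter hGI hGI2)]
    have hW : (I' \ G).card = (k + p) - G.card := by
      rw [Finset.card_sdiff_of_subset hGI, hIc]
    have hterm2 : ∀ P ∈ Finset.powersetCard p (I' \ G),
        x (k - ((I' \ P) ∩ I'').card) = x (k - (j - (P ∩ ((I' ∩ I'') \ G)).card)) := by
      intro P hP
      obtain ⟨hPsub, hPc⟩ := Finset.mem_powersetCard.mp hP
      have hPG : ∀ y ∈ P, y ∉ G := fun y hy => (Finset.mem_sdiff.mp (hPsub hy)).2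
      have hPI : P ⊆ I' := hPsub.trans Finset.sdiff_subset
      have hsets : (I' \ P) ∩ I'' = (I' ∩ I'') \ (P ∩ ((I' ∩ I'') \ G)) := by
        ext y
        have hyG := hPG y
        simp only [Finset.mem_inter, Finset.mem_sdiff]
        tauto
      have hsub2 : P ∩ ((I' ∩ I'') \ G) ⊆ I' ∩ I'' :=
        Finset.inter_subset_right.trans Finset.sdiff_subset
      rw [hsets, Finset.card_sdiff_of_subset hsub2, ← hj]
    rw [Finset.sum_congr rfl hterm2,
      count_sum p ((I' ∩ I'') \ G) (I' \ G) hAW (fun s => x (k - (j - s)))]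
    rw [← Finset.sum_range_reflect]
    have hcoef : ∀ s ∈ Finset.range (p+1),
        ((((I' ∩ I'') \ G).card.choose (p + 1 - 1 - s) : ℝ) *
          ((((I' \ G).card - ((I' ∩ I'') \ G).card).choose (p - (p + 1 - 1 - s))) : ℝ))
            * x (k - (j - (p + 1 - 1 - s)))
          = B ((k+p) - j) s * x (((k+p) - j) - s) := by
      intro s hs
      rw [Finset.mem_range] at hs
      have hs' : s ≤ p := by omega
      simp only [hB]
      rw [hA, hW]
      rw [show (k + p - G.card) - (j - G.card) = (k+p) - j from by omega,
        show p + 1 - 1 - s = p - s from by omega,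
        show p - (p - s) = s from by omega,
        show k - (j - (p - s)) = ((k+p) - j) - s from by omega,
        show (j - G.card).choose (p-s) = ((k+p) - (((k+p) - j) + G.card)).choose (p-s) from by
          rw [show (k+p) - (((k+p) - j) + G.card) = j - G.card from by omega]]
      push_cast
      ring
    rw [Finset.sum_congr rfl hcoef, triSolve_spec]
    · have hmk : (k+p) - j = 0 ↔ I'' = I' := by
        constructor
        · intro hm0
          have hjk : j = k + p := by omega
          have h1 : I' ∩ I'' = I' := Finset.eq_of_subset_of_card_le Finset.inter_subset_left
            (by rw [hIc, ← hj, hjk])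
          have hII : I' ⊆ I'' := by rw [← h1]; exact Finset.inter_subset_right
          exact Finset.eq_of_subset_of_card_le hII (by omega) |>.symm
        · intro hc
          have : j = k + p := by rw [hj, hc, Finset.inter_self, hIc]
          omega
      by_cases h0 : (k+p) - j = 0
      · rw [if_pos h0, if_pos (hmk.mp h0)]
      · rw [if_neg h0, if_neg (fun hc => h0 (hmk.mpr hc))]
    · simp only [hB]
      have hch : 0 < ((k+p) - (((k+p) - j) + G.card)).choose (p - 0) := by
        apply Nat.choose_pos
        omega
      simp only [Nat.choose_zero_right, Nat.cast_one, one_mul, ne_eq, Nat.cast_eq_zero]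
      omega
    · intro s hsp hms
      simp only [hB]
      rw [Nat.choose_eq_zero_of_lt hms, Nat.cast_zero, zero_mul]
  rw [Finset.sum_congr rfl (fun I'' hI'' => by rw [← Finset.sum_mul, key2 I'' hI'']),
    Finset.sum_congr rfl (fun K _ => by rw [ite_mul, one_mul, zero_mul]),
    Finset.sum_ite_eq' _ I' g, if_pos hI']

/-! Pair helpers -/

lemma move_union {I J P : Finset (Fin n)} (hP : P ⊆ I \ J) :
    (I \ P) ∪ (J ∪ P) = I ∪ J := by
  ext y
  have hy : y ∈ P → y ∈ I ∧ y ∉ J := fun h => Finset.mem_sdiff.mp (hP h)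
  simp only [Finset.mem_union, Finset.mem_sdiff]
  tauto

lemma move_inter {I J P : Finset (Fin n)} (hP : P ⊆ I \ J) :
    (I \ P) ∩ (J ∪ P) = I ∩ J := by
  ext y
  have hy : y ∈ P → y ∈ I ∧ y ∉ J := fun h => Finset.mem_sdiff.mp (hP h)
  simp only [Finset.mem_union, Finset.mem_sdiff, Finset.mem_inter]
  tauto

lemma move_union' {I J P : Finset (Fin n)} (hP : P ⊆ J \ I) :
    (I ∪ P) ∪ (J \ P) = I ∪ J := by
  ext y
  have hy : y ∈ P → y ∈ J ∧ y ∉ I := fun h => Finset.mem_sdiff.mp (hP h)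
  simp only [Finset.mem_union, Finset.mem_sdiff]
  tauto

lemma move_inter' {I J P : Finset (Fin n)} (hP : P ⊆ J \ I) :
    (I ∪ P) ∩ (J \ P) = I ∩ J := by
  ext y
  have hy : y ∈ P → y ∈ J ∧ y ∉ I := fun h => Finset.mem_sdiff.mp (hP h)
  simp only [Finset.mem_union, Finset.mem_sdiff, Finset.mem_inter]
  tauto

lemma pair_partner {I J F G : Finset (Fin n)} (h1 : I ∪ J = F) (h2 : I ∩ J = G) :
    J = (F \ I) ∪ G := by
  subst h1; subst h2
  ext y
  simp only [Finset.mem_union, Finset.mem_sdiff, Finset.mem_inter]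
  tauto

lemma partner_pair {F G K : Finset (Fin n)} (hGF : G ⊆ F) (hKF : K ⊆ F) (hGK : G ⊆ K) :
    K ∪ ((F \ K) ∪ G) = F ∧ K ∩ ((F \ K) ∪ G) = G := by
  constructor <;> ext y <;>
    simp only [Finset.mem_union, Finset.mem_sdiff, Finset.mem_inter]
  · constructor
    · rintro (h | ⟨h, _⟩ | h)
      exacts [hKF h, h, hGF h]
    · intro hyF
      by_cases hyK : y ∈ K
      · exact Or.inl hyK
      · exact Or.inr (Or.inl ⟨hyF, hyK⟩)
  · constructor
    · rintro ⟨hyK, ⟨_, hnK⟩ | hyG⟩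
      · exact absurd hyK hnK
      · exact hyG
    · intro hyG
      exact ⟨hGK hyG, Or.inr hyG⟩

lemma partner_card {F G K : Finset (Fin n)} (hGK : G ⊆ K) (hKF : K ⊆ F) {q q' : ℕ}
    (hq : K.card = q) (hsum : F.card + G.card = q + q') : ((F \ K) ∪ G).card = q' := by
  have hdis : Disjoint (F \ K) G := by
    rw [Finset.disjoint_left]
    intro y hy hyG
    exact (Finset.mem_sdiff.mp hy).2 (hGK hyG)
  rw [Finset.card_union_of_disjoint hdis, Finset.card_sdiff_of_subset hKF]
  have := Finset.card_le_card hKF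
  omega
/-- The collection of `k`-element subsets of `Fin n`, as a subtype. -/
abbrev Idx (n k : ℕ) := {S : Finset (Fin n) // S.card = k}

/-- `FX n k l` is the real vector space of real-valued functions on pairs `(I,J)` of
subsets of `Fin n` with `|I| = k` and `|J| = l`. -/
abbrev FX (n k l : ℕ) : Type := Idx n k × Idx n l → ℝ

/-- The double-index up operator `S_[p] : FX(n,k,ℓ) → FX(n,k+p,ℓ−p)` (for `p ≤ ℓ`),
`(S_[p] a)(I',J') = Σ_{P ⊆ I' \ J', |P| = p} a(I' \ P, J' ∪ P)`. -/
noncomputable def upX (n k l p : ℕ) (hp : p ≤ l) (a : FX n k l) : FX n (k + p) (l - p) :=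
  fun IJ => ∑ P ∈ (Finset.powersetCard p (IJ.1.1 \ IJ.2.1)).attach,
    a (⟨IJ.1.1 \ P.1, by
          obtain ⟨hsub, hcard⟩ := Finset.mem_powersetCard.mp P.2
          have hPI : P.1 ⊆ IJ.1.1 := hsub.trans Finset.sdiff_subset
          have h1 : (IJ.1.1 \ P.1).card = IJ.1.1.card - P.1.card := by
            rw [Finset.card_sdiff, Finset.inter_eq_left.mpr hPI]
          have h2 := IJ.1.2
          omega⟩,
        ⟨IJ.2.1 ∪ P.1, by
          obtain ⟨hsub, hcard⟩ := Finset.mem_powersetCard.mp P.2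
          have hdis : Disjoint IJ.2.1 P.1 := by
            rw [Finset.disjoint_left]
            intro x hx hxP
            exact (Finset.mem_sdiff.mp (hsub hxP)).2 hx
          have h1 := Finset.card_union_of_disjoint hdis
          have h2 := IJ.2.2
          omega⟩)

/-- The double-index down operator `S†_[p] : FX(n,k+p,ℓ−p) → FX(n,k,ℓ)`,
`(S†_[p] b)(I,J) = Σ_{P ⊆ J \ I, |P| = p} b(I ∪ P, J \ P)`. -/
noncomputable def downX (n k l p : ℕ) (b : FX n (k + p) (l - p)) : FX n k l :=
  fun IJ => ∑ P ∈ (Finset.powersetCard p (IJ.2.1 \ IJ.1.1)).attach,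
    b (⟨IJ.1.1 ∪ P.1, by
          obtain ⟨hsub, hcard⟩ := Finset.mem_powersetCard.mp P.2
          have hdis : Disjoint IJ.1.1 P.1 := by
            rw [Finset.disjoint_left]
            intro x hx hxP
            exact (Finset.mem_sdiff.mp (hsub hxP)).2 hx
          have h1 := Finset.card_union_of_disjoint hdis
          have h2 := IJ.1.2
          omega⟩,
        ⟨IJ.2.1 \ P.1, by
          obtain ⟨hsub, hcard⟩ := Finset.mem_powersetCard.mp P.2
          have hPJ : P.1 ⊆ IJ.2.1 := hsub.trans Finset.sdiff_subset
          have h1 : (IJ.2.1 \ P.1).card = IJ.2.1.card - P.1.card := by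
            rw [Finset.card_sdiff, Finset.inter_eq_left.mpr hPJ]
          have h2 := IJ.2.2
          omega⟩)

/-- `Y_{F,G}(n,k,ℓ)`: the subspace of `FX(n,k,ℓ)` of functions vanishing on every pair
`(I,J)` except possibly those with `I ∪ J = F` and `I ∩ J = G`. -/
def YFG (n k l : ℕ) (F G : Finset (Fin n)) (a : FX n k l) : Prop :=
  ∀ IJ : Idx n k × Idx n l,
    ¬(IJ.1.1 ∪ IJ.2.1 = F ∧ IJ.1.1 ∩ IJ.2.1 = G) → a IJ = 0

noncomputable def pairFn (n k l : ℕ) (F G : Finset (Fin n)) (a : FX n k l)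
    (K : Finset (Fin n)) : ℝ :=
  if h : K ∈ cls F G k ∧ ((F \ K) ∪ G).card = l then
    a (⟨K, (mem_cls.mp h.1).2.2⟩, ⟨(F \ K) ∪ G, h.2⟩) else 0

noncomputable def pairFnJ (n k l : ℕ) (F G : Finset (Fin n)) (b : FX n k l)
    (L : Finset (Fin n)) : ℝ :=
  if h : L ∈ cls F G l ∧ ((F \ L) ∪ G).card = k then
    b (⟨(F \ L) ∪ G, h.2⟩, ⟨L, (mem_cls.mp h.1).2.2⟩) else 0

lemma pairFn_spec {k l : ℕ} {F G : Finset (Fin n)} (a : FX n k l)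
    (hsum : F.card + G.card = k + l)
    (KL : Idx n k × Idx n l) (h1 : KL.1.1 ∪ KL.2.1 = F) (h2 : KL.1.1 ∩ KL.2.1 = G) :
    a KL = pairFn n k l F G a KL.1.1 := by
  have hKF : KL.1.1 ⊆ F := h1 ▸ Finset.subset_union_left
  have hGK : G ⊆ KL.1.1 := h2 ▸ Finset.inter_subset_left
  have hmem : KL.1.1 ∈ cls F G k := mem_cls.mpr ⟨hKF, hGK, KL.1.2⟩
  have hcard : ((F \ KL.1.1) ∪ G).card = l := partner_card hGK hKF KL.1.2 hsum
  rw [pairFn, dif_pos ⟨hmem, hcard⟩]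
  exact congrArg a (Prod.ext (Subtype.ext rfl) (Subtype.ext (pair_partner h1 h2)))

lemma pairFnJ_spec {k l : ℕ} {F G : Finset (Fin n)} (b : FX n k l)
    (hsum : F.card + G.card = l + k)
    (KL : Idx n k × Idx n l) (h1 : KL.1.1 ∪ KL.2.1 = F) (h2 : KL.1.1 ∩ KL.2.1 = G) :
    b KL = pairFnJ n k l F G b KL.2.1 := by
  have hLF : KL.2.1 ⊆ F := h1 ▸ Finset.subset_union_right
  have hGL : G ⊆ KL.2.1 := h2 ▸ Finset.inter_subset_right
  have hmem : KL.2.1 ∈ cls F G l := mem_cls.mpr ⟨hLF, hGL, KL.2.2⟩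
  have hcard : ((F \ KL.2.1) ∪ G).card = k := partner_card hGL hLF KL.2.2 hsum
  rw [pairFnJ, dif_pos ⟨hmem, hcard⟩]
  refine congrArg b (Prod.ext (Subtype.ext ?_) (Subtype.ext rfl))
  exact pair_partner (by rw [Finset.union_comm]; exact h1) (by rw [Finset.inter_comm]; exact h2)

/-! Glue lemmas -/

lemma glueUp {k l p : ℕ} (hp2 : p ≤ l) (F G : Finset (Fin n)) (a : FX n k l)
    (f : Finset (Fin n) → ℝ)
    (hf : ∀ KL : Idx n k × Idx n l, KL.1.1 ∪ KL.2.1 = F → KL.1.1 ∩ KL.2.1 = G →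
      a KL = f KL.1.1)
    (IJ' : Idx n (k+p) × Idx n (l-p)) (h1 : IJ'.1.1 ∪ IJ'.2.1 = F)
    (h2 : IJ'.1.1 ∩ IJ'.2.1 = G) :
    upX n k l p hp2 a IJ' = ∑ P ∈ Finset.powersetCard p (IJ'.1.1 \ G), f (IJ'.1.1 \ P) := by
  have hIJ : IJ'.1.1 \ IJ'.2.1 = IJ'.1.1 \ G := by
    rw [← h2]
    exact (Finset.sdiff_inter_self_left _ _).symm
  have hstep : ∀ P ∈ (Finset.powersetCard p (IJ'.1.1 \ IJ'.2.1)).attach,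
      a (⟨IJ'.1.1 \ P.1, by
          obtain ⟨hsub, hcard⟩ := Finset.mem_powersetCard.mp P.2
          have hPI : P.1 ⊆ IJ'.1.1 := hsub.trans Finset.sdiff_subset
          have h1 := Finset.card_sdiff_of_subset hPI
          have h2 := IJ'.1.2
          omega⟩,
        ⟨IJ'.2.1 ∪ P.1, by
          obtain ⟨hsub, hcard⟩ := Finset.mem_powersetCard.mp P.2
          have hdis : Disjoint IJ'.2.1 P.1 := by
            rw [Finset.disjoint_left]
            intro x hx hxP
            exact (Finset.mem_sdiff.mp (hsub hxP)).2 hx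
          have h1 := Finset.card_union_of_disjoint hdis
          have h2 := IJ'.2.2
          omega⟩) = f (IJ'.1.1 \ P.1) := by
    intro P _
    obtain ⟨hsub, hcard⟩ := Finset.mem_powersetCard.mp P.2
    refine hf _ ?_ ?_
    · rw [move_union hsub]; exact h1
    · rw [move_inter hsub]; exact h2
  rw [upX, Finset.sum_congr rfl hstep,
    Finset.sum_attach _ (fun P => f (IJ'.1.1 \ P)), hIJ]

lemma glueDown {k l p : ℕ} (F G : Finset (Fin n)) (b : FX n (k+p) (l-p))
    (g : Finset (Fin n) → ℝ)
    (hg : ∀ KL : Idx n (k+p) × Idx n (l-p), KL.1.1 ∪ KL.2.1 = F → KL.1.1 ∩ KL.2.1 = G →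
      b KL = g KL.2.1)
    (IJ : Idx n k × Idx n l) (h1 : IJ.1.1 ∪ IJ.2.1 = F) (h2 : IJ.1.1 ∩ IJ.2.1 = G) :
    downX n k l p b IJ = ∑ P ∈ Finset.powersetCard p (IJ.2.1 \ G), g (IJ.2.1 \ P) := by
  have hIJ : IJ.2.1 \ IJ.1.1 = IJ.2.1 \ G := by
    rw [← h2, Finset.inter_comm]
    exact (Finset.sdiff_inter_self_left _ _).symm
  have hstep : ∀ P ∈ (Finset.powersetCard p (IJ.2.1 \ IJ.1.1)).attach,
      b (⟨IJ.1.1 ∪ P.1, by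
          obtain ⟨hsub, hcard⟩ := Finset.mem_powersetCard.mp P.2
          have hdis : Disjoint IJ.1.1 P.1 := by
            rw [Finset.disjoint_left]
            intro x hx hxP
            exact (Finset.mem_sdiff.mp (hsub hxP)).2 hx
          have h1 := Finset.card_union_of_disjoint hdis
          have h2 := IJ.1.2
          omega⟩,
        ⟨IJ.2.1 \ P.1, by
          obtain ⟨hsub, hcard⟩ := Finset.mem_powersetCard.mp P.2
          have hPJ : P.1 ⊆ IJ.2.1 := hsub.trans Finset.sdiff_subset
          have h1 := Finset.card_sdiff_of_subset hPJ
          have h2 := IJ.2.2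
          omega⟩) = g (IJ.2.1 \ P.1) := by
    intro P _
    obtain ⟨hsub, hcard⟩ := Finset.mem_powersetCard.mp P.2
    refine hg _ ?_ ?_
    · rw [move_union' hsub]; exact h1
    · rw [move_inter' hsub]; exact h2
  rw [downX, Finset.sum_congr rfl hstep,
    Finset.sum_attach _ (fun P => g (IJ.2.1 \ P)), hIJ]

/-! MapsTo lemmas -/

lemma upX_YFG {k l p : ℕ} (hp2 : p ≤ l) (F G : Finset (Fin n)) (a : FX n k l)
    (ha : YFG n k l F G a) : YFG n (k+p) (l-p) F G (upX n k l p hp2 a) := by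
  intro IJ hIJ
  rw [upX]
  apply Finset.sum_eq_zero
  intro P _
  apply ha
  rintro ⟨hu, hi⟩
  obtain ⟨hsub, _⟩ := Finset.mem_powersetCard.mp P.2
  exact hIJ ⟨by rw [← move_union hsub]; exact hu, by rw [← move_inter hsub]; exact hi⟩

lemma downX_YFG {k l p : ℕ} (F G : Finset (Fin n)) (b : FX n (k+p) (l-p))
    (hb : YFG n (k+p) (l-p) F G b) : YFG n k l F G (downX n k l p b) := by
  intro IJ hIJ
  rw [downX]
  apply Finset.sum_eq_zero
  intro P _
  apply hb
  rintro ⟨hu, hi⟩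
  obtain ⟨hsub, _⟩ := Finset.mem_powersetCard.mp P.2
  exact hIJ ⟨by rw [← move_union' hsub]; exact hu, by rw [← move_inter' hsub]; exact hi⟩

lemma class_facts {k l : ℕ} {F G : Finset (Fin n)} (IJ : Idx n k × Idx n l)
    (h1 : IJ.1.1 ∪ IJ.2.1 = F) (h2 : IJ.1.1 ∩ IJ.2.1 = G) :
    G ⊆ F ∧ F.card + G.card = k + l := by
  constructor
  · exact (h2 ▸ Finset.inter_subset_left : G ⊆ IJ.1.1).trans
      (h1 ▸ Finset.subset_union_left)
  · have h := Finset.card_union_add_card_inter IJ.1.1 IJ.2.1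
    rw [h1, h2] at h
    have e1 := IJ.1.2
    have e2 := IJ.2.2
    omega

lemma inj_up {k l p : ℕ} (hp2 : p ≤ l) (hkl : k + p ≤ l) (F G : Finset (Fin n))
    (a b : FX n k l) (ha : YFG n k l F G a) (hb : YFG n k l F G b)
    (hab : upX n k l p hp2 a = upX n k l p hp2 b) : a = b := by
  funext IJ
  by_cases hc : IJ.1.1 ∪ IJ.2.1 = F ∧ IJ.1.1 ∩ IJ.2.1 = G
  · obtain ⟨h1, h2⟩ := hc
    obtain ⟨hGF, hsum⟩ := class_facts IJ h1 h2
    have hIk : IJ.1.1 ∈ cls F G k := mem_cls.mpr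
      ⟨h1 ▸ Finset.subset_union_left, h2 ▸ Finset.inter_subset_left, IJ.1.2⟩
    have hcond : 2*k + p ≤ F.card + G.card := by omega
    have hup : ∀ I' ∈ cls F G (k+p), ∑ P ∈ Finset.powersetCard p (I' \ G),
        (fun K => pairFn n k l F G a K - pairFn n k l F G b K) (I' \ P) = 0 := by
      intro I' hI'
      obtain ⟨hI'F, hGI', hI'c⟩ := mem_cls.mp hI'
      have hpc : ((F \ I') ∪ G).card = l - p := partner_card hGI' hI'F hI'c (by omega)
      obtain ⟨e1, e2⟩ := partner_pair hGF hI'F hGI'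
      have g1 := glueUp hp2 F G a (pairFn n k l F G a) (pairFn_spec a hsum)
        (⟨I', hI'c⟩, ⟨(F \ I') ∪ G, hpc⟩) e1 e2
      have g2 := glueUp hp2 F G b (pairFn n k l F G b) (pairFn_spec b hsum)
        (⟨I', hI'c⟩, ⟨(F \ I') ∪ G, hpc⟩) e1 e2
      have : ∑ P ∈ Finset.powersetCard p (I' \ G),
          (pairFn n k l F G a (I' \ P) - pairFn n k l F G b (I' \ P)) = 0 := by
        rw [Finset.sum_sub_distrib, ← g1, ← g2, hab, sub_self]
      exact this
    have hres := masterInj p k F G hGF hcond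
      (fun K => pairFn n k l F G a K - pairFn n k l F G b K) hup IJ.1.1 hIk
    have ea := pairFn_spec a hsum IJ h1 h2
    have eb := pairFn_spec b hsum IJ h1 h2
    rw [ea, eb]
    linarith
  · rw [ha IJ hc, hb IJ hc]

lemma inj_down {k l p : ℕ} (hp2 : p ≤ l) (hlk : l ≤ k + p) (F G : Finset (Fin n))
    (a b : FX n (k+p) (l-p)) (ha : YFG n (k+p) (l-p) F G a) (hb : YFG n (k+p) (l-p) F G b)
    (hab : downX n k l p a = downX n k l p b) : a = b := by
  funext IJ
  by_cases hc : IJ.1.1 ∪ IJ.2.1 = F ∧ IJ.1.1 ∩ IJ.2.1 = G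
  · obtain ⟨h1, h2⟩ := hc
    obtain ⟨hGF, hsum'⟩ := class_facts IJ h1 h2
    have hsum : F.card + G.card = k + l := by omega
    have hJm : IJ.2.1 ∈ cls F G (l-p) := mem_cls.mpr
      ⟨h1 ▸ Finset.subset_union_right, h2 ▸ Finset.inter_subset_right, IJ.2.2⟩
    have hcond : 2*(l-p) + p ≤ F.card + G.card := by omega
    have hup : ∀ J ∈ cls F G ((l-p)+p), ∑ P ∈ Finset.powersetCard p (J \ G),
        (fun L => pairFnJ n (k+p) (l-p) F G a L - pairFnJ n (k+p) (l-p) F G b L)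
          (J \ P) = 0 := by
      intro J hJ
      rw [show l - p + p = l from by omega] at hJ
      obtain ⟨hJF, hGJ, hJc⟩ := mem_cls.mp hJ
      have hpc : ((F \ J) ∪ G).card = k := partner_card hGJ hJF hJc (by omega)
      obtain ⟨e1', e2'⟩ := partner_pair hGF hJF hGJ
      have e1 : ((F \ J) ∪ G) ∪ J = F := by rw [Finset.union_comm]; exact e1'
      have e2 : ((F \ J) ∪ G) ∩ J = G := by rw [Finset.inter_comm]; exact e2'
      have hsJ : F.card + G.card = (l-p) + (k+p) := by omega
      have g1 := glueDown F G a (pairFnJ n (k+p) (l-p) F G a) (pairFnJ_spec a hsJ)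
        (⟨(F \ J) ∪ G, hpc⟩, ⟨J, hJc⟩) e1 e2
      have g2 := glueDown F G b (pairFnJ n (k+p) (l-p) F G b) (pairFnJ_spec b hsJ)
        (⟨(F \ J) ∪ G, hpc⟩, ⟨J, hJc⟩) e1 e2
      have : ∑ P ∈ Finset.powersetCard p (J \ G),
          (pairFnJ n (k+p) (l-p) F G a (J \ P) - pairFnJ n (k+p) (l-p) F G b (J \ P)) = 0 := by
        rw [Finset.sum_sub_distrib, ← g1, ← g2, hab, sub_self]
      exact this
    have hres := masterInj p (l-p) F G hGF hcond
      (fun L => pairFnJ n (k+p) (l-p) F G a L - pairFnJ n (k+p) (l-p) F G b L) hup IJ.2.1 hJm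
    have hsJ : F.card + G.card = (l-p) + (k+p) := by omega
    have ea := pairFnJ_spec a hsJ IJ h1 h2
    have eb := pairFnJ_spec b hsJ IJ h1 h2
    rw [ea, eb]
    linarith
  · rw [ha IJ hc, hb IJ hc]

lemma surj_up {k l p : ℕ} (hp2 : p ≤ l) (hlk : l ≤ k + p) (F G : Finset (Fin n))
    (b : FX n (k+p) (l-p)) (hb : YFG n (k+p) (l-p) F G b) :
    ∃ a : FX n k l, YFG n k l F G a ∧ upX n k l p hp2 a = b := by
  by_cases hex : ∃ IJ' : Idx n (k+p) × Idx n (l-p),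
      IJ'.1.1 ∪ IJ'.2.1 = F ∧ IJ'.1.1 ∩ IJ'.2.1 = G
  · obtain ⟨IJ0, h01, h02⟩ := hex
    obtain ⟨hGF, hsum'⟩ := class_facts IJ0 h01 h02
    have hsum : F.card + G.card = k + l := by omega
    have hcond : F.card + G.card ≤ 2*k + p := by omega
    obtain ⟨f, hsupp, hup⟩ := masterSurj p k F G hGF hcond (pairFn n (k+p) (l-p) F G b)
    classical
    set a : FX n k l := fun IJ =>
      if IJ.1.1 ∪ IJ.2.1 = F ∧ IJ.1.1 ∩ IJ.2.1 = G then f IJ.1.1 else 0 with hadef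
    have hYa : YFG n k l F G a := fun IJ hIJ => if_neg hIJ
    refine ⟨a, hYa, ?_⟩
    funext IJ'
    by_cases hc : IJ'.1.1 ∪ IJ'.2.1 = F ∧ IJ'.1.1 ∩ IJ'.2.1 = G
    · obtain ⟨h1, h2⟩ := hc
      have hfa : ∀ KL : Idx n k × Idx n l, KL.1.1 ∪ KL.2.1 = F →
          KL.1.1 ∩ KL.2.1 = G → a KL = f KL.1.1 := fun KL e1 e2 => if_pos ⟨e1, e2⟩
      have hI'm : IJ'.1.1 ∈ cls F G (k+p) := mem_cls.mpr
        ⟨h1 ▸ Finset.subset_union_left, h2 ▸ Finset.inter_subset_left, IJ'.1.2⟩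
      rw [glueUp hp2 F G a f hfa IJ' h1 h2, hup IJ'.1.1 hI'm,
        ← pairFn_spec b hsum' IJ' h1 h2]
    · rw [upX_YFG hp2 F G a hYa IJ' hc, hb IJ' hc]
  · refine ⟨fun _ => 0, fun _ _ => rfl, ?_⟩
    funext IJ'
    have hz : b IJ' = 0 := hb IJ' (fun h => hex ⟨IJ', h⟩)
    rw [hz, upX]
    exact Finset.sum_eq_zero (fun _ _ => rfl)

lemma surj_down {k l p : ℕ} (hp2 : p ≤ l) (hkl : k + p ≤ l) (F G : Finset (Fin n))
    (a : FX n k l) (ha : YFG n k l F G a) :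
    ∃ b : FX n (k+p) (l-p), YFG n (k+p) (l-p) F G b ∧ downX n k l p b = a := by
  by_cases hex : ∃ IJ : Idx n k × Idx n l, IJ.1.1 ∪ IJ.2.1 = F ∧ IJ.1.1 ∩ IJ.2.1 = G
  · obtain ⟨IJ0, h01, h02⟩ := hex
    obtain ⟨hGF, hsum⟩ := class_facts IJ0 h01 h02
    have hcond : F.card + G.card ≤ 2*(l-p) + p := by omega
    obtain ⟨f, hsupp, hup⟩ := masterSurj p (l-p) F G hGF hcond (pairFnJ n k l F G a)
    rw [show l - p + p = l from by omega] at hup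
    classical
    set b : FX n (k+p) (l-p) := fun KL =>
      if KL.1.1 ∪ KL.2.1 = F ∧ KL.1.1 ∩ KL.2.1 = G then f KL.2.1 else 0 with hbdef
    have hYb : YFG n (k+p) (l-p) F G b := fun KL hKL => if_neg hKL
    refine ⟨b, hYb, ?_⟩
    funext IJ
    by_cases hc : IJ.1.1 ∪ IJ.2.1 = F ∧ IJ.1.1 ∩ IJ.2.1 = G
    · obtain ⟨h1, h2⟩ := hc
      have hgb : ∀ KL : Idx n (k+p) × Idx n (l-p), KL.1.1 ∪ KL.2.1 = F →
          KL.1.1 ∩ KL.2.1 = G → b KL = f KL.2.1 := fun KL e1 e2 => if_pos ⟨e1, e2⟩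
      have hJm : IJ.2.1 ∈ cls F G l := mem_cls.mpr
        ⟨h1 ▸ Finset.subset_union_right, h2 ▸ Finset.inter_subset_right, IJ.2.2⟩
      have hsJ : F.card + G.card = l + k := by omega
      rw [glueDown F G b f hgb IJ h1 h2, hup IJ.2.1 hJm, ← pairFnJ_spec a hsJ IJ h1 h2]
    · rw [downX_YFG F G b hYb IJ hc, ha IJ hc]
  · refine ⟨fun _ => 0, fun _ _ => rfl, ?_⟩
    funext IJ
    have hz : a IJ = 0 := ha IJ (fun h => hex ⟨IJ, h⟩)
    rw [hz, downX]
    exact Finset.sum_eq_zero (fun _ _ => rfl)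

/-- `S_[p]` maps `Y_{F,G}(n,k,ℓ)` into `Y_{F,G}(n,k+p,ℓ−p)` and `S†_[p]` maps
`Y_{F,G}(n,k+p,ℓ−p)` into `Y_{F,G}(n,k,ℓ)`; moreover (1) if `k+p ≤ ℓ` then `S_[p]`
restricted to `Y_{F,G}(n,k,ℓ)` is injective and `S†_[p]` maps `Y_{F,G}(n,k+p,ℓ−p)` onto
`Y_{F,G}(n,k,ℓ)`, and (2) if `k+p ≥ ℓ` then `S_[p]` maps `Y_{F,G}(n,k,ℓ)` onto
`Y_{F,G}(n,k+p,ℓ−p)` and `S†_[p]` restricted to `Y_{F,G}(n,k+p,ℓ−p)` is injective. -/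
theorem YFG_mapsTo_inj_surj (n k l p : ℕ) (hp1 : 1 ≤ p) (hp2 : p ≤ l)
    (F G : Finset (Fin n)) :
    (∀ a : FX n k l, YFG n k l F G a →
      YFG n (k + p) (l - p) F G (upX n k l p hp2 a)) ∧
    (∀ b : FX n (k + p) (l - p), YFG n (k + p) (l - p) F G b →
      YFG n k l F G (downX n k l p b)) ∧
    (k + p ≤ l →
      (∀ a b : FX n k l, YFG n k l F G a → YFG n k l F G b →
        upX n k l p hp2 a = upX n k l p hp2 b → a = b) ∧
      (∀ a : FX n k l, YFG n k l F G a →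
        ∃ b : FX n (k + p) (l - p), YFG n (k + p) (l - p) F G b ∧ downX n k l p b = a)) ∧
    (l ≤ k + p →
      (∀ b : FX n (k + p) (l - p), YFG n (k + p) (l - p) F G b →
        ∃ a : FX n k l, YFG n k l F G a ∧ upX n k l p hp2 a = b) ∧
      (∀ a b : FX n (k + p) (l - p), YFG n (k + p) (l - p) F G a →
        YFG n (k + p) (l - p) F G b → downX n k l p a = downX n k l p b → a = b)) := by
  refine ⟨fun a ha => upX_YFG hp2 F G a ha,
    fun b hb => downX_YFG F G b hb,
    fun hkl => ⟨fun a b ha hb hab => inj_up hp2 hkl F G a b ha hb hab,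
      fun a ha => surj_down hp2 hkl F G a ha⟩,
    fun hlk => ⟨fun b hb => surj_up hp2 hlk F G b hb,
      fun a b ha hb hab => inj_down hp2 hlk F G a b ha hb hab⟩⟩
end

section
/- Let n, k, ℓ be natural numbers with k ≤ n. Consider the real vector space of alternating ℓ-multilinear maps ω : (ℝ^n)^ℓ → ℝ, and let N(k,ℓ) be the subspace of those ω such that for every index j with k < j ≤ n (that is, every basis direction not among the first k), ω(v_1,…,v_ℓ) = 0 whenever each argument v_i lies in the span of the standard basis vectors {e_t : t ≠ j}. Then: if n ≤ k + ℓ, the dimension of N(k,ℓ) over ℝ equals the binomial coefficient C(k, k+ℓ−n); and if n > k + ℓ, then N(k,ℓ) is the zero subspace. -/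
/-- `NSub n k l` is the subspace of alternating `ℓ`-multilinear maps `ω : (ℝⁿ)^ℓ → ℝ`
such that for every basis direction `j` not among the first `k`, `ω(v₁,…,v_ℓ) = 0`
whenever each argument lies in the span of the standard basis vectors `{e_t : t ≠ j}`. -/
noncomputable def NSub (n k l : ℕ) : Submodule ℝ (AlternatingMap ℝ (Fin n → ℝ) ℝ (Fin l)) where
  carrier := {ω | ∀ j : Fin n, k ≤ (j : ℕ) →
    ∀ v : Fin l → (Fin n → ℝ),
      (∀ i : Fin l, v i ∈ Submodule.span ℝ
        ((fun t : Fin n => (Pi.single t 1 : Fin n → ℝ)) '' {t : Fin n | t ≠ j})) →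
      ω v = 0}
  add_mem' := by
    intro a b ha hb j hj v hv
    simp only [AlternatingMap.add_apply, ha j hj v hv, hb j hj v hv, add_zero]
  zero_mem' := by
    intro j hj v hv
    simp
  smul_mem' := by
    intro c a ha j hj v hv
    simp only [AlternatingMap.smul_apply, ha j hj v hv, smul_zero]

namespace NSubAux

lemma mem_NSub {n k l : ℕ} {ω : AlternatingMap ℝ (Fin n → ℝ) ℝ (Fin l)} :
    ω ∈ NSub n k l ↔ ∀ j : Fin n, k ≤ (j : ℕ) →
    ∀ v : Fin l → (Fin n → ℝ),
      (∀ i : Fin l, v i ∈ Submodule.span ℝ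
        ((fun t : Fin n => (Pi.single t 1 : Fin n → ℝ)) '' {t : Fin n | t ≠ j})) →
      ω v = 0 := Iff.rfl

/-- the increasing tuple of basis vectors indexed by a finset `S` of size `l` -/
noncomputable def bvec {n l : ℕ} (S : Finset (Fin n)) (hS : S.card = l) :
    Fin l → (Fin n → ℝ) :=
  fun i => Pi.single ((S.orderIsoOfFin hS i : Fin n)) 1

/-- the basic alternating form associated to `S` -/
noncomputable def wS {n l : ℕ} (S : Finset (Fin n)) (hS : S.card = l) :
    AlternatingMap ℝ (Fin n → ℝ) ℝ (Fin l) :=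
  (Matrix.detRowAlternating : ((Fin l → ℝ) [⋀^Fin l]→ₗ[ℝ] ℝ)).compLinearMap
    (LinearMap.funLeft ℝ ℝ (fun i : Fin l => ((S.orderIsoOfFin hS i : Fin n))))

lemma wS_apply {n l : ℕ} (S : Finset (Fin n)) (hS : S.card = l) (v : Fin l → Fin n → ℝ) :
    wS S hS v =
      Matrix.det (Matrix.of (fun i j : Fin l => v i ((S.orderIsoOfFin hS j : Fin n)))) := rfl

lemma coord_zero {n : ℕ} {j : Fin n} {w : Fin n → ℝ}
    (hw : w ∈ Submodule.span ℝ
      ((fun t : Fin n => (Pi.single t 1 : Fin n → ℝ)) '' {t : Fin n | t ≠ j})) :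
    w j = 0 := by
  have h : Submodule.span ℝ
      ((fun t : Fin n => (Pi.single t 1 : Fin n → ℝ)) '' {t : Fin n | t ≠ j})
      ≤ LinearMap.ker (LinearMap.proj (R := ℝ) (φ := fun _ : Fin n => ℝ) j) := by
    rw [Submodule.span_le]
    rintro _ ⟨t, ht, rfl⟩
    simp only [SetLike.mem_coe, LinearMap.mem_ker, LinearMap.proj_apply]
    exact Pi.single_eq_of_ne (Ne.symm ht) 1
  simpa using h hw

lemma wS_bvec {n l : ℕ} (S T : Finset (Fin n)) (hS : S.card = l) (hT : T.card = l) :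
    wS S hS (bvec T hT) = if S = T then 1 else 0 := by
  rw [wS_apply]
  split_ifs with h
  · subst h
    have h1 : (Matrix.of fun i j : Fin l =>
        bvec S hS i ((S.orderIsoOfFin hS j : Fin n))) = 1 := by
      ext i j
      by_cases hij : i = j
      · subst hij
        simp [bvec, Matrix.one_apply, Pi.single_apply]
      · have hne : ((S.orderIsoOfFin hS j : Fin n)) ≠ ((S.orderIsoOfFin hS i : Fin n)) := by
          intro hc
          exact hij ((S.orderIsoOfFin hS).injective (Subtype.ext hc)).symm
        simp [bvec, Matrix.one_apply, hij, Pi.single_eq_of_ne hne]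
    rw [h1, Matrix.det_one]
  · obtain ⟨t, htT, htS⟩ : ∃ t, t ∈ T ∧ t ∉ S := by
      by_contra hc
      push_neg at hc
      exact h (Finset.eq_of_subset_of_card_le hc (by omega)).symm
    apply Matrix.det_eq_zero_of_row_eq_zero ((T.orderIsoOfFin hT).symm ⟨t, htT⟩)
    intro j
    have h2 : ((T.orderIsoOfFin hT ((T.orderIsoOfFin hT).symm ⟨t, htT⟩) : Fin n)) = t := by
      simp
    have h3 : t ≠ ((S.orderIsoOfFin hS j : Fin n)) := by
      intro hc
      exact htS (hc ▸ (S.orderIsoOfFin hS j).2)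
    simp only [Matrix.of_apply, bvec]
    rw [h2]
    exact Pi.single_eq_of_ne (Ne.symm h3) 1

lemma wS_zero_of_span {n l : ℕ} {j : Fin n} (S : Finset (Fin n)) (hS : S.card = l)
    (hj : j ∈ S) (v : Fin l → Fin n → ℝ)
    (hv : ∀ i, v i ∈ Submodule.span ℝ
      ((fun t : Fin n => (Pi.single t 1 : Fin n → ℝ)) '' {t : Fin n | t ≠ j})) :
    wS S hS v = 0 := by
  rw [wS_apply]
  apply Matrix.det_eq_zero_of_column_eq_zero ((S.orderIsoOfFin hS).symm ⟨j, hj⟩)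
  intro i
  have h2 : ((S.orderIsoOfFin hS ((S.orderIsoOfFin hS).symm ⟨j, hj⟩) : Fin n)) = j := by
    simp
  simp only [Matrix.of_apply, h2]
  exact coord_zero (hv i)

lemma eval_zero_of_bvec_zero {n l : ℕ} (ω : AlternatingMap ℝ (Fin n → ℝ) ℝ (Fin l))
    (S : Finset (Fin n)) (hS : S.card = l) (v : Fin l → Fin n)
    (hv : Function.Injective v) (hvS : ∀ i, v i ∈ S)
    (h0 : ω (bvec S hS) = 0) : (ω fun i => Pi.single (v i) 1) = 0 := by
  set m := S.orderIsoOfFin hS with hm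
  have hσinj : Function.Injective (fun i => m.symm ⟨v i, hvS i⟩) := by
    intro a b hab
    apply hv
    have h2 : (⟨v a, hvS a⟩ : {x // x ∈ S}) = ⟨v b, hvS b⟩ := by
      have := congrArg m hab
      simpa using this
    exact congrArg Subtype.val h2
  let σ : Equiv.Perm (Fin l) :=
    Equiv.ofBijective _ (Finite.injective_iff_bijective.mp hσinj)
  have hcomp : (fun i => Pi.single (v i) (1:ℝ)) = (bvec S hS) ∘ σ := by
    funext i
    show Pi.single (v i) (1:ℝ) = bvec S hS (m.symm ⟨v i, hvS i⟩)
    have h3 : ((S.orderIsoOfFin hS) (m.symm ⟨v i, hvS i⟩) : Fin n) = v i := by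
      rw [← hm, OrderIso.apply_symm_apply]
    simp only [bvec, h3]
  rw [hcomp, AlternatingMap.map_perm, h0, smul_zero]

lemma altSum_apply {n l : ℕ} {α : Type*} (s : Finset α)
    (f : α → AlternatingMap ℝ (Fin n → ℝ) ℝ (Fin l)) (v : Fin l → Fin n → ℝ) :
    (∑ a ∈ s, f a) v = ∑ a ∈ s, f a v := by
  induction s using Finset.cons_induction with
  | empty => simp
  | cons a s ha ih => simp [Finset.sum_cons, ih]

def Up (n k : ℕ) : Finset (Fin n) := Finset.univ.filter (fun j => k ≤ (j : ℕ))

abbrev BIdx (n k l : ℕ) := {S : Finset (Fin n) // S.card = l ∧ Up n k ⊆ S}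

noncomputable def Φ (n k l : ℕ) : NSub n k l →ₗ[ℝ] (BIdx n k l → ℝ) where
  toFun := fun ω S => (ω : AlternatingMap ℝ (Fin n → ℝ) ℝ (Fin l)) (bvec S.1 S.2.1)
  map_add' := by intro a b; funext S; simp
  map_smul' := by intro c a; funext S; simp

end NSubAux

open NSubAux in
/-- If `n ≤ k + ℓ`, then `dim N(k,ℓ) = C(k, k+ℓ−n)`; if `n > k + ℓ`, then `N(k,ℓ) = 0`. -/
theorem NSub_finrank (n k l : ℕ) (hk : k ≤ n) :
    (n ≤ k + l → Module.finrank ℝ (NSub n k l) = Nat.choose k (k + l - n)) ∧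
    (k + l < n → NSub n k l = ⊥) := by
  classical
  -- cardinality facts about `Up`
  have hUpc : (Up n k)ᶜ = Finset.univ.image (Fin.castLE hk) := by
    ext j
    simp only [Finset.mem_compl, Up, Finset.mem_filter, Finset.mem_univ, true_and, not_le,
      Finset.mem_image]
    constructor
    · intro hj
      exact ⟨⟨(j : ℕ), hj⟩, rfl⟩
    · rintro ⟨i, -, rfl⟩
      exact i.isLt
  have hUpccard : (Up n k)ᶜ.card = k := by
    rw [hUpc, Finset.card_image_of_injective _ (Fin.castLE_injective hk)]
    simp
  have hUpcard : (Up n k).card = n - k := by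
    have h := Finset.card_compl (Up n k)
    rw [hUpccard] at h
    simp only [Fintype.card_fin] at h
    have h2 : (Up n k).card ≤ n := by
      simpa using Finset.card_le_univ (Up n k)
    omega
  -- key injectivity of Φ on NSub
  have hΦinj : Function.Injective (Φ n k l) := by
    rw [injective_iff_map_eq_zero]
    intro ω hω
    apply Subtype.ext
    apply Module.Basis.ext_alternating (Pi.basisFun ℝ (Fin n))
    intro v hv
    simp only [Pi.basisFun_apply, Submodule.coe_zero, AlternatingMap.zero_apply]
    by_cases hSub : Up n k ⊆ Finset.univ.image v
    · have hcard : (Finset.univ.image v).card = l := by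
        rw [Finset.card_image_of_injective _ hv]
        simp
      have h0 : (ω : AlternatingMap ℝ (Fin n → ℝ) ℝ (Fin l)) (bvec _ hcard) = 0 :=
        congrFun hω ⟨Finset.univ.image v, hcard, hSub⟩
      exact eval_zero_of_bvec_zero _ _ hcard v hv
        (fun i => Finset.mem_image_of_mem v (Finset.mem_univ i)) h0
    · obtain ⟨j, hjUp, hjS⟩ := Finset.not_subset.mp hSub
      have hjk : k ≤ (j : ℕ) := by
        simpa [Up] using hjUp
      refine ω.2 j hjk _ (fun i => Submodule.subset_span ⟨v i, ?_, rfl⟩)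
      intro hc
      exact hjS (hc ▸ Finset.mem_image_of_mem v (Finset.mem_univ i))
  have hΦsurj : Function.Surjective (Φ n k l) := by
    intro c
    have hmem : (∑ S : BIdx n k l, c S • wS S.1 S.2.1) ∈ NSub n k l := by
      rw [mem_NSub]
      intro j hj v hv
      rw [altSum_apply]
      apply Finset.sum_eq_zero
      intro S _
      have hjS : j ∈ S.1 := S.2.2 (by simp [Up, hj])
      rw [AlternatingMap.smul_apply, wS_zero_of_span S.1 S.2.1 hjS v hv, smul_zero]
    refine ⟨⟨_, hmem⟩, ?_⟩
    funext T
    show (∑ S : BIdx n k l, c S • wS S.1 S.2.1) (bvec T.1 T.2.1) = c T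
    rw [altSum_apply]
    have hterm : ∀ S : BIdx n k l,
        (c S • wS S.1 S.2.1) (bvec T.1 T.2.1) = if S = T then c S else 0 := by
      intro S
      rw [AlternatingMap.smul_apply, wS_bvec]
      by_cases h : S = T
      · subst h; simp
      · have h1 : S.1 ≠ T.1 := fun hh => h (Subtype.ext hh)
        simp [h1, h]
    rw [Finset.sum_congr rfl (fun S _ => hterm S)]
    simp
  have e : (NSub n k l) ≃ₗ[ℝ] (BIdx n k l → ℝ) :=
    LinearEquiv.ofBijective (Φ n k l) ⟨hΦinj, hΦsurj⟩
  have hrank : Module.finrank ℝ (NSub n k l) = Fintype.card (BIdx n k l) := by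
    rw [e.finrank_eq, Module.finrank_fintype_fun_eq_card]
  have hcardB : Fintype.card (BIdx n k l) =
      (Finset.univ.filter (fun S : Finset (Fin n) => S.card = l ∧ Up n k ⊆ S)).card :=
    Fintype.card_subtype _
  constructor
  · intro hnkl
    rw [hrank, hcardB]
    have hbij : (Finset.univ.filter
        (fun S : Finset (Fin n) => S.card = l ∧ Up n k ⊆ S)).card =
        (Finset.powersetCard (k + l - n) (Up n k)ᶜ).card := by
      apply Finset.card_bij' (fun S _ => S \ Up n k) (fun T _ => T ∪ Up n k)
      · intro S hS
        simp only [Finset.mem_filter, Finset.mem_univ, true_and] at hS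
        rw [Finset.mem_powersetCard]
        constructor
        · intro x hx
          simp only [Finset.mem_sdiff] at hx
          simpa using hx.2
        · rw [Finset.card_sdiff_of_subset hS.2, hS.1, hUpcard]
          omega
      · intro T hT
        rw [Finset.mem_powersetCard] at hT
        have hdisj : Disjoint T (Up n k) := by
          rw [Finset.disjoint_left]
          intro x hx
          simpa using hT.1 hx
        simp only [Finset.mem_filter, Finset.mem_univ, true_and]
        refine ⟨?_, Finset.subset_union_right⟩
        rw [Finset.card_union_of_disjoint hdisj, hT.2, hUpcard]
        omega
      · intro S hS
        simp only [Finset.mem_filter, Finset.mem_univ, true_and] at hS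
        exact Finset.sdiff_union_of_subset hS.2
      · intro T hT
        rw [Finset.mem_powersetCard] at hT
        have hdisj : Disjoint T (Up n k) := by
          rw [Finset.disjoint_left]
          intro x hx
          simpa using hT.1 hx
        rw [Finset.union_sdiff_right, Finset.sdiff_eq_self_of_disjoint hdisj]
    rw [hbij, Finset.card_powersetCard, hUpccard]
  · intro hn
    rw [eq_bot_iff]
    intro ω hω
    rw [Submodule.mem_bot]
    apply Module.Basis.ext_alternating (Pi.basisFun ℝ (Fin n))
    intro v hv
    simp only [Pi.basisFun_apply, AlternatingMap.zero_apply]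
    have hnotsub : ¬ Up n k ⊆ Finset.univ.image v := by
      intro hsub
      have h1 := Finset.card_le_card hsub
      rw [hUpcard, Finset.card_image_of_injective _ hv] at h1
      simp only [Finset.card_univ, Fintype.card_fin] at h1
      omega
    obtain ⟨j, hjUp, hjS⟩ := Finset.not_subset.mp hnotsub
    have hjk : k ≤ (j : ℕ) := by simpa [Up] using hjUp
    refine hω j hjk _ (fun i => Submodule.subset_span ⟨v i, ?_, rfl⟩)
    intro hc
    exact hjS (hc ▸ Finset.mem_image_of_mem v (Finset.mem_univ i))
end

section
/- For all natural numbers n, k, ℓ with k ≤ n and ℓ ≤ n, the following binomial identity holds: Σ_{m=0}^{k+ℓ} C(n+1, m+1) · C(m+1, k+1) · C(k, (k+ℓ)−m) = C(n+1, k+1) · C(n, ℓ). (All subtractions in bottom indices are genuine natural-number subtractions within the stated range, and terms with m < k or m > n vanish automatically. This identity expresses that the total number of degrees of freedom of the ι*ι*-conforming lowest-order finite element for Λ^{k,ℓ}-valued forms — namely Σ over all faces σ of an n-simplex of dim B⁻Λ^{k,ℓ}(σ) — equals dim P⁻Λ^{k,ℓ} = C(n+1,k+1)·C(n,ℓ).)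 -/
/-- For `k ≤ n` and `ℓ ≤ n`:
`Σ_{m=0}^{k+ℓ} C(n+1, m+1)·C(m+1, k+1)·C(k, (k+ℓ)−m) = C(n+1, k+1)·C(n, ℓ)`,
the dimension count establishing unisolvency of the finite element
`C_{ι*ι*}P⁻Λ^{k,ℓ}` on an `n`-simplex. -/
theorem dof_count_lowest_order (n k l : ℕ) (hk : k ≤ n) (hl : l ≤ n) :
    ∑ m ∈ Finset.range (k + l + 1),
      Nat.choose (n + 1) (m + 1) * Nat.choose (m + 1) (k + 1) *
        Nat.choose k ((k + l) - m)
      = Nat.choose (n + 1) (k + 1) * Nat.choose n l := by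
  have hsplit : k + l + 1 = k + (l + 1) := by omega
  rw [hsplit, Finset.sum_range_add]
  have h1 : ∑ m ∈ Finset.range k,
      Nat.choose (n + 1) (m + 1) * Nat.choose (m + 1) (k + 1) *
        Nat.choose k ((k + l) - m) = 0 := by
    apply Finset.sum_eq_zero
    intro m hm
    rw [Finset.mem_range] at hm
    rw [Nat.choose_eq_zero_of_lt (show m + 1 < k + 1 by omega)]
    ring
  rw [h1, zero_add]
  have h2 : ∀ j ∈ Finset.range (l + 1),
      Nat.choose (n + 1) (k + j + 1) * Nat.choose (k + j + 1) (k + 1) *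
        Nat.choose k ((k + l) - (k + j))
      = Nat.choose (n + 1) (k + 1) * (Nat.choose (n - k) j * Nat.choose k (l - j)) := by
    intro j hj
    rw [Finset.mem_range] at hj
    have hidx : (k + l) - (k + j) = l - j := by omega
    rw [hidx]
    by_cases hjn : k + j ≤ n
    · have := Nat.choose_mul (n := n + 1) (k := k + j + 1) (s := k + 1)
        (by omega)
      have heq : n + 1 - (k + 1) = n - k := by omega
      have heq2 : k + j + 1 - (k + 1) = j := by omega
      rw [heq, heq2] at this
      rw [this]; ring
    · rw [Nat.choose_eq_zero_of_lt (show n + 1 < k + j + 1 by omega),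
        Nat.choose_eq_zero_of_lt (show n - k < j by omega)]
      ring
  rw [Finset.sum_congr rfl h2, ← Finset.mul_sum]
  congr 1
  have hv := Nat.add_choose_eq (n - k) k l
  rw [Finset.Nat.sum_antidiagonal_eq_sum_range_succ_mk] at hv
  have hnk : n - k + k = n := by omega
  rw [hnk] at hv
  exact hv.symm
end

section
/- For all natural numbers n, k, ℓ, r with k ≤ n, ℓ ≤ n and r ≥ 1, the following binomial identity holds: Σ_{m=k}^{k+r−1} Σ_{n'=m}^{ℓ+m} C(n+1, n'+1) · C(n'+1, m+1) · C(r+k−1, r−1) · C(r−1, m−k) · C(m, (ℓ+m)−n') = C(n+r, k+r) · C(r+k−1, k) · C(n, ℓ). (All subtractions in bottom indices are genuine natural-number subtractions within the stated ranges; terms with n' > n vanish automatically. This identity expresses that the total number of degrees of freedom of the ι*ι*-conforming finite element of polynomial degree r for Λ^{k,ℓ}-valued forms equals dim P_r⁻Λ^{k,ℓ} = C(n+r,k+r)·C(r+k−1,k)·C(n,ℓ).) -/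
/-- Vandermonde's identity as a sum over a range. -/
lemma vand_range (a b c : ℕ) :
    ∑ j ∈ Finset.range (c + 1), Nat.choose a j * Nat.choose b (c - j)
      = Nat.choose (a + b) c := by
  rw [Nat.add_choose_eq, Finset.Nat.sum_antidiagonal_eq_sum_range_succ_mk]

/-- The subset-of-subset identity, valid without hypotheses in this form. -/
lemma choose_mul_choose (n m j : ℕ) :
    Nat.choose (n + 1) (m + j + 1) * Nat.choose (m + j + 1) (m + 1)
      = Nat.choose (n + 1) (m + 1) * Nat.choose (n - m) j := by
  rcases le_or_gt (m + j) n with h | h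
  · have h1 : m + j + 1 ≤ n + 1 := by omega
    have h2 : m + 1 ≤ m + j + 1 := by omega
    rw [Nat.choose_mul h2]
    congr 1 <;> congr 1 <;> omega
  · rcases le_or_gt m n with hm | hm
    · rw [Nat.choose_eq_zero_of_lt (by omega : n + 1 < m + j + 1),
        Nat.choose_eq_zero_of_lt (by omega : n - m < j)]
      ring
    · rw [Nat.choose_eq_zero_of_lt (by omega : n + 1 < m + j + 1),
        Nat.choose_eq_zero_of_lt (by omega : n + 1 < m + 1)]
      ring

/-- The inner sum collapses. -/
lemma bubble_inner_sum (n l m : ℕ) :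
    ∑ m' ∈ Finset.Icc m (l + m),
      Nat.choose (n + 1) (m' + 1) * Nat.choose (m' + 1) (m + 1) *
        Nat.choose m ((l + m) - m')
      = Nat.choose (n + 1) (m + 1) * Nat.choose n l := by
  have : Finset.Icc m (l + m) = Finset.Ico m (l + m + 1) := by
    rw [Finset.Ico_add_one_right_eq_Icc]
  rw [this, Finset.sum_Ico_eq_sum_range]
  have hrange : l + m + 1 - m = l + 1 := by omega
  rw [hrange]
  have key : ∀ j ∈ Finset.range (l + 1),
      Nat.choose (n + 1) (m + j + 1) * Nat.choose (m + j + 1) (m + 1) *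
        Nat.choose m ((l + m) - (m + j))
        = Nat.choose (n + 1) (m + 1) * (Nat.choose (n - m) j * Nat.choose m (l - j)) := by
    intro j hj
    rw [choose_mul_choose]
    have : l + m - (m + j) = l - j := by omega
    rw [this]; ring
  rw [Finset.sum_congr rfl key, ← Finset.mul_sum, vand_range]
  rcases le_or_gt m n with hm | hm
  · rw [Nat.sub_add_cancel hm]
  · rw [Nat.choose_eq_zero_of_lt (by omega : n + 1 < m + 1)]
    ring

/-- The outer Vandermonde step. -/
lemma outer_vand (n k r : ℕ) (hr : 1 ≤ r) :
    ∑ i ∈ Finset.range r, Nat.choose (n + 1) (k + 1 + i) * Nat.choose (r - 1) i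
      = Nat.choose (n + r) (k + r) := by
  have h1 : n + r = (n + 1) + (r - 1) := by omega
  rw [h1, ← vand_range (n + 1) (r - 1) (k + r)]
  have h2 : k + r + 1 = (k + 1) + r := by omega
  rw [h2, Finset.sum_range_add]
  have hz : ∑ j ∈ Finset.range (k + 1),
      Nat.choose (n + 1) j * Nat.choose (r - 1) (k + r - j) = 0 := by
    apply Finset.sum_eq_zero
    intro j hj
    simp only [Finset.mem_range] at hj
    rw [Nat.choose_eq_zero_of_lt (by omega : r - 1 < k + r - j)]
    ring
  rw [hz, zero_add]
  apply Finset.sum_congr rfl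
  intro i hi
  simp only [Finset.mem_range] at hi
  congr 1
  have h3 : k + r - (k + 1 + i) = (r - 1) - i := by omega
  rw [h3, Nat.choose_symm (by omega : i ≤ r - 1)]

/-- For `k ≤ n`, `ℓ ≤ n`, `r ≥ 1`:
`Σ_{m=k}^{k+r−1} Σ_{n'=m}^{ℓ+m} C(n+1,n'+1)·C(n'+1,m+1)·C(r+k−1,r−1)·C(r−1,m−k)·C(m,(ℓ+m)−n')
  = C(n+r,k+r)·C(r+k−1,k)·C(n,ℓ)`,
the dimension count for the high-order element `C_{ι*ι*}P_r⁻Λ^{k,ℓ}`. -/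
theorem dof_count_high_order (n k l r : ℕ) (hk : k ≤ n) (hl : l ≤ n) (hr : 1 ≤ r) :
    ∑ m ∈ Finset.Icc k (k + r - 1), ∑ m' ∈ Finset.Icc m (l + m),
      Nat.choose (n + 1) (m' + 1) * Nat.choose (m' + 1) (m + 1) *
        Nat.choose (r + k - 1) (r - 1) * Nat.choose (r - 1) (m - k) *
        Nat.choose m ((l + m) - m')
      = Nat.choose (n + r) (k + r) * Nat.choose (r + k - 1) k * Nat.choose n l := by
  have step1 : ∀ m, ∑ m' ∈ Finset.Icc m (l + m),
      Nat.choose (n + 1) (m' + 1) * Nat.choose (m' + 1) (m + 1) *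
        Nat.choose (r + k - 1) (r - 1) * Nat.choose (r - 1) (m - k) *
        Nat.choose m ((l + m) - m')
      = Nat.choose (r + k - 1) (r - 1) * Nat.choose (r - 1) (m - k) *
          (Nat.choose (n + 1) (m + 1) * Nat.choose n l) := by
    intro m
    rw [← bubble_inner_sum n l m, Finset.mul_sum]
    apply Finset.sum_congr rfl
    intro m' _
    ring
  rw [Finset.sum_congr rfl fun m _ => step1 m]
  have : Finset.Icc k (k + r - 1) = Finset.Ico k (k + r) := by
    rw [← Finset.Ico_add_one_right_eq_Icc]
    congr 1
    omega
  rw [this, Finset.sum_Ico_eq_sum_range]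
  have hrr : k + r - k = r := by omega
  rw [hrr]
  have step2 : ∀ i ∈ Finset.range r,
      Nat.choose (r + k - 1) (r - 1) * Nat.choose (r - 1) ((k + i) - k) *
          (Nat.choose (n + 1) ((k + i) + 1) * Nat.choose n l)
      = Nat.choose (r + k - 1) (r - 1) * Nat.choose n l *
          (Nat.choose (n + 1) (k + 1 + i) * Nat.choose (r - 1) i) := by
    intro i _
    have h1 : k + i - k = i := by omega
    have h2 : k + i + 1 = k + 1 + i := by omega
    rw [h1, h2]; ring
  rw [Finset.sum_congr rfl step2, ← Finset.mul_sum, outer_vand n k r hr]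
  have hsym : Nat.choose (r + k - 1) (r - 1) = Nat.choose (r + k - 1) k := by
    have : r - 1 = (r + k - 1) - k := by omega
    rw [this, Nat.choose_symm (by omega : k ≤ r + k - 1)]
  rw [hsym]; ring
end

section
/- Let n, ℓ, p, θ be natural numbers with p ≥ 1, ℓ + p ≤ n and θ ≤ n, and set k = ℓ + p. Then in ℤ: Σ_{s=0}^{p−1} C(θ, s) · C(n−θ, (n−ℓ)−s) = Σ_{ξ=ℓ+1}^{k} (−1)^{k+ξ} · C(ξ−1, ℓ) · C(n−ξ, n−k) · C(n−θ, (n+1)−ξ). (All subtractions in the arguments of binomial coefficients are genuine natural-number subtractions within the stated ranges.) -/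
open Finset

private lemma negpow {a b : ℕ} (h : a % 2 = b % 2) : (-1:ℤ)^a = (-1:ℤ)^b := by
  conv_lhs => rw [← Nat.div_add_mod a 2]
  conv_rhs => rw [← Nat.div_add_mod b 2]
  rw [h, pow_add, pow_add, pow_mul, pow_mul]
  norm_num

private lemma trinom (t a j : ℕ) :
    ((a + j).choose a : ℤ) * (t.choose (a + j)) = (t.choose a : ℤ) * ((t - a).choose j) := by
  rcases le_or_gt (a + j) t with h | h
  · have h1 := Nat.choose_mul (n := t) (k := a + j) (s := a) (Nat.le_add_right a j)
    have h2 : a + j - a = j := by omega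
    rw [h2] at h1
    rw [mul_comm]
    exact_mod_cast congrArg (Nat.cast : ℕ → ℤ) h1
  · rw [Nat.choose_eq_zero_of_lt h]
    rcases le_or_gt a t with h3 | h3
    · rw [Nat.choose_eq_zero_of_lt (show t - a < j by omega)]
      ring
    · rw [Nat.choose_eq_zero_of_lt h3]
      ring

private lemma lemA (b : ℕ) : ∀ c m : ℕ,
    ∑ j ∈ range (b+1), (-1:ℤ)^j * (b.choose j) * ((c + (b - j)).choose m)
      = if b ≤ m then ((c.choose (m - b)) : ℤ) else 0 := by
  induction b with
  | zero => intro c m; simp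
  | succ b ih =>
    intro c m
    rw [Finset.sum_range_succ']
    have step : ∀ i ∈ range (b+1),
        (-1:ℤ)^(i+1) * ((b+1).choose (i+1)) * ((c + (b + 1 - (i+1))).choose m)
        = -((-1:ℤ)^i * (b.choose i) * ((c + (b - i)).choose m))
          + (-1:ℤ)^(i+1) * (b.choose (i+1)) * ((c + (b + 1 - (i+1))).choose m) := by
      intro i hi
      rw [Nat.choose_succ_succ]
      have h2 : b + 1 - (i + 1) = b - i := by omega
      rw [h2]
      push_cast
      ring
    rw [Finset.sum_congr rfl step, Finset.sum_add_distrib]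
    have e2 : (∑ i ∈ range (b+1), (-1:ℤ)^(i+1) * (b.choose (i+1)) * ((c + (b + 1 - (i+1))).choose m))
        + (-1:ℤ)^0 * ((b+1).choose 0) * ((c + (b + 1 - 0)).choose m)
        = ∑ j ∈ range (b+1), (-1:ℤ)^j * (b.choose j) * (((c+1) + (b - j)).choose m) := by
      rw [Finset.sum_range_succ, Finset.sum_range_succ']
      have h3 : ∀ i ∈ range b,
          (-1:ℤ)^(i+1) * (b.choose (i+1)) * ((c + (b + 1 - (i+1))).choose m)
          = (-1:ℤ)^(i+1) * (b.choose (i+1)) * (((c+1) + (b - (i+1))).choose m) := by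
        intro i hi
        simp only [mem_range] at hi
        congr 3
        omega
      rw [Finset.sum_congr rfl h3]
      have h4 : ((b+1).choose 0 : ℤ) = (b.choose 0 : ℤ) := by simp
      have h5 : c + (b + 1 - 0) = c + 1 + (b - 0) := by omega
      rw [Nat.choose_succ_self, h5]
      simp
    have e1 : ∑ i ∈ range (b+1), -((-1:ℤ)^i * (b.choose i) * ((c + (b - i)).choose m))
        = -(if b ≤ m then ((c.choose (m - b)) : ℤ) else 0) := by
      rw [← ih c m, ← Finset.sum_neg_distrib]
    rw [add_assoc, e2, ih (c+1) m, e1]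
    rcases le_or_gt (b+1) m with h | h
    · have hb : b ≤ m := by omega
      simp only [hb, if_pos, h, if_pos]
      have h6 : m - b = (m - (b+1)) + 1 := by omega
      rw [h6, Nat.choose_succ_succ]
      push_cast
      ring
    · rcases le_or_gt b m with h7 | h7
      · have h8 : m = b := by omega
        simp [h8, Nat.not_succ_le_self]
      · simp [Nat.not_le.mpr h7, Nat.not_le.mpr (by omega : m < b + 1)]

private lemma lemB (l q b : ℕ) (hb : b ≤ l + q) :
    ∑ j ∈ range (q+1), (-1:ℤ)^j * (b.choose j) * ((l + (q - j)).choose l)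
      = ((l + q - b).choose q : ℤ) := by
  have e1 : ∑ j ∈ range (q+1), (-1:ℤ)^j * (b.choose j) * ((l + (q - j)).choose l)
      = ∑ j ∈ range (q+1), (-1:ℤ)^j * (b.choose j) * ((l + q - j).choose l) := by
    refine Finset.sum_congr rfl fun j hj => ?_
    simp only [mem_range] at hj
    congr 3
    omega
  have e2 : ∑ j ∈ range (q+1), (-1:ℤ)^j * (b.choose j) * ((l + q - j).choose l)
      = ∑ j ∈ range (q+1+b), (-1:ℤ)^j * (b.choose j) * ((l + q - j).choose l) := by
    refine Finset.sum_subset (Finset.range_subset_range.mpr (by omega)) fun x hx hnx => ?_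
    simp only [mem_range] at hx hnx
    push_neg at hnx
    rcases le_or_gt x b with hxb | hxb
    · rw [Nat.choose_eq_zero_of_lt (show l + q - x < l by omega)]
      ring
    · rw [Nat.choose_eq_zero_of_lt hxb]
      ring
  have e3 : ∑ j ∈ range (b+1), (-1:ℤ)^j * (b.choose j) * (((l + q - b) + (b - j)).choose l)
      = ∑ j ∈ range (q+1+b), (-1:ℤ)^j * (b.choose j) * ((l + q - j).choose l) := by
    rw [show ∑ j ∈ range (b+1), (-1:ℤ)^j * (b.choose j) * (((l + q - b) + (b - j)).choose l)
        = ∑ j ∈ range (b+1), (-1:ℤ)^j * (b.choose j) * ((l + q - j).choose l) from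
      Finset.sum_congr rfl fun j hj => by
        simp only [mem_range] at hj
        congr 3
        omega]
    refine Finset.sum_subset (Finset.range_subset_range.mpr (by omega)) fun x hx hnx => ?_
    simp only [mem_range] at hx hnx
    push_neg at hnx
    rw [Nat.choose_eq_zero_of_lt (show b < x by omega)]
    ring
  rw [e1, e2, ← e3, lemA b (l + q - b) l]
  rcases le_or_gt b l with h | h
  · rw [if_pos h]
    have h2 : l - b = (l + q - b) - q := by omega
    rw [h2, Nat.choose_symm (by omega)]
  · rw [if_neg (by omega), Nat.choose_eq_zero_of_lt (show l + q - b < q by omega)]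
    simp

private lemma lemKey (l q a t θ : ℕ) (h : θ + (t + 1) = l + (q+1) + a) :
    ∑ s ∈ range (q+1), (-1:ℤ)^(q-s) * ((l+s).choose l) * ((a + (q-s)).choose a)
        * (t.choose (a + (q-s)))
      = (θ.choose q : ℤ) * (t.choose a) := by
  have refl1 : ∑ s ∈ range (q+1), (-1:ℤ)^(q-s) * ((l+s).choose l) * ((a + (q-s)).choose a)
        * (t.choose (a + (q-s)))
      = ∑ j ∈ range (q+1), (-1:ℤ)^j * ((l+(q-j)).choose l) * ((a + j).choose a)
        * (t.choose (a + j)) := by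
    rw [← Finset.sum_range_reflect
      (fun j => (-1:ℤ)^j * ((l+(q-j)).choose l) * ((a + j).choose a) * (t.choose (a + j))) (q+1)]
    refine Finset.sum_congr rfl fun s hs => ?_
    simp only [mem_range] at hs
    have h1 : q + 1 - 1 - s = q - s := by omega
    have h2 : q - (q - s) = s := by omega
    rw [h1, h2]
  rw [refl1]
  have tri : ∀ j ∈ range (q+1),
      (-1:ℤ)^j * ((l+(q-j)).choose l) * ((a + j).choose a) * (t.choose (a + j))
      = (t.choose a : ℤ) * ((-1:ℤ)^j * ((t - a).choose j) * ((l+(q-j)).choose l)) := by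
    intro j hj
    have h3 := trinom t a j
    calc (-1:ℤ)^j * ((l+(q-j)).choose l) * ((a + j).choose a) * (t.choose (a + j))
        = ((-1:ℤ)^j * ((l+(q-j)).choose l)) * (((a + j).choose a : ℤ) * (t.choose (a + j))) := by
          ring
      _ = ((-1:ℤ)^j * ((l+(q-j)).choose l)) * ((t.choose a : ℤ) * ((t - a).choose j)) := by
          rw [h3]
      _ = (t.choose a : ℤ) * ((-1:ℤ)^j * ((t - a).choose j) * ((l+(q-j)).choose l)) := by
          ring
  rw [Finset.sum_congr rfl tri, ← Finset.mul_sum, lemB l q (t - a) (by omega)]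
  rcases le_or_gt a t with hat | hat
  · have h4 : l + q - (t - a) = θ := by omega
    rw [h4]
    ring
  · rw [Nat.choose_eq_zero_of_lt hat]
    simp

private lemma lemL2 (l q a : ℕ) : ∀ t θ : ℕ, θ + t = l + (q+1) + a →
    ∑ s ∈ range (q+1), (θ.choose s : ℤ) * (t.choose (a + (q-s) + 1))
      = ∑ s ∈ range (q+1), (-1:ℤ)^(q-s) * ((l+s).choose l) * ((a + (q-s)).choose a)
          * (t.choose (a + (q-s) + 1)) := by
  intro t
  induction t with
  | zero =>
    intro θ h
    simp
  | succ t ih =>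
    intro θ h
    have e1 : ∀ s ∈ range (q+1),
        (θ.choose s : ℤ) * ((t+1).choose (a + (q-s) + 1))
        = (θ.choose s : ℤ) * (t.choose (a + (q-s)))
          + (θ.choose s : ℤ) * (t.choose (a + (q-s) + 1)) := by
      intro s hs
      rw [Nat.choose_succ_succ]
      push_cast
      ring
    have e2 : ∀ s ∈ range (q+1),
        (-1:ℤ)^(q-s) * ((l+s).choose l) * ((a + (q-s)).choose a) * ((t+1).choose (a + (q-s) + 1))
        = (-1:ℤ)^(q-s) * ((l+s).choose l) * ((a + (q-s)).choose a) * (t.choose (a + (q-s)))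
          + (-1:ℤ)^(q-s) * ((l+s).choose l) * ((a + (q-s)).choose a) * (t.choose (a + (q-s) + 1)) := by
      intro s hs
      rw [Nat.choose_succ_succ]
      push_cast
      ring
    rw [Finset.sum_congr rfl e1, Finset.sum_congr rfl e2,
      Finset.sum_add_distrib, Finset.sum_add_distrib]
    have hKey := lemKey l q a t θ (by omega)
    have hIH := ih (θ+1) (by omega)
    have hS1 : ∑ s ∈ range (q+1), (θ.choose s : ℤ) * (t.choose (a + (q-s)))
        = (∑ i ∈ range q, (θ.choose i : ℤ) * (t.choose (a + (q-i))))
          + (θ.choose q : ℤ) * (t.choose a) := by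
      rw [Finset.sum_range_succ]
      simp
    have hsplit : ∑ s ∈ range (q+1), ((θ+1).choose s : ℤ) * (t.choose (a + (q-s) + 1))
        = (∑ i ∈ range q, (θ.choose i : ℤ) * (t.choose (a + (q-i))))
          + ∑ s ∈ range (q+1), (θ.choose s : ℤ) * (t.choose (a + (q-s) + 1)) := by
      rw [Finset.sum_range_succ'
        (fun s => ((θ+1).choose s : ℤ) * (t.choose (a + (q-s) + 1))) q]
      rw [Finset.sum_range_succ'
        (fun s => ((θ).choose s : ℤ) * (t.choose (a + (q-s) + 1))) q]
      have h5 : ∀ i ∈ range q,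
          ((θ+1).choose (i+1) : ℤ) * (t.choose (a + (q-(i+1)) + 1))
          = (θ.choose i : ℤ) * (t.choose (a + (q-i)))
            + (θ.choose (i+1) : ℤ) * (t.choose (a + (q-(i+1)) + 1)) := by
        intro i hi
        simp only [mem_range] at hi
        rw [Nat.choose_succ_succ θ i]
        have h6 : a + (q-(i+1)) + 1 = a + (q - i) := by omega
        rw [h6]
        push_cast
        ring
      rw [Finset.sum_congr rfl h5, Finset.sum_add_distrib]
      simp only [Nat.choose_zero_right, Nat.cast_one, one_mul]
      ring
    rw [hIH] at hsplit
    rw [hKey, hS1]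
    linarith [hsplit]

/-- For `p ≥ 1`, `ℓ + p ≤ n`, `θ ≤ n`, with `k = ℓ + p`:
`Σ_{s=0}^{p−1} C(θ,s)·C(n−θ,(n−ℓ)−s)
  = Σ_{ξ=ℓ+1}^{k} (−1)^{k+ξ}·C(ξ−1,ℓ)·C(n−ξ,n−k)·C(n−θ,(n+1)−ξ)` in `ℤ`. -/
theorem dof_coeff_identity_ell (n l p θ : ℕ) (hp : 1 ≤ p) (hlp : l + p ≤ n)
    (hθ : θ ≤ n) :
    ∑ s ∈ Finset.range p,
      (Nat.choose θ s : ℤ) * (Nat.choose (n - θ) ((n - l) - s) : ℤ) =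
      ∑ ξ ∈ Finset.Icc (l + 1) (l + p),
        (-1 : ℤ) ^ ((l + p) + ξ) * (Nat.choose (ξ - 1) l : ℤ) *
          (Nat.choose (n - ξ) (n - (l + p)) : ℤ) *
          (Nat.choose (n - θ) ((n + 1) - ξ) : ℤ) := by
  obtain ⟨a, rfl⟩ : ∃ a, n = l + p + a := ⟨n - (l+p), by omega⟩
  obtain ⟨q, rfl⟩ : ∃ q, p = q + 1 := ⟨p - 1, by omega⟩
  rw [← Finset.Ico_add_one_right_eq_Icc, Finset.sum_Ico_eq_sum_range]
  have hrange : l + (q+1) + 1 - (l+1) = q + 1 := by omega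
  rw [hrange]
  have hL : ∀ s ∈ range (q+1),
      (θ.choose s : ℤ) * (((l + (q+1) + a - θ).choose (l + (q+1) + a - l - s)) : ℤ)
      = (θ.choose s : ℤ) * (((l + (q+1) + a - θ).choose (a + (q-s) + 1)) : ℤ) := by
    intro s hs
    simp only [mem_range] at hs
    rw [show l + (q+1) + a - l - s = a + (q-s) + 1 from by omega]
  have hR : ∀ i ∈ range (q+1),
      (-1 : ℤ) ^ ((l + (q+1)) + (l + 1 + i)) * (((l + 1 + i - 1).choose l : ℕ) : ℤ) *
          (((l + (q+1) + a - (l + 1 + i)).choose (l + (q+1) + a - (l + (q+1))) : ℕ) : ℤ) *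
          (((l + (q+1) + a - θ).choose (l + (q+1) + a + 1 - (l + 1 + i)) : ℕ) : ℤ)
      = (-1:ℤ)^(q-i) * ((l+i).choose l) * ((a + (q-i)).choose a)
          * ((l + (q+1) + a - θ).choose (a + (q-i) + 1)) := by
    intro i hi
    simp only [mem_range] at hi
    rw [negpow (show ((l + (q+1)) + (l + 1 + i)) % 2 = (q - i) % 2 by omega),
      show l + 1 + i - 1 = l + i from by omega,
      show l + (q+1) + a - (l + 1 + i) = a + (q - i) from by omega,
      show l + (q+1) + a - (l + (q+1)) = a from by omega,
      show l + (q+1) + a + 1 - (l + 1 + i) = a + (q - i) + 1 from by omega]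
  rw [Finset.sum_congr rfl hL, Finset.sum_congr rfl hR]
  exact lemL2 l q a (l + (q+1) + a - θ) θ (by omega)
end

section
/- Let n, ℓ, p, θ be natural numbers with p ≥ 1, ℓ + p ≤ n and θ ≤ n, and set k = ℓ + p. Then in ℤ: Σ_{s=0}^{p−1} C(θ, s) · C(n−θ, k−s) = Σ_{ξ=ℓ+1}^{k} (−1)^{ℓ+ξ+1} · C(ξ−1, ℓ) · C(n−ξ, n−k) · C(n−θ, ξ). (All subtractions in the arguments of binomial coefficients are genuine natural-number subtractions within the stated ranges.) -/
private lemma key_alt (a : ℕ) : ∀ q N : ℕ, a ≤ N →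
    ∑ j ∈ Finset.range (q+1), (-1:ℤ)^j * (a.choose j) * ((N-j).choose (q-j))
      = ((N-a).choose q) := by
  induction a with
  | zero =>
    intro q N _
    rw [Finset.sum_eq_single 0]
    · simp
    · intro b _ hb
      rcases Nat.exists_eq_succ_of_ne_zero hb with ⟨c, rfl⟩
      simp
    · simp
  | succ a ih =>
    intro q N h
    cases q with
    | zero => simp
    | succ q =>
      have ha : a ≤ N := le_trans (Nat.le_succ a) h
      have ha' : a ≤ N - 1 := by omega
      rw [Finset.sum_range_succ']
      have split : ∀ j, (-1:ℤ)^(j+1) * ((a+1).choose (j+1)) * ((N-(j+1)).choose (q+1-(j+1)))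
          = (-1:ℤ)^(j+1) * (a.choose (j+1)) * ((N-(j+1)).choose (q+1-(j+1)))
            + (-1:ℤ)^(j+1) * (a.choose j) * ((N-1-j).choose (q-j)) := by
        intro j
        have e1 : N - (j+1) = N - 1 - j := by omega
        have e2 : q + 1 - (j+1) = q - j := by omega
        rw [e1, e2, Nat.choose_succ_succ]
        push_cast
        simp only [Nat.succ_eq_add_one]
        ring
      rw [Finset.sum_congr rfl (fun j _ => split j), Finset.sum_add_distrib]
      have p1 : ∑ j ∈ Finset.range (q+1), (-1:ℤ)^(j+1) * (a.choose (j+1)) * ((N-(j+1)).choose (q+1-(j+1)))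
            + (-1:ℤ)^0 * ((a+1).choose 0 : ℕ) * ((N-0).choose (q+1-0) : ℕ)
          = ((N-a).choose (q+1)) := by
        have := ih (q+1) N ha
        rw [Finset.sum_range_succ'] at this
        rw [← this]
        norm_num
      have p2 : ∑ j ∈ Finset.range (q+1), (-1:ℤ)^(j+1) * (a.choose j) * ((N-1-j).choose (q-j))
          = -(((N-1-a).choose q)) := by
        rw [← ih q (N-1) ha']
        rw [← Finset.sum_neg_distrib]
        apply Finset.sum_congr rfl
        intro j _
        ring
      rw [add_right_comm, p1, p2]
      have hN : N - a = (N - 1 - a) + 1 := by omega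
      have hN' : N - (a+1) = N - 1 - a := by omega
      rw [hN, hN', Nat.choose_succ_succ]
      push_cast
      simp only [Nat.succ_eq_add_one]
      ring

private lemma choose_mul_aux (m l j : ℕ) :
    m.choose (l+j) * (l+j).choose l = m.choose l * (m-l).choose j := by
  by_cases h : l + j ≤ m
  · have := Nat.choose_mul (n := m) (Nat.le_add_right l j)
    rwa [Nat.add_sub_cancel_left] at this
  · push_neg at h
    rw [Nat.choose_eq_zero_of_lt h]
    by_cases h2 : l ≤ m
    · rw [Nat.choose_eq_zero_of_lt (show m - l < j by omega)]; ring
    · rw [Nat.choose_eq_zero_of_lt (show m < l by omega)]; ring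

private lemma rhs_diff (n l p m : ℕ) (hp : 1 ≤ p) (hlp : l + p ≤ n) (hm : m + 1 ≤ n) :
    ∑ ξ ∈ Finset.Icc (l+1) (l+p),
        (-1:ℤ)^(l+ξ+1) * ((ξ-1).choose l) * ((n-ξ).choose (n-(l+p))) * (m.choose (ξ-1))
      = ((n-m-1).choose (p-1)) * (m.choose l) := by
  rw [← Finset.Ico_add_one_right_eq_Icc, Finset.sum_Ico_eq_sum_range]
  have hrange : l + p + 1 - (l + 1) = p := by omega
  rw [hrange]
  set N := n - l - 1 with hN
  set q := p - 1 with hq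
  have hterm : ∀ j ∈ Finset.range p,
      (-1:ℤ)^(l+(l+1+j)+1) * (((l+1+j)-1).choose l) * ((n-(l+1+j)).choose (n-(l+p))) * (m.choose ((l+1+j)-1))
      = (m.choose l) * ((-1:ℤ)^j * ((m-l).choose j) * ((N-j).choose (q-j))) := by
    intro j hj
    rw [Finset.mem_range] at hj
    have e1 : l + 1 + j - 1 = l + j := by omega
    have e2 : n - (l+1+j) = N - j := by omega
    have e3 : (-1:ℤ)^(l+(l+1+j)+1) = (-1:ℤ)^j := by
      rw [show l+(l+1+j)+1 = 2*(l+1)+j by ring, pow_add, pow_mul]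
      norm_num
    have e4 : (N-j).choose (n-(l+p)) = (N-j).choose (q-j) := by
      have hle : n - (l+p) ≤ N - j := by omega
      rw [← Nat.choose_symm hle, show N - j - (n-(l+p)) = q - j by omega]
    rw [e1, e2, e3, e4]
    have e5 : (m.choose (l+j) : ℤ) * ((l+j).choose l) = (m.choose l) * ((m-l).choose j) := by
      exact_mod_cast congrArg (Nat.cast : ℕ → ℤ) (choose_mul_aux m l j)
    calc (-1:ℤ)^j * ((l+j).choose l) * ((N-j).choose (q-j)) * (m.choose (l+j))
        = ((m.choose (l+j) : ℤ) * ((l+j).choose l)) * ((-1:ℤ)^j * ((N-j).choose (q-j))) := by ring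
      _ = ((m.choose l : ℤ) * ((m-l).choose j)) * ((-1:ℤ)^j * ((N-j).choose (q-j))) := by rw [e5]
      _ = (m.choose l) * ((-1:ℤ)^j * ((m-l).choose j) * ((N-j).choose (q-j))) := by ring
  rw [Finset.sum_congr rfl hterm, ← Finset.mul_sum]
  have hp' : p = q + 1 := by omega
  rw [hp']
  rw [key_alt (m-l) q N (by omega)]
  by_cases hml : l ≤ m
  · rw [show N - (m-l) = n - m - 1 by omega]
    ring
  · rw [Nat.choose_eq_zero_of_lt (show m < l by omega)]
    simp

private lemma lhs_diff (θ m l r : ℕ) :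
    ∑ s ∈ Finset.range (r+1), (θ.choose s : ℤ) * ((m+1).choose (l+r+1-s))
    = ∑ s ∈ Finset.range (r+1), ((θ+1).choose s : ℤ) * (m.choose (l+r+1-s))
      + (θ.choose r : ℤ) * (m.choose l) := by
  have hL : ∑ s ∈ Finset.range (r+1), (θ.choose s : ℤ) * ((m+1).choose (l+r+1-s))
      = ∑ s ∈ Finset.range (r+1), ((θ.choose s : ℤ) * (m.choose (l+r-s))
          + (θ.choose s : ℤ) * (m.choose (l+r+1-s))) := by
    apply Finset.sum_congr rfl
    intro s hs
    rw [Finset.mem_range] at hs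
    have e : l + r + 1 - s = (l + r - s) + 1 := by omega
    rw [e, Nat.choose_succ_succ]
    push_cast
    ring
  rw [hL, Finset.sum_add_distrib]
  rw [Finset.sum_range_succ (fun s => (θ.choose s : ℤ) * (m.choose (l+r-s))) r]
  rw [Finset.sum_range_succ' (fun s => (θ.choose s : ℤ) * (m.choose (l+r+1-s))) r]
  rw [Finset.sum_range_succ' (fun s => ((θ+1).choose s : ℤ) * (m.choose (l+r+1-s))) r]
  have e0 : l + r - r = l := by omega
  rw [e0]
  have hshift : ∀ s ∈ Finset.range r,
      ((θ+1).choose (s+1) : ℤ) * (m.choose (l+r+1-(s+1)))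
      = (θ.choose s : ℤ) * (m.choose (l+r-s)) + (θ.choose (s+1) : ℤ) * (m.choose (l+r+1-(s+1))) := by
    intro s hs
    rw [Nat.choose_succ_succ, show l+r+1-(s+1) = l+r-s by omega]
    push_cast
    ring
  rw [Finset.sum_congr rfl hshift, Finset.sum_add_distrib]
  have hshift2 : ∀ s ∈ Finset.range r,
      (θ.choose (s+1) : ℤ) * (m.choose (l+r+1-(s+1)))
      = (θ.choose (s+1) : ℤ) * (m.choose (l+r-s)) := by
    intro s hs
    rw [show l+r+1-(s+1) = l+r-s by omega]
  rw [Finset.sum_congr rfl hshift2]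
  simp only [Nat.choose_zero_right, Nat.cast_one]
  ring

/-- For `p ≥ 1`, `ℓ + p ≤ n`, `θ ≤ n`, with `k = ℓ + p`:
`Σ_{s=0}^{p−1} C(θ,s)·C(n−θ,k−s)
  = Σ_{ξ=ℓ+1}^{k} (−1)^{ℓ+ξ+1}·C(ξ−1,ℓ)·C(n−ξ,n−k)·C(n−θ,ξ)` in `ℤ`. -/
theorem dof_coeff_identity_k (n l p θ : ℕ) (hp : 1 ≤ p) (hlp : l + p ≤ n)
    (hθ : θ ≤ n) :
    ∑ s ∈ Finset.range p,
      (Nat.choose θ s : ℤ) * (Nat.choose (n - θ) ((l + p) - s) : ℤ) =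
      ∑ ξ ∈ Finset.Icc (l + 1) (l + p),
        (-1 : ℤ) ^ (l + ξ + 1) * (Nat.choose (ξ - 1) l : ℤ) *
          (Nat.choose (n - ξ) (n - (l + p)) : ℤ) * (Nat.choose (n - θ) ξ : ℤ) := by
  suffices H : ∀ d θ', θ' ≤ n → n - θ' = d →
      ∑ s ∈ Finset.range p,
        (Nat.choose θ' s : ℤ) * (Nat.choose (n - θ') ((l + p) - s) : ℤ) =
      ∑ ξ ∈ Finset.Icc (l + 1) (l + p),
        (-1 : ℤ) ^ (l + ξ + 1) * (Nat.choose (ξ - 1) l : ℤ) *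
          (Nat.choose (n - ξ) (n - (l + p)) : ℤ) * (Nat.choose (n - θ') ξ : ℤ) by
    exact H (n - θ) θ hθ rfl
  intro d
  induction d with
  | zero =>
    intro θ' hθ' hd
    have hθn : n - θ' = 0 := hd
    rw [hθn]
    rw [Finset.sum_eq_zero, Finset.sum_eq_zero]
    · intro ξ hξ
      rw [Finset.mem_Icc] at hξ
      rw [Nat.choose_eq_zero_of_lt (show 0 < ξ by omega)]
      ring
    · intro s hs
      rw [Finset.mem_range] at hs
      rw [Nat.choose_eq_zero_of_lt (show 0 < l + p - s by omega)]
      ring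
  | succ d ih =>
    intro θ' hθ' hd
    have hθ1 : θ' + 1 ≤ n := by omega
    set m := n - (θ' + 1) with hm
    have hnθ : n - θ' = m + 1 := by omega
    have hmn : m + 1 ≤ n := by omega
    have IH := ih (θ' + 1) hθ1 (by omega)
    obtain ⟨r, rfl⟩ : ∃ r, p = r + 1 := ⟨p - 1, by omega⟩
    have key2 := rhs_diff n l (r+1) m hp hlp hmn
    rw [show (r+1)-1 = r by omega, show n - m - 1 = θ' by omega] at key2
    rw [← hm] at IH
    rw [hnθ]
    simp only [← Nat.add_assoc] at IH key2 ⊢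
    rw [lhs_diff θ' m l r]
    have hR : ∑ ξ ∈ Finset.Icc (l + 1) (l + r + 1),
        (-1 : ℤ) ^ (l + ξ + 1) * ((ξ - 1).choose l : ℤ) *
          ((n - ξ).choose (n - (l + r + 1)) : ℤ) * ((m+1).choose ξ : ℤ)
        = ∑ ξ ∈ Finset.Icc (l + 1) (l + r + 1),
        (-1 : ℤ) ^ (l + ξ + 1) * ((ξ - 1).choose l : ℤ) *
          ((n - ξ).choose (n - (l + r + 1)) : ℤ) * (m.choose ξ : ℤ)
        + ∑ ξ ∈ Finset.Icc (l + 1) (l + r + 1),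
        (-1 : ℤ) ^ (l + ξ + 1) * ((ξ - 1).choose l : ℤ) *
          ((n - ξ).choose (n - (l + r + 1)) : ℤ) * (m.choose (ξ-1) : ℤ) := by
      rw [← Finset.sum_add_distrib]
      apply Finset.sum_congr rfl
      intro ξ hξ
      rw [Finset.mem_Icc] at hξ
      rw [show ξ = (ξ - 1) + 1 by omega, Nat.choose_succ_succ]
      rw [show ξ - 1 + 1 - 1 = ξ - 1 by omega]
      push_cast
      ring
    rw [hR, key2, IH]
end

section
/- Let n, ℓ, k be natural numbers with ℓ < k ≤ n. Then in ℤ: Σ_{ξ=ℓ+1}^{k} (−1)^ξ · C(ξ−1, ℓ) · C(n−ξ, n−k) · C(n+1, ξ) = (−1)^{ℓ+1} · C(n, k) + (−1)^k · C(n, ℓ). -/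
open Finset

/-- Partial alternating sum of a binomial row. -/
lemma partial_alt (M L : ℕ) :
    ∑ a ∈ range (L + 1), (-1 : ℤ) ^ a * ((M + 1).choose a) = (-1) ^ L * (M.choose L) := by
  induction L with
  | zero => simp
  | succ L ih =>
    rw [Finset.sum_range_succ, ih]
    have h := Nat.choose_succ_succ M L
    push_cast [h]
    ring

/-- Trinomial revision: `C(m,i)·C(m-i,b) = C(m,b)·C(m-b,i)` for `i ≤ m`. -/
lemma tri (m i b : ℕ) (him : i ≤ m) :
    m.choose i * (m - i).choose b = m.choose b * (m - b).choose i := by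
  rcases le_or_gt b (m - i) with h | h
  · have hib : i ≤ m - b := by omega
    rw [← Nat.choose_symm him, Nat.choose_mul h]
    congr 1
    rw [show m - i - b = (m - b) - i by omega, Nat.choose_symm hib]
  · rcases le_or_gt b m with hbm | hbm
    · rw [Nat.choose_eq_zero_of_lt h, Nat.choose_eq_zero_of_lt (show m - b < i by omega)]
      ring
    · rw [Nat.choose_eq_zero_of_lt h, Nat.choose_eq_zero_of_lt hbm]
      ring

lemma Qzero (N a b : ℕ) (hab : a + b < N) :
    ∑ ξ ∈ range (N + 1),
      (-1 : ℤ) ^ ξ * (N.choose ξ) * (ξ.choose a) * ((N - ξ).choose b) = 0 := by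
  have ha : a ≤ N + 1 := by omega
  rw [range_eq_Ico, ← Finset.sum_Ico_consecutive _ (Nat.zero_le a) ha]
  have h1 : ∑ ξ ∈ Finset.Ico 0 a,
      (-1 : ℤ) ^ ξ * (N.choose ξ) * (ξ.choose a) * ((N - ξ).choose b) = 0 := by
    apply Finset.sum_eq_zero
    intro ξ hξ
    rw [Nat.choose_eq_zero_of_lt (Finset.mem_Ico.mp hξ).2]
    push_cast; ring
  rw [h1, zero_add, Finset.sum_Ico_eq_sum_range]
  have key : ∀ i ∈ range (N + 1 - a),
      (-1 : ℤ) ^ (a + i) * (N.choose (a + i)) * ((a + i).choose a) * ((N - (a + i)).choose b)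
      = ((-1) ^ a * (N.choose a) * ((N - a).choose b)) * ((-1) ^ i * ((N - a - b).choose i)) := by
    intro i hi
    have hi' : i ≤ N - a := by simp only [mem_range] at hi; omega
    have h2 : N.choose (a + i) * (a + i).choose a = N.choose a * (N - a).choose i := by
      rw [Nat.choose_mul (Nat.le_add_right a i), Nat.add_sub_cancel_left]
    have h3 := tri (N - a) i b hi'
    have h4 : N - (a + i) = N - a - i := by omega
    have h5 : (N.choose (a + i) : ℤ) * ((a + i).choose a) = (N.choose a : ℤ) * ((N - a).choose i) := by
      exact_mod_cast congrArg (Nat.cast : ℕ → ℤ) h2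
    have h6 : ((N - a).choose i : ℤ) * ((N - a - i).choose b)
        = ((N - a).choose b : ℤ) * ((N - a - b).choose i) := by
      exact_mod_cast congrArg (Nat.cast : ℕ → ℤ) h3
    rw [pow_add, h4]
    linear_combination ((-1 : ℤ) ^ a * (-1) ^ i * (((N - a - i).choose b : ℤ))) * h5
      + ((-1 : ℤ) ^ a * (-1) ^ i * ((N.choose a : ℤ))) * h6
  rw [Finset.sum_congr rfl key, ← Finset.mul_sum]
  have hM : ∑ i ∈ range (N + 1 - a), (-1 : ℤ) ^ i * ((N - a - b).choose i) = 0 := by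
    have hsub : range (N - a - b + 1) ⊆ range (N + 1 - a) := by
      apply range_subset_range.mpr; omega
    rw [← Finset.sum_subset hsub (by
      intro x hx hnx
      simp only [mem_range] at hx hnx
      rw [Nat.choose_eq_zero_of_lt (by omega)]
      ring)]
    exact Int.alternating_sum_range_choose_of_ne (by omega)
  rw [hM, mul_zero]

lemma sign_sq (m : ℕ) : (-1 : ℤ) ^ m * (-1) ^ m = 1 := by
  rw [← pow_add, ← two_mul, pow_mul]
  norm_num

/-- For `ℓ < k ≤ n`:
`Σ_{ξ=ℓ+1}^{k} (−1)^ξ·C(ξ−1,ℓ)·C(n−ξ,n−k)·C(n+1,ξ)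
  = (−1)^{ℓ+1}·C(n,k) + (−1)^k·C(n,ℓ)` in `ℤ`. -/
theorem alternating_triple_binomial_sum (n l k : ℕ) (hlk : l < k) (hk : k ≤ n) :
    ∑ ξ ∈ Finset.Icc (l + 1) k,
      (-1 : ℤ) ^ ξ * (Nat.choose (ξ - 1) l : ℤ) * (Nat.choose (n - ξ) (n - k) : ℤ) *
        (Nat.choose (n + 1) ξ : ℤ)
      = (-1 : ℤ) ^ (l + 1) * (Nat.choose n k : ℤ) +
        (-1 : ℤ) ^ k * (Nat.choose n l : ℤ) := by
  set t : ℕ → ℤ := fun ξ =>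
    (-1 : ℤ) ^ ξ * (Nat.choose (ξ - 1) l : ℤ) * (Nat.choose (n - ξ) (n - k) : ℤ) *
        (Nat.choose (n + 1) ξ : ℤ) with ht
  -- Step 1: extend the summation range to `Icc 1 n`.
  have hstep1 : ∑ ξ ∈ Finset.Icc (l + 1) k, t ξ = ∑ ξ ∈ Finset.Icc 1 n, t ξ := by
    apply Finset.sum_subset
    · intro x hx
      simp only [mem_Icc] at hx ⊢
      omega
    · intro x hx hnx
      simp only [mem_Icc] at hx hnx
      rcases le_or_gt x l with h | h
      · rw [ht]; dsimp only
        rw [Nat.choose_eq_zero_of_lt (show x - 1 < l by omega)]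
        push_cast; ring
      · rw [ht]; dsimp only
        rw [Nat.choose_eq_zero_of_lt (show n - x < n - k by omega)]
        push_cast; ring
  -- the middle sum in range form
  have hstep2 : ∑ ξ ∈ Finset.Icc 1 n, t ξ = ∑ i ∈ range n, t (1 + i) := by
    rw [← Finset.Ico_add_one_right_eq_Icc, Finset.sum_Ico_eq_sum_range, Nat.add_sub_cancel]
  -- auxiliary functions
  set F : ℕ → ℤ := fun ξ => ∑ a ∈ range (l + 1), (-1 : ℤ) ^ a * (ξ.choose a) with hF
  set G : ℕ → ℤ := fun ξ => ∑ b ∈ range (n - k + 1), (-1 : ℤ) ^ b * ((n + 1 - ξ).choose b) with hG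
  -- Claim A: the extended sum vanishes.
  have hPzero : ∑ ξ ∈ range (n + 2), (-1 : ℤ) ^ ξ * ((n + 1).choose ξ) * F ξ * G ξ = 0 := by
    have hexp : ∀ ξ ∈ range (n + 2), (-1 : ℤ) ^ ξ * ((n + 1).choose ξ) * F ξ * G ξ
        = ∑ a ∈ range (l + 1), ∑ b ∈ range (n - k + 1),
            (-1 : ℤ) ^ a * (-1) ^ b *
              ((-1) ^ ξ * ((n + 1).choose ξ) * (ξ.choose a) * ((n + 1 - ξ).choose b)) := by
      intro ξ _
      rw [hF, hG]; dsimp only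
      rw [Finset.mul_sum]
      rw [Finset.sum_comm]
      apply Finset.sum_congr rfl
      intro b _
      simp only [Finset.mul_sum, Finset.sum_mul]
      apply Finset.sum_congr rfl
      intro a _
      ring
    rw [Finset.sum_congr rfl hexp, Finset.sum_comm]
    apply Finset.sum_eq_zero
    intro a ha
    rw [Finset.sum_comm]
    apply Finset.sum_eq_zero
    intro b hb
    simp only [mem_range] at ha hb
    rw [← Finset.mul_sum]
    have := Qzero (n + 1) a b (by omega)
    rw [this, mul_zero]
  -- Claim B: evaluate the extended sum.
  have hF0 : F 0 = 1 := by
    rw [hF]; dsimp only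
    rw [Finset.sum_eq_single 0]
    · simp
    · intro a _ ha; rw [Nat.choose_eq_zero_of_lt (by omega)]; ring
    · intro h; simp at h
  have hGtop : G (n + 1) = 1 := by
    rw [hG]; dsimp only
    rw [Finset.sum_eq_single 0]
    · simp
    · intro b _ hb
      rw [show n + 1 - (n + 1) = 0 by omega, Nat.choose_eq_zero_of_lt (by omega)]; ring
    · intro h; simp at h
  have hG0 : G 0 = (-1) ^ (n - k) * (n.choose k) := by
    rw [hG]; dsimp only
    rw [show n + 1 - 0 = n + 1 by omega, partial_alt n (n - k), Nat.choose_symm hk]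
  have hFtop : F (n + 1) = (-1) ^ l * (n.choose l) := by
    rw [hF]; dsimp only
    exact partial_alt n l
  have hFmid : ∀ i, F (1 + i) = (-1) ^ l * (i.choose l) := by
    intro i
    rw [hF]; dsimp only
    rw [show 1 + i = i + 1 by omega]
    exact partial_alt i l
  have hGmid : ∀ i, i < n → G (1 + i) = (-1) ^ (n - k) * ((n - (1 + i)).choose (n - k)) := by
    intro i hi
    rw [hG]; dsimp only
    rw [show n + 1 - (1 + i) = (n - (1 + i)) + 1 by omega]
    exact partial_alt (n - (1 + i)) (n - k)
  have hPval : ∑ ξ ∈ range (n + 2), (-1 : ℤ) ^ ξ * ((n + 1).choose ξ) * F ξ * G ξ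
      = (-1) ^ (n - k) * (n.choose k)
        + (-1) ^ l * (-1) ^ (n - k) * (∑ i ∈ range n, t (1 + i))
        + (-1) ^ (n + 1) * ((-1) ^ l * (n.choose l)) := by
    rw [show n + 2 = (n + 1) + 1 from rfl, Finset.sum_range_succ, Finset.sum_range_succ']
    have hmid : ∀ i ∈ range n,
        (-1 : ℤ) ^ (i + 1) * ((n + 1).choose (i + 1)) * F (i + 1) * G (i + 1)
        = (-1) ^ l * (-1) ^ (n - k) * t (1 + i) := by
      intro i hi
      simp only [mem_range] at hi
      rw [show i + 1 = 1 + i by omega, hFmid i, hGmid i hi, ht]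
      dsimp only
      rw [show 1 + i - 1 = i by omega]
      ring
    rw [Finset.sum_congr rfl hmid, ← Finset.mul_sum, hF0, hG0, hFtop, hGtop,
      Nat.choose_zero_right, Nat.choose_self]
    push_cast
    ring
  -- combine
  rw [hstep1, hstep2]
  set S : ℤ := ∑ i ∈ range n, t (1 + i) with hS
  have hE : (-1 : ℤ) ^ (n - k) * (n.choose k)
      + (-1) ^ l * (-1) ^ (n - k) * S
      + (-1) ^ (n + 1) * ((-1) ^ l * (n.choose l)) = 0 := by
    rw [← hPval]; exact hPzero
  have hw : (-1 : ℤ) ^ (n - k) * (-1) ^ k = (-1) ^ n := by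
    rw [← pow_add, show n - k + k = n by omega]
  have hp := sign_sq l
  have hq := sign_sq k
  have hwsq := sign_sq (n - k)
  have hn1 : (-1 : ℤ) ^ (n + 1) = (-1) ^ n * (-1) := pow_succ _ _
  have hl1 : (-1 : ℤ) ^ (l + 1) = (-1) ^ l * (-1) := pow_succ _ _
  rw [hl1]
  rw [hn1, ← hw] at hE
  linear_combination ((-1 : ℤ) ^ l * (-1) ^ (n - k)) * hE
    + (-(S - (-1) ^ k * (n.choose l : ℤ) * 0) - (S - (-1) ^ k * (n.choose l : ℤ)) * ((-1) ^ (n - k) * (-1) ^ (n - k)) + (S - (-1) ^ k * (n.choose l : ℤ) * 0)) * hp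
    + (-(S - (-1) ^ k * (n.choose l : ℤ)) - (-1) ^ l * (n.choose k : ℤ)) * hwsq
end

section
/- Let n, ℓ, p be natural numbers with p ≥ 1 and k := ℓ + p ≤ n, and let f : ℕ → ℤ. Suppose that for every ξ with ℓ+1 ≤ ξ ≤ k the cone Dehn–Sommerville relation holds: Σ_{θ=0}^{n} (−1)^θ · C(n−θ, (n+1)−ξ) · f(θ) + (−1)^n · Σ_{θ=0}^{n} (−1)^θ · C(n−θ, ξ) · f(θ) = (1 + (−1)^n) · C(n+1, ξ). Then Σ_{s=0}^{p−1} Σ_{θ=0}^{k} (−1)^θ · C(θ, s) · C(n−θ, (n−ℓ)−s) · f(θ) + (−1)^{n+p−1} · Σ_{s=0}^{p−1} Σ_{θ=0}^{n−ℓ} (−1)^θ · C(θ, s) · C(n−θ, k−s) · f(θ) = (1 + (−1)^n) · ( C(n, ℓ) + (−1)^{p−1} · C(n, k) ). -/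
open Finset

lemma lemJ (q : ℕ) : ∀ M r : ℕ, M < q →
    ∑ i ∈ range (r+1), (-1:ℤ)^i * ((M+i).choose i : ℤ) * (q.choose (r-i) : ℤ)
      = ((q-M-1).choose r : ℤ) := by
  intro M
  induction M with
  | zero =>
    intro r hq
    obtain ⟨Q, rfl⟩ : ∃ Q, q = Q + 1 := ⟨q - 1, by omega⟩
    induction r with
    | zero => simp
    | succ r ih =>
      rw [Finset.sum_range_succ']
      have h1 : ∀ i ∈ range (r+1),
          (-1:ℤ)^(i+1) * (((0:ℕ)+(i+1)).choose (i+1) : ℤ) * ((Q+1).choose (r+1-(i+1)) : ℤ)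
          = -((-1:ℤ)^i * (((0:ℕ)+i).choose i : ℤ) * ((Q+1).choose (r-i) : ℤ)) := by
        intro i _
        simp only [Nat.zero_add, Nat.choose_self, Nat.cast_one, Nat.succ_sub_succ]
        ring
      rw [Finset.sum_congr rfl h1, Finset.sum_neg_distrib, ih]
      have h2 : (Q+1).choose (r+1) = Q.choose r + Q.choose (r+1) := Nat.choose_succ_succ' Q r
      simp only [Nat.zero_add, Nat.choose_self, Nat.cast_one, Nat.sub_zero, Nat.add_sub_cancel,
        Nat.sub_self, Nat.choose_zero_right, pow_zero, h2]
      push_cast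
      ring
  | succ M ihM =>
    intro r hq
    induction r with
    | zero =>
      simp
    | succ r ih =>
      have split : ∀ i : ℕ, ((M+1+i).choose i : ℤ) = ((M+i).choose i : ℤ) + ((M+i).choose (M+1) : ℤ) := by
        intro i
        cases i with
        | zero => simp [Nat.choose_eq_zero_of_lt (show M < M+1 by omega)]
        | succ j =>
          have : (M+1+(j+1)).choose (j+1) = (M+(j+1)).choose j + (M+(j+1)).choose (j+1) := by
            have := Nat.choose_succ_succ' (M+j+1) j
            rw [show M+1+(j+1) = M+j+1+1 by omega, show M+(j+1) = M+j+1 by omega]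
            exact this
          rw [this]
          have hsymm : (M+(j+1)).choose (M+1) = (M+(j+1)).choose j := by
            rw [← Nat.choose_symm (show j ≤ M+(j+1) by omega)]
            congr 1
            omega
          rw [hsymm]
          push_cast
          ring
      have h1 : ∀ i ∈ range (r+1+1),
          (-1:ℤ)^i * ((M+1+i).choose i : ℤ) * (q.choose (r+1-i) : ℤ)
          = (-1:ℤ)^i * ((M+i).choose i : ℤ) * (q.choose (r+1-i) : ℤ)
            + (-1:ℤ)^i * ((M+i).choose (M+1) : ℤ) * (q.choose (r+1-i) : ℤ) := by
        intro i _
        rw [split]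
        ring
      rw [Finset.sum_congr rfl h1, Finset.sum_add_distrib, ihM (r+1) (by omega)]
      -- second sum: peel i = 0 and shift
      have h2 : ∑ i ∈ range (r+1+1), (-1:ℤ)^i * ((M+i).choose (M+1) : ℤ) * (q.choose (r+1-i) : ℤ)
          = - ∑ i ∈ range (r+1), (-1:ℤ)^i * ((M+1+i).choose i : ℤ) * (q.choose (r-i) : ℤ) := by
        rw [Finset.sum_range_succ']
        have h3 : ∀ i ∈ range (r+1),
            (-1:ℤ)^(i+1) * ((M+(i+1)).choose (M+1) : ℤ) * (q.choose (r+1-(i+1)) : ℤ)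
            = -((-1:ℤ)^i * ((M+1+i).choose i : ℤ) * (q.choose (r-i) : ℤ)) := by
          intro i _
          have e1 : (M+(i+1)).choose (M+1) = (M+1+i).choose i := by
            rw [← Nat.choose_symm (show i ≤ M+1+i by omega)]
            congr 1 <;> omega
          rw [e1]
          simp only [Nat.succ_sub_succ]
          ring
        rw [Finset.sum_congr rfl h3, Finset.sum_neg_distrib]
        simp [Nat.choose_eq_zero_of_lt (show M < M+1 by omega)]
      rw [h2, ih]
      have e2 : q - M - 1 = (q - M - 2) + 1 := by omega
      have e3 : q - (M+1) - 1 = q - M - 2 := by omega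
      rw [e2, e3, Nat.choose_succ_succ' (q-M-2) r]
      push_cast
      ring

lemma lemG (p q : ℕ) (h1 : 1 ≤ p) (hq : p ≤ q) :
    ∑ j ∈ range p, (-1:ℤ)^(p-1-j) * ((q-1-j).choose (p-1-j) : ℤ) * (q.choose j : ℤ) = 1 := by
  have hrefl := Finset.sum_range_reflect
    (fun i => (-1:ℤ)^i * ((q-p+i).choose i : ℤ) * (q.choose (p-1-i) : ℤ)) p
  have h2 : ∑ j ∈ range p, (-1:ℤ)^(p-1-j) * ((q-1-j).choose (p-1-j) : ℤ) * (q.choose j : ℤ)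
      = ∑ j ∈ range p, (fun i => (-1:ℤ)^i * ((q-p+i).choose i : ℤ) * (q.choose (p-1-i) : ℤ)) (p-1-j) := by
    apply Finset.sum_congr rfl
    intro j hj
    simp only [mem_range] at hj
    have e1 : q - p + (p-1-j) = q-1-j := by omega
    have e2 : p - 1 - (p-1-j) = j := by omega
    simp only [e1, e2]
  rw [h2, hrefl]
  have hp : range p = range ((p-1)+1) := by rw [Nat.sub_add_cancel h1]
  rw [hp, lemJ q (q-p) (p-1) (by omega)]
  have : q - (q-p) - 1 = p - 1 := by omega
  rw [this]
  simp

lemma lemZero (p y q : ℕ) (h1 : 1 ≤ p) :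
    ∑ s ∈ range p, (((0:ℕ).choose s : ℤ)) * (y.choose (q-s) : ℤ) = (y.choose q : ℤ) := by
  obtain ⟨P, rfl⟩ : ∃ P, p = P + 1 := ⟨p - 1, by omega⟩
  rw [Finset.sum_range_succ']
  have : ∀ s ∈ range P, (((0:ℕ).choose (s+1) : ℤ)) * (y.choose (q-(s+1)) : ℤ) = 0 := by
    intro s _
    simp [Nat.choose_eq_zero_of_lt (show (0:ℕ) < s+1 by omega)]
  rw [Finset.sum_congr rfl this]
  simp

lemma lemSplit (l j : ℕ) : ((l+1+j).choose j : ℤ) = ((l+j).choose j : ℤ) + ((l+j).choose (l+1) : ℤ) := by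
  cases j with
  | zero => simp [Nat.choose_eq_zero_of_lt (show l < l+1 by omega)]
  | succ j =>
    have e1 : (l+1+(j+1)).choose (j+1) = (l+(j+1)).choose j + (l+(j+1)).choose (j+1) := by
      have := Nat.choose_succ_succ' (l+j+1) j
      rw [show l+1+(j+1) = l+j+1+1 by omega, show l+(j+1) = l+j+1 by omega]
      exact this
    have e2 : (l+(j+1)).choose (l+1) = (l+(j+1)).choose j := by
      rw [← Nat.choose_symm (show j ≤ l+(j+1) by omega)]
      congr 1
      omega
    rw [e1, e2]
    push_cast
    ring

lemma lemBrec (x q P y : ℕ) (hq : P+2 ≤ q) :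
    ∑ j ∈ range (P+2), (-1:ℤ)^(P+1-j) * ((q-1-j).choose (P+1-j):ℤ) * ((x+1+y+j-q).choose j:ℤ) * (y.choose (q-j):ℤ)
    = (∑ j ∈ range (P+2), (-1:ℤ)^(P+1-j) * ((q-1-j).choose (P+1-j):ℤ) * ((x+y+j-q).choose j:ℤ) * (y.choose (q-j):ℤ))
      + ∑ j ∈ range (P+1), (-1:ℤ)^(P-j) * ((q-1-1-j).choose (P-j):ℤ) * ((x+y+j-(q-1)).choose j:ℤ) * (y.choose ((q-1)-j):ℤ) := by
  rw [Finset.sum_range_succ' (fun j => (-1:ℤ)^(P+1-j) * ((q-1-j).choose (P+1-j):ℤ) * ((x+1+y+j-q).choose j:ℤ) * (y.choose (q-j):ℤ)) (P+1),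
      Finset.sum_range_succ' (fun j => (-1:ℤ)^(P+1-j) * ((q-1-j).choose (P+1-j):ℤ) * ((x+y+j-q).choose j:ℤ) * (y.choose (q-j):ℤ)) (P+1)]
  simp only [Nat.choose_zero_right, Nat.cast_one, mul_one, Nat.sub_zero]
  have key : ∀ j ∈ range (P+1),
      (-1:ℤ)^(P+1-(j+1)) * ((q-1-(j+1)).choose (P+1-(j+1)):ℤ) * ((x+1+y+(j+1)-q).choose (j+1):ℤ) * (y.choose (q-(j+1)):ℤ)
      = (-1:ℤ)^(P+1-(j+1)) * ((q-1-(j+1)).choose (P+1-(j+1)):ℤ) * ((x+y+(j+1)-q).choose (j+1):ℤ) * (y.choose (q-(j+1)):ℤ)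
        + (-1:ℤ)^(P-j) * ((q-1-1-j).choose (P-j):ℤ) * ((x+y+j-(q-1)).choose j:ℤ) * (y.choose ((q-1)-j):ℤ) := by
    intro j hj
    simp only [mem_range] at hj
    have e1 : P+1-(j+1) = P-j := by omega
    have e2 : q-1-(j+1) = q-1-1-j := by omega
    have e3 : q-(j+1) = q-1-j := by omega
    have e4 : x+y+j-(q-1) = x+y+(j+1)-q := by omega
    rw [e1, e2, e3, e4]
    by_cases hc : q ≤ x + y + j + 1
    · have e5 : x+1+y+(j+1)-q = (x+y+(j+1)-q) + 1 := by omega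
      rw [e5, Nat.choose_succ_succ' (x+y+(j+1)-q) j]
      push_cast
      ring
    · have e6 : y.choose (q-1-j) = 0 := Nat.choose_eq_zero_of_lt (by omega)
      rw [e6]
      push_cast
      ring
  rw [Finset.sum_congr rfl key, Finset.sum_add_distrib]
  ring

lemma lemB_s14 (x : ℕ) : ∀ q p y : ℕ, 1 ≤ p → p ≤ q →
    ∑ s ∈ range p, (x.choose s : ℤ) * (y.choose (q-s) : ℤ)
    = ∑ j ∈ range p, (-1:ℤ)^(p-1-j) * ((q-1-j).choose (p-1-j):ℤ) * ((x+y+j-q).choose j:ℤ) * (y.choose (q-j):ℤ) := by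
  induction x with
  | zero =>
    intro q p y h1 hq
    rw [show (0:ℕ)+y = y from by omega] at *
    rw [lemZero p y q h1]
    rcases le_or_gt q y with hy | hy
    · have key : ∀ j ∈ range p,
          (-1:ℤ)^(p-1-j) * ((q-1-j).choose (p-1-j):ℤ) * ((y+j-q).choose j:ℤ) * (y.choose (q-j):ℤ)
          = ((-1:ℤ)^(p-1-j) * ((q-1-j).choose (p-1-j):ℤ) * (q.choose j : ℤ)) * (y.choose q : ℤ) := by
        intro j hj
        simp only [mem_range] at hj
        have hmul := Nat.choose_mul (n := y) (show q - j ≤ q by omega)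
        have e1 : q - (q-j) = j := by omega
        have e2 : y - (q-j) = y+j-q := by omega
        have e3 : q.choose (q-j) = q.choose j := Nat.choose_symm (by omega)
        rw [e1, e2, e3] at hmul
        have hN : (y+j-q).choose j * y.choose (q-j) = y.choose q * q.choose j := by
          rw [Nat.mul_comm, ← hmul]
        have : ((y+j-q).choose j : ℤ) * (y.choose (q-j):ℤ) = (y.choose q : ℤ) * (q.choose j : ℤ) := by
          exact_mod_cast hN
        calc (-1:ℤ)^(p-1-j) * ((q-1-j).choose (p-1-j):ℤ) * ((y+j-q).choose j:ℤ) * (y.choose (q-j):ℤ)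
            = (-1:ℤ)^(p-1-j) * ((q-1-j).choose (p-1-j):ℤ) * (((y+j-q).choose j:ℤ) * (y.choose (q-j):ℤ)) := by ring
          _ = (-1:ℤ)^(p-1-j) * ((q-1-j).choose (p-1-j):ℤ) * ((y.choose q : ℤ) * (q.choose j : ℤ)) := by rw [this]
          _ = ((-1:ℤ)^(p-1-j) * ((q-1-j).choose (p-1-j):ℤ) * (q.choose j : ℤ)) * (y.choose q : ℤ) := by ring
      rw [Finset.sum_congr rfl key, ← Finset.sum_mul, lemG p q h1 hq, one_mul]
    · have hz : (y.choose q : ℤ) = 0 := by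
        rw [Nat.choose_eq_zero_of_lt hy]; simp
      rw [hz]
      symm
      apply Finset.sum_eq_zero
      intro j hj
      simp only [mem_range] at hj
      by_cases hc : y + j < q
      · have : y.choose (q-j) = 0 := Nat.choose_eq_zero_of_lt (by omega)
        rw [this]; push_cast; ring
      · have : (y+j-q).choose j = 0 := Nat.choose_eq_zero_of_lt (by omega)
        rw [this]; push_cast; ring
  | succ x ih =>
    intro q p y h1 hq
    rcases Nat.lt_or_ge p 2 with hp2 | hp2
    · have : p = 1 := by omega
      subst this
      simp only [Finset.sum_range_one]
      norm_num
    · obtain ⟨P, rfl⟩ : ∃ P, p = P + 2 := ⟨p - 2, by omega⟩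
      have lhs_eq :
          ∑ s ∈ range (P+2), ((x+1).choose s : ℤ) * (y.choose (q-s) : ℤ)
          = (∑ s ∈ range (P+2), (x.choose s : ℤ) * (y.choose (q-s) : ℤ))
            + ∑ s ∈ range (P+1), (x.choose s : ℤ) * (y.choose ((q-1)-s) : ℤ) := by
        rw [Finset.sum_range_succ' (fun s => ((x+1).choose s : ℤ) * (y.choose (q-s) : ℤ)) (P+1),
            Finset.sum_range_succ' (fun s => (x.choose s : ℤ) * (y.choose (q-s) : ℤ)) (P+1)]
        have key : ∀ s ∈ range (P+1),
            ((x+1).choose (s+1) : ℤ) * (y.choose (q-(s+1)) : ℤ)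
            = (x.choose (s+1) : ℤ) * (y.choose (q-(s+1)) : ℤ)
              + (x.choose s : ℤ) * (y.choose ((q-1)-s) : ℤ) := by
          intro s _
          have e1 : q-(s+1) = q-1-s := by omega
          rw [Nat.choose_succ_succ' x s, e1]
          push_cast
          ring
        rw [Finset.sum_congr rfl key, Finset.sum_add_distrib]
        simp only [Nat.choose_zero_right, Nat.cast_one]
        ring
      rw [lhs_eq, ih q (P+2) y (by omega) hq, ih (q-1) (P+1) y (by omega) (by omega)]
      have hrec := lemBrec x q P y hq
      have e7 : ∀ j : ℕ, P+2-1-j = P+1-j := fun j => rfl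
      have e8 : ∀ j : ℕ, P+1-1-j = P-j := fun j => rfl
      simp only [e7, e8] at *
      rw [hrec]

lemma lemC : ∀ p q l : ℕ, 1 ≤ p → p ≤ q →
    ∑ j ∈ range p, (-1:ℤ)^(p-1-j) * ((q-1-j).choose (p-1-j):ℤ) * ((l+j).choose l:ℤ) * ((l+q+1).choose (q-j):ℤ)
      = ((l+q).choose l : ℤ) + (-1:ℤ)^(p-1) * ((l+q).choose (l+p) : ℤ) := by
  intro p
  induction p with
  | zero => intro q l h1; omega
  | succ P ih =>
    intro q l h1 hq
    rcases Nat.eq_zero_or_pos P with hP | hP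
    · subst hP
      simp only [zero_add, Finset.sum_range_one, Nat.sub_self, Nat.zero_sub, pow_zero,
        Nat.choose_zero_right, Nat.cast_one, one_mul, mul_one, Nat.sub_zero,
        Nat.add_zero, Nat.choose_self]
      have e1 : (l+q+1).choose q = (l+q+1).choose (l+1) :=
        Nat.choose_symm_of_eq_add (by omega)
      rw [e1, Nat.choose_succ_succ' (l+q) l]
      push_cast
      ring
    · -- P ≥ 1
      have hB := lemB_s14 0 q (P+1) (l+q+1) (by omega) hq
      rw [lemZero (P+1) (l+q+1) q (by omega)] at hB
      have e0 : ∀ j ∈ range (P+1),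
          (-1:ℤ)^(P+1-1-j) * ((q-1-j).choose (P+1-1-j):ℤ) * ((0+(l+q+1)+j-q).choose j:ℤ) * ((l+q+1).choose (q-j):ℤ)
          = (-1:ℤ)^(P-j) * ((q-1-j).choose (P-j):ℤ) * ((l+j).choose l:ℤ) * ((l+q+1).choose (q-j):ℤ)
            + (-1:ℤ)^(P-j) * ((q-1-j).choose (P-j):ℤ) * ((l+j).choose (l+1):ℤ) * ((l+q+1).choose (q-j):ℤ) := by
        intro j hj
        have e1 : (0:ℕ)+(l+q+1)+j-q = l+1+j := by omega
        have e2 : P+1-1-j = P-j := rfl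
        rw [e1, e2, lemSplit l j]
        have e3 : ((l+j).choose j : ℤ) = ((l+j).choose l : ℤ) := by
          exact_mod_cast congrArg (Nat.cast (R:=ℤ)) (Nat.choose_symm_add (a:=l) (b:=j)).symm
        rw [e3]
        ring
      rw [Finset.sum_congr rfl e0, Finset.sum_add_distrib] at hB
      -- second sum in hB equals ih (q-1) (l+1)
      have hshift : ∑ j ∈ range (P+1),
          (-1:ℤ)^(P-j) * ((q-1-j).choose (P-j):ℤ) * ((l+j).choose (l+1):ℤ) * ((l+q+1).choose (q-j):ℤ)
          = ∑ j ∈ range P,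
          (-1:ℤ)^(P-1-j) * (((q-1)-1-j).choose (P-1-j):ℤ) * (((l+1)+j).choose (l+1):ℤ) * (((l+1)+(q-1)+1).choose ((q-1)-j):ℤ) := by
        rw [Finset.sum_range_succ' (fun j => (-1:ℤ)^(P-j) * ((q-1-j).choose (P-j):ℤ) * ((l+j).choose (l+1):ℤ) * ((l+q+1).choose (q-j):ℤ)) P]
        have hz : ((l+0).choose (l+1) : ℤ) = 0 := by
          simp [Nat.choose_eq_zero_of_lt (show l < l+1 by omega)]
        rw [show (-1:ℤ)^(P-0) * ((q-1-0).choose (P-0):ℤ) * ((l+0).choose (l+1):ℤ) * ((l+q+1).choose (q-0):ℤ)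
            = 0 from by rw [hz]; ring]
        rw [add_zero]
        apply Finset.sum_congr rfl
        intro j hj
        simp only [mem_range] at hj
        have e1 : P-(j+1) = P-1-j := by omega
        have e2 : q-1-(j+1) = (q-1)-1-j := by omega
        have e3 : l+(j+1) = (l+1)+j := by omega
        have e4 : l+q+1 = (l+1)+(q-1)+1 := by omega
        have e5 : q-(j+1) = (q-1)-j := by omega
        rw [e1, e2, e3, e4, e5]
      rw [hshift, ih (q-1) (l+1) hP (by omega)] at hB
      -- assemble
      have e6 : ((l+1)+(q-1)).choose (l+1) = (l+q).choose (l+1) := by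
        congr 1
        omega
      have e7 : ((l+1)+(q-1)).choose ((l+1)+P) = (l+q).choose (l+(P+1)) := by
        congr 1 <;> omega
      rw [e6, e7] at hB
      have e8 : (l+q+1).choose q = (l+q).choose l + (l+q).choose (l+1) := by
        rw [Nat.choose_symm_of_eq_add (show l+q+1 = q+(l+1) by omega), Nat.choose_succ_succ' (l+q) l]
      rw [e8] at hB
      have e9 : ∀ j ∈ range (P+1),
          (-1:ℤ)^(P+1-1-j) * ((q-1-j).choose (P+1-1-j):ℤ) * ((l+j).choose l:ℤ) * ((l+q+1).choose (q-j):ℤ)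
          = (-1:ℤ)^(P-j) * ((q-1-j).choose (P-j):ℤ) * ((l+j).choose l:ℤ) * ((l+q+1).choose (q-j):ℤ) := by
        intro j _
        rfl
      rw [Finset.sum_congr rfl e9]
      have e10 : (-1:ℤ)^(P+1-1) = -(-1:ℤ)^(P-1) := by
        have : P+1-1 = (P-1)+1 := by omega
        rw [this, pow_succ]
        ring
      rw [e10]
      push_cast at hB ⊢
      linarith [hB]

/-- Proposition Φ^C: if `f : ℕ → ℤ` satisfies the cone Dehn–Sommerville relations for
every `ξ` with `ℓ+1 ≤ ξ ≤ ℓ+p`, then the alternating skeletal degree-of-freedom sum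
equals `(1 + (−1)^n)·(C(n,ℓ) + (−1)^{p−1}·C(n,ℓ+p))`. -/
theorem skeletal_count_cone (n l p : ℕ) (hp : 1 ≤ p) (hk : l + p ≤ n) (f : ℕ → ℤ)
    (hDS : ∀ ξ : ℕ, l + 1 ≤ ξ → ξ ≤ l + p →
      (∑ θ ∈ Finset.range (n + 1),
          (-1 : ℤ) ^ θ * (Nat.choose (n - θ) ((n + 1) - ξ) : ℤ) * f θ) +
        (-1 : ℤ) ^ n *
          (∑ θ ∈ Finset.range (n + 1),
            (-1 : ℤ) ^ θ * (Nat.choose (n - θ) ξ : ℤ) * f θ)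
        = (1 + (-1 : ℤ) ^ n) * (Nat.choose (n + 1) ξ : ℤ)) :
    (∑ s ∈ Finset.range p, ∑ θ ∈ Finset.range (l + p + 1),
        (-1 : ℤ) ^ θ * (Nat.choose θ s : ℤ) *
          (Nat.choose (n - θ) ((n - l) - s) : ℤ) * f θ) +
      (-1 : ℤ) ^ (n + p - 1) *
        (∑ s ∈ Finset.range p, ∑ θ ∈ Finset.range ((n - l) + 1),
          (-1 : ℤ) ^ θ * (Nat.choose θ s : ℤ) *
            (Nat.choose (n - θ) ((l + p) - s) : ℤ) * f θ)
      = (1 + (-1 : ℤ) ^ n) *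
          ((Nat.choose n l : ℤ) + (-1 : ℤ) ^ (p - 1) * (Nat.choose n (l + p) : ℤ)) := by
  -- coefficients
  set c : ℕ → ℤ := fun j => (-1:ℤ)^(p-1-j) * (((n-l)-1-j).choose (p-1-j) : ℤ) * ((l+j).choose l : ℤ) with hc
  -- Step 1: extend theta ranges
  have hExt1 : ∀ s ∈ range p,
      ∑ θ ∈ range (l+p+1), (-1:ℤ)^θ * (θ.choose s : ℤ) * ((n-θ).choose ((n-l)-s) : ℤ) * f θ
      = ∑ θ ∈ range (n+1), (-1:ℤ)^θ * (θ.choose s : ℤ) * ((n-θ).choose ((n-l)-s) : ℤ) * f θ := by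
    intro s hs
    simp only [mem_range] at hs
    apply Finset.sum_subset
    · exact Finset.range_subset_range.2 (by omega)
    · intro θ hθ hθn
      simp only [mem_range] at hθ hθn
      have : (n-θ).choose ((n-l)-s) = 0 := Nat.choose_eq_zero_of_lt (by omega)
      rw [this]
      push_cast
      ring
  have hExt2 : ∀ s ∈ range p,
      ∑ θ ∈ range ((n-l)+1), (-1:ℤ)^θ * (θ.choose s : ℤ) * ((n-θ).choose ((l+p)-s) : ℤ) * f θ
      = ∑ θ ∈ range (n+1), (-1:ℤ)^θ * (θ.choose s : ℤ) * ((n-θ).choose ((l+p)-s) : ℤ) * f θ := by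
    intro s hs
    simp only [mem_range] at hs
    apply Finset.sum_subset
    · exact Finset.range_subset_range.2 (by omega)
    · intro θ hθ hθn
      simp only [mem_range] at hθ hθn
      have : (n-θ).choose ((l+p)-s) = 0 := Nat.choose_eq_zero_of_lt (by omega)
      rw [this]
      push_cast
      ring
  rw [Finset.sum_congr rfl hExt1, Finset.sum_congr rfl hExt2]
  -- Step 2: Claim 1
  have hC1 : ∑ s ∈ range p, ∑ θ ∈ range (n+1),
        (-1:ℤ)^θ * (θ.choose s : ℤ) * ((n-θ).choose ((n-l)-s) : ℤ) * f θ
      = ∑ j ∈ range p, c j *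
          (∑ θ ∈ range (n+1), (-1:ℤ)^θ * ((n-θ).choose ((n+1)-(l+1+j)) : ℤ) * f θ) := by
    rw [Finset.sum_comm]
    have hinner : ∀ θ ∈ range (n+1),
        ∑ s ∈ range p, (-1:ℤ)^θ * (θ.choose s : ℤ) * ((n-θ).choose ((n-l)-s) : ℤ) * f θ
        = ∑ j ∈ range p, c j * ((-1:ℤ)^θ * ((n-θ).choose ((n+1)-(l+1+j)) : ℤ) * f θ) := by
      intro θ hθ
      simp only [mem_range] at hθ
      have hB := lemB_s14 θ (n-l) p (n-θ) hp (by omega)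
      have hB' : ∑ s ∈ range p, (θ.choose s : ℤ) * ((n-θ).choose ((n-l)-s) : ℤ)
          = ∑ j ∈ range p, c j * ((n-θ).choose ((n+1)-(l+1+j)) : ℤ) := by
        rw [hB]
        apply Finset.sum_congr rfl
        intro j hj
        simp only [mem_range] at hj
        have e1 : θ+(n-θ)+j-(n-l) = l+j := by omega
        have e2 : (n+1)-(l+1+j) = (n-l)-j := by omega
        have e3 : ((l+j).choose j : ℤ) = ((l+j).choose l : ℤ) := by
          exact_mod_cast congrArg (Nat.cast (R:=ℤ)) (Nat.choose_symm_add (a:=l) (b:=j)).symm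
        rw [e1, e2, e3, hc]
      calc ∑ s ∈ range p, (-1:ℤ)^θ * (θ.choose s : ℤ) * ((n-θ).choose ((n-l)-s) : ℤ) * f θ
          = ((-1:ℤ)^θ * f θ) * ∑ s ∈ range p, (θ.choose s : ℤ) * ((n-θ).choose ((n-l)-s) : ℤ) := by
            rw [Finset.mul_sum]
            exact Finset.sum_congr rfl (fun s _ => by ring)
        _ = ((-1:ℤ)^θ * f θ) * ∑ j ∈ range p, c j * ((n-θ).choose ((n+1)-(l+1+j)) : ℤ) := by rw [hB']
        _ = ∑ j ∈ range p, c j * ((-1:ℤ)^θ * ((n-θ).choose ((n+1)-(l+1+j)) : ℤ) * f θ) := by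
            rw [Finset.mul_sum]
            exact Finset.sum_congr rfl (fun j _ => by ring)
    rw [Finset.sum_congr rfl hinner, Finset.sum_comm]
    apply Finset.sum_congr rfl
    intro j _
    rw [Finset.mul_sum]
  -- Step 3: Claim 2
  have hC2 : ∀ θ ∈ range (n+1),
      ∑ s ∈ range p, (θ.choose s : ℤ) * ((n-θ).choose ((l+p)-s) : ℤ)
      = ∑ j ∈ range p, (-1:ℤ)^j * (((n-l)-1-j).choose (p-1-j) : ℤ) * ((l+j).choose l : ℤ)
          * ((n-θ).choose (l+1+j) : ℤ) := by
    intro θ hθ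
    simp only [mem_range] at hθ
    have hB := lemB_s14 θ (l+p) p (n-θ) hp (by omega)
    rw [hB]
    rw [← Finset.sum_range_reflect (fun j => (-1:ℤ)^(p-1-j) * (((l+p)-1-j).choose (p-1-j):ℤ)
        * ((θ+(n-θ)+j-(l+p)).choose j:ℤ) * ((n-θ).choose ((l+p)-j):ℤ)) p]
    apply Finset.sum_congr rfl
    intro j hj
    simp only [mem_range] at hj
    have e1 : p-1-(p-1-j) = j := by omega
    have e2 : (l+p)-1-(p-1-j) = l+j := by omega
    have e3 : θ+(n-θ)+(p-1-j)-(l+p) = (n-l)-1-j := by omega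
    have e4 : (l+p)-(p-1-j) = l+1+j := by omega
    rw [e1, e2, e3, e4]
    have e5 : ((l+j).choose j : ℤ) = ((l+j).choose l : ℤ) := by
      exact_mod_cast congrArg (Nat.cast (R:=ℤ)) (Nat.choose_symm_add (a:=l) (b:=j)).symm
    rw [e5]
    ring
  have hC2' : (-1:ℤ)^(n+p-1) * ∑ s ∈ range p, ∑ θ ∈ range (n+1),
        (-1:ℤ)^θ * (θ.choose s : ℤ) * ((n-θ).choose ((l+p)-s) : ℤ) * f θ
      = ∑ j ∈ range p, c j *
          ((-1:ℤ)^n * ∑ θ ∈ range (n+1), (-1:ℤ)^θ * ((n-θ).choose (l+1+j) : ℤ) * f θ) := by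
    rw [Finset.sum_comm]
    have hinner : ∀ θ ∈ range (n+1),
        ∑ s ∈ range p, (-1:ℤ)^θ * (θ.choose s : ℤ) * ((n-θ).choose ((l+p)-s) : ℤ) * f θ
        = ∑ j ∈ range p, (-1:ℤ)^j * (((n-l)-1-j).choose (p-1-j) : ℤ) * ((l+j).choose l : ℤ)
            * ((-1:ℤ)^θ * ((n-θ).choose (l+1+j) : ℤ) * f θ) := by
      intro θ hθ
      calc ∑ s ∈ range p, (-1:ℤ)^θ * (θ.choose s : ℤ) * ((n-θ).choose ((l+p)-s) : ℤ) * f θ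
          = ((-1:ℤ)^θ * f θ) * ∑ s ∈ range p, (θ.choose s : ℤ) * ((n-θ).choose ((l+p)-s) : ℤ) := by
            rw [Finset.mul_sum]
            exact Finset.sum_congr rfl (fun s _ => by ring)
        _ = ((-1:ℤ)^θ * f θ) * ∑ j ∈ range p, (-1:ℤ)^j * (((n-l)-1-j).choose (p-1-j) : ℤ)
              * ((l+j).choose l : ℤ) * ((n-θ).choose (l+1+j) : ℤ) := by rw [hC2 θ hθ]
        _ = _ := by
            rw [Finset.mul_sum]
            exact Finset.sum_congr rfl (fun j _ => by ring)
    rw [Finset.sum_congr rfl hinner, Finset.sum_comm, Finset.mul_sum]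
    apply Finset.sum_congr rfl
    intro j hj
    simp only [mem_range] at hj
    rw [Finset.mul_sum, Finset.mul_sum, Finset.mul_sum]
    apply Finset.sum_congr rfl
    intro θ _
    have esign : (-1:ℤ)^(n+p-1) * (-1:ℤ)^j = (-1:ℤ)^n * (-1:ℤ)^(p-1-j) := by
      have e1 : (n+p-1) + j = n + (p-1-j) + 2*j := by omega
      calc (-1:ℤ)^(n+p-1) * (-1:ℤ)^j = (-1:ℤ)^((n+p-1)+j) := by rw [pow_add]
        _ = (-1:ℤ)^(n + (p-1-j)) * ((-1:ℤ)^2)^j := by rw [e1, pow_add, pow_mul]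
        _ = (-1:ℤ)^n * (-1:ℤ)^(p-1-j) := by norm_num [pow_add]
    calc (-1:ℤ)^(n+p-1) * ((-1:ℤ)^j * (((n-l)-1-j).choose (p-1-j) : ℤ) * ((l+j).choose l : ℤ)
            * ((-1:ℤ)^θ * ((n-θ).choose (l+1+j) : ℤ) * f θ))
        = ((-1:ℤ)^(n+p-1) * (-1:ℤ)^j) * ((((n-l)-1-j).choose (p-1-j) : ℤ) * ((l+j).choose l : ℤ)
            * ((-1:ℤ)^θ * ((n-θ).choose (l+1+j) : ℤ) * f θ)) := by ring
      _ = ((-1:ℤ)^n * (-1:ℤ)^(p-1-j)) * ((((n-l)-1-j).choose (p-1-j) : ℤ) * ((l+j).choose l : ℤ)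
            * ((-1:ℤ)^θ * ((n-θ).choose (l+1+j) : ℤ) * f θ)) := by rw [esign]
      _ = c j * ((-1:ℤ)^n * ((-1:ℤ)^θ * ((n-θ).choose (l+1+j) : ℤ) * f θ)) := by rw [hc]; ring
  -- Step 4: combine with hDS
  rw [hC1, hC2', ← Finset.sum_add_distrib]
  have hstep : ∀ j ∈ range p,
      c j * (∑ θ ∈ range (n+1), (-1:ℤ)^θ * ((n-θ).choose ((n+1)-(l+1+j)) : ℤ) * f θ)
      + c j * ((-1:ℤ)^n * ∑ θ ∈ range (n+1), (-1:ℤ)^θ * ((n-θ).choose (l+1+j) : ℤ) * f θ)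
      = c j * ((1 + (-1:ℤ)^n) * ((n+1).choose (l+1+j) : ℤ)) := by
    intro j hj
    simp only [mem_range] at hj
    rw [← mul_add, hDS (l+1+j) (by omega) (by omega)]
  rw [Finset.sum_congr rfl hstep]
  -- Step 5: final binomial sum via lemC
  have hfin := lemC p (n-l) l hp (by omega)
  have e1 : l + (n-l) = n := by omega
  have e2 : l + (n-l) + 1 = n+1 := by omega
  rw [e2, e1] at hfin
  have e3 : ∀ j ∈ range p, ((n+1).choose ((n-l)-j) : ℤ) = ((n+1).choose (l+1+j) : ℤ) := by
    intro j hj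
    simp only [mem_range] at hj
    exact_mod_cast congrArg (Nat.cast (R:=ℤ)) (Nat.choose_symm_of_eq_add (by omega : n+1 = ((n-l)-j) + (l+1+j)))
  have hfin' : ∑ j ∈ range p, c j * ((n+1).choose (l+1+j) : ℤ)
      = (n.choose l : ℤ) + (-1:ℤ)^(p-1) * (n.choose (l+p) : ℤ) := by
    rw [← hfin]
    apply Finset.sum_congr rfl
    intro j hj
    rw [hc, ← e3 j hj]
  calc ∑ j ∈ range p, c j * ((1 + (-1:ℤ)^n) * ((n+1).choose (l+1+j) : ℤ))
      = (1 + (-1:ℤ)^n) * ∑ j ∈ range p, c j * ((n+1).choose (l+1+j) : ℤ) := by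
        rw [Finset.mul_sum]
        exact Finset.sum_congr rfl (fun j _ => by ring)
    _ = _ := by rw [hfin']
end

section
/- Let n, ℓ, p be natural numbers with p ≥ 1 and k := ℓ + p ≤ n, and let h : ℕ → ℤ satisfy h(0) = 1 and h(n+1) = 0. Suppose that for every ξ with ℓ+1 ≤ ξ ≤ k the boundary Dehn–Sommerville relation holds: Σ_{θ=0}^{n} (−1)^θ · C(n−θ, (n+1)−ξ) · h(θ) = (−1)^n · Σ_{θ=0}^{n} (−1)^θ · C(n−θ, ξ−1) · h(θ). Then Σ_{s=0}^{p−1} Σ_{θ=0}^{k} (−1)^θ · C(θ, s) · C(n−θ, (n−ℓ)−s) · h(θ) + (−1)^{n+p−1} · Σ_{s=0}^{p−1} Σ_{θ=0}^{n−ℓ} (−1)^θ · C(θ, s) · C(n−θ, k−s) · ( h(θ+1) + h(θ) ) = (−1)^n · ( C(n, ℓ) + (−1)^{p−1} · C(n, k) ). -/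
/-!
Write `A n f s m = ∑_{θ ≤ n} (-1)^θ C(θ,s) C(n-θ,m) f(θ)`, so that the Dehn–Sommerville
relations read `A n h 0 r = (-1)^n A n h 0 (n-r)`. Absorbing a factor into each binomial gives
`(s+1) A(s+1,m) = (n-m-s) A(s,m) - (m+1) A(s,m+1)`, which propagates the relations to
`A n h s m = (-1)^(n+s) A n h s (n-m-s)` and turns the first sum into `(-1)^n ∑_s (-1)^s A(s,ℓ)`.
Pascal's rule in either binomial expresses `A (n+1) f` through `A n (f ∘ succ)`; then
`∑_s (-1)^s A(s,ℓ)` and the second sum both telescope, to `C(n,ℓ) - (-1)^(p-1) E` and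
`C(n,k) + E` with the same `E = A (n-1) (h ∘ succ) (p-1) ℓ`, which cancels.
-/

open Finset

namespace BoundaryDehnSommerville

lemma cast_choose_succ_right_mul (a b : ℕ) :
    ((b : ℤ) + 1) * (a.choose (b + 1) : ℤ) = ((a : ℤ) - b) * (a.choose b : ℤ) := by
  rcases le_or_gt b a with hba | hab
  · have := congrArg (fun x : ℕ => (x : ℤ)) (Nat.choose_succ_right_eq a b)
    push_cast [Nat.cast_sub hba] at this
    linarith
  · rw [Nat.choose_eq_zero_of_lt hab, Nat.choose_eq_zero_of_lt (by omega)]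
    simp

def altChooseSum (n : ℕ) (f : ℕ → ℤ) (s m : ℕ) : ℤ :=
  ∑ θ ∈ range (n + 1), (-1 : ℤ) ^ θ * (θ.choose s : ℤ) * ((n - θ).choose m : ℤ) * f θ

lemma altChooseSum_zero_left (n : ℕ) (f : ℕ → ℤ) (m : ℕ) :
    altChooseSum n f 0 m = ∑ θ ∈ range (n + 1), (-1 : ℤ) ^ θ * ((n - θ).choose m : ℤ) * f θ := by
  simp [altChooseSum]

lemma altChooseSum_add (n : ℕ) (f g : ℕ → ℤ) (s m : ℕ) :
    altChooseSum n (fun θ => f θ + g θ) s m = altChooseSum n f s m + altChooseSum n g s m := by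
  simp only [altChooseSum, mul_add, sum_add_distrib]

lemma sum_range_eq_altChooseSum {n b m : ℕ} (hbn : b ≤ n) (hm : n < b + m + 1) (f : ℕ → ℤ)
    (s : ℕ) :
    ∑ θ ∈ range (b + 1), (-1 : ℤ) ^ θ * (θ.choose s : ℤ) * ((n - θ).choose m : ℤ) * f θ
      = altChooseSum n f s m := by
  refine sum_subset (range_subset_range.2 (by omega)) fun θ hθn hθb => ?_
  rw [mem_range] at hθn hθb
  rw [Nat.choose_eq_zero_of_lt (show n - θ < m by omega)]
  simp

lemma succ_mul_altChooseSum_succ_left (n : ℕ) (f : ℕ → ℤ) (s m : ℕ) :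
    ((s : ℤ) + 1) * altChooseSum n f (s + 1) m
      = ((n : ℤ) - m - s) * altChooseSum n f s m - ((m : ℤ) + 1) * altChooseSum n f s (m + 1) := by
  simp only [altChooseSum, mul_sum, ← sum_sub_distrib]
  refine sum_congr rfl fun θ hθ => ?_
  have hθn : ((n - θ : ℕ) : ℤ) = n - θ := by have := mem_range.1 hθ; omega
  have hθs := cast_choose_succ_right_mul θ s
  have hθm := cast_choose_succ_right_mul (n - θ) m
  rw [hθn] at hθm
  linear_combination ((-1 : ℤ) ^ θ * ((n - θ).choose m : ℤ) * f θ) * hθs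
    + ((-1 : ℤ) ^ θ * (θ.choose s : ℤ) * f θ) * hθm

lemma altChooseSum_symm (n : ℕ) (f : ℕ → ℤ) (s m : ℕ) (hsm : m + s ≤ n)
    (hDS : ∀ r, m ≤ r → r ≤ m + s →
      altChooseSum n f 0 r = (-1) ^ n * altChooseSum n f 0 (n - r)) :
    altChooseSum n f s m = (-1) ^ (n + s) * altChooseSum n f s (n - m - s) := by
  induction s generalizing m with
  | zero => simpa using hDS m le_rfl (by omega)
  | succ s ih =>
    generalize hm' : n - m - (s + 1) = m'
    have ih₁ : altChooseSum n f s m = (-1) ^ (n + s) * altChooseSum n f s (m' + 1) := by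
      simpa [show n - m - s = m' + 1 by omega] using
        ih m (by omega) fun r h₁ h₂ => hDS r h₁ (by omega)
    have ih₂ : altChooseSum n f s (m + 1) = (-1) ^ (n + s) * altChooseSum n f s m' := by
      simpa [show n - (m + 1) - s = m' by omega] using
        ih (m + 1) (by omega) fun r h₁ h₂ => hDS r (by omega) (by omega)
    have rec₁ := succ_mul_altChooseSum_succ_left n f s m
    have rec₂ := succ_mul_altChooseSum_succ_left n f s m'
    have hn : (n : ℤ) = m + s + 1 + m' := by omega
    apply mul_left_cancel₀ (show (s : ℤ) + 1 ≠ 0 by positivity)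
    rw [hn] at rec₁ rec₂
    linear_combination rec₁ + (-1) ^ (n + s) * rec₂
      + ((m' : ℤ) + 1) * ih₁ - ((m : ℤ) + 1) * ih₂

lemma altChooseSum_succ_succ_right (n : ℕ) (f : ℕ → ℤ) (s m : ℕ) :
    altChooseSum (n + 1) f s (m + 1) = altChooseSum n f s (m + 1) + altChooseSum n f s m := by
  rw [altChooseSum, sum_range_succ, Nat.sub_self, Nat.choose_zero_succ, altChooseSum,
    altChooseSum, ← sum_add_distrib]
  simp only [Nat.cast_zero, mul_zero, zero_mul, add_zero]
  refine sum_congr rfl fun θ hθ => ?_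
  rw [show n + 1 - θ = n - θ + 1 by have := mem_range.1 hθ; omega, Nat.choose_succ_succ']
  push_cast
  ring

lemma altChooseSum_succ_zero_left (n : ℕ) (f : ℕ → ℤ) (m : ℕ) :
    altChooseSum (n + 1) f 0 m
      = ((n + 1).choose m : ℤ) * f 0 - altChooseSum n (fun θ => f (θ + 1)) 0 m := by
  rw [altChooseSum, sum_range_succ', altChooseSum, eq_sub_iff_add_eq, add_comm, ← add_assoc,
    ← sum_add_distrib]
  simp [pow_succ]

lemma altChooseSum_succ_succ_left (n : ℕ) (f : ℕ → ℤ) (s m : ℕ) :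
    altChooseSum (n + 1) f (s + 1) m
      = -(altChooseSum n (fun θ => f (θ + 1)) (s + 1) m
          + altChooseSum n (fun θ => f (θ + 1)) s m) := by
  rw [altChooseSum, sum_range_succ', altChooseSum, altChooseSum, ← sum_add_distrib,
    ← sum_neg_distrib]
  simp only [Nat.choose_zero_succ, Nat.cast_zero, mul_zero, zero_mul, add_zero]
  refine sum_congr rfl fun θ _ => ?_
  rw [Nat.choose_succ_succ', Nat.add_sub_add_right]
  push_cast
  ring

lemma sum_neg_one_pow_mul_altChooseSum (n : ℕ) (f : ℕ → ℤ) (m q : ℕ) :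
    ∑ s ∈ range (q + 1), (-1) ^ s * altChooseSum (n + 1) f s m
      = ((n + 1).choose m : ℤ) * f 0 - (-1) ^ q * altChooseSum n (fun θ => f (θ + 1)) q m := by
  induction q with
  | zero => simp [altChooseSum_succ_zero_left]
  | succ q ih =>
    rw [sum_range_succ, ih, altChooseSum_succ_succ_left]
    ring

lemma sum_altChooseSum_add_shift (n : ℕ) (f : ℕ → ℤ) (m q : ℕ) :
    ∑ s ∈ range (q + 1), altChooseSum (n + 1) (fun θ => f (θ + 1) + f θ) s (m + (q + 1) - s)
      = ((n + 1).choose (m + (q + 1)) : ℤ) * f 0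
        + altChooseSum n (fun θ => f (θ + 1)) q m := by
  induction q generalizing m with
  | zero =>
    rw [sum_range_one, Nat.sub_zero, altChooseSum_add, altChooseSum_succ_succ_right,
      altChooseSum_succ_zero_left]
    ring
  | succ q ih =>
    have hshift : ∀ s ∈ range (q + 1), m + (q + 1 + 1) - s = m + 1 + (q + 1) - s := by
      intro s _; omega
    rw [sum_range_succ, sum_congr rfl fun s hs => by rw [hshift s hs], ih,
      show m + (q + 1 + 1) - (q + 1) = m + 1 by omega, altChooseSum_add,
      altChooseSum_succ_succ_right, altChooseSum_succ_succ_left,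
      show m + 1 + (q + 1) = m + (q + 1 + 1) by omega]
    ring

end BoundaryDehnSommerville

open BoundaryDehnSommerville in
theorem skeletal_count_boundary_general (n l p : ℕ) (hp : 1 ≤ p) (hk : l + p ≤ n) (h : ℕ → ℤ)
    (h0 : h 0 = 1)
    (hDS : ∀ ξ : ℕ, l + 1 ≤ ξ → ξ ≤ l + p →
      ∑ θ ∈ Finset.range (n + 1),
          (-1 : ℤ) ^ θ * (Nat.choose (n - θ) ((n + 1) - ξ) : ℤ) * h θ
        = (-1 : ℤ) ^ n *
          ∑ θ ∈ Finset.range (n + 1),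
            (-1 : ℤ) ^ θ * (Nat.choose (n - θ) (ξ - 1) : ℤ) * h θ) :
    (∑ s ∈ Finset.range p, ∑ θ ∈ Finset.range (l + p + 1),
        (-1 : ℤ) ^ θ * (Nat.choose θ s : ℤ) *
          (Nat.choose (n - θ) ((n - l) - s) : ℤ) * h θ) +
      (-1 : ℤ) ^ (n + p - 1) *
        (∑ s ∈ Finset.range p, ∑ θ ∈ Finset.range ((n - l) + 1),
          (-1 : ℤ) ^ θ * (Nat.choose θ s : ℤ) *
            (Nat.choose (n - θ) ((l + p) - s) : ℤ) * (h (θ + 1) + h θ))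
      = (-1 : ℤ) ^ n *
          ((Nat.choose n l : ℤ) + (-1 : ℤ) ^ (p - 1) * (Nat.choose n (l + p) : ℤ)) := by
  obtain ⟨q, rfl⟩ : ∃ q, p = q + 1 := ⟨p - 1, by omega⟩
  obtain ⟨N, rfl⟩ : ∃ N, n = N + 1 := ⟨n - 1, by omega⟩
  have hsymm : ∀ r, N + 1 - l - q ≤ r → r ≤ N + 1 - l →
      altChooseSum (N + 1) h 0 r = (-1) ^ (N + 1) * altChooseSum (N + 1) h 0 (N + 1 - r) := by
    intro r h₁ h₂
    have := hDS (N + 1 + 1 - r) (by omega) (by omega)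
    rwa [show N + 1 + 1 - (N + 1 + 1 - r) = r by omega, show N + 1 + 1 - r - 1 = N + 1 - r by omega,
      ← altChooseSum_zero_left, ← altChooseSum_zero_left] at this
  have hfirst : ∀ s ∈ range (q + 1), ∑ θ ∈ range (l + (q + 1) + 1),
      (-1 : ℤ) ^ θ * (θ.choose s : ℤ) * ((N + 1 - θ).choose (N + 1 - l - s) : ℤ) * h θ
        = (-1) ^ (N + 1) * ((-1) ^ s * altChooseSum (N + 1) h s l) := by
    intro s hs
    have := mem_range.1 hs
    rw [sum_range_eq_altChooseSum (by omega) (by omega),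
      altChooseSum_symm _ _ s _ (by omega) fun r h₁ h₂ => hsymm r (by omega) (by omega),
      show N + 1 - (N + 1 - l - s) - s = l by omega, pow_add, mul_assoc]
  have hsecond : ∀ s ∈ range (q + 1), ∑ θ ∈ range (N + 1 - l + 1),
      (-1 : ℤ) ^ θ * (θ.choose s : ℤ) * ((N + 1 - θ).choose (l + (q + 1) - s) : ℤ)
        * (h (θ + 1) + h θ)
        = altChooseSum (N + 1) (fun θ => h (θ + 1) + h θ) s (l + (q + 1) - s) :=
    fun s hs => sum_range_eq_altChooseSum (by omega) (by have := mem_range.1 hs; omega) _ _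
  rw [sum_congr rfl hfirst, sum_congr rfl hsecond, ← mul_sum, sum_neg_one_pow_mul_altChooseSum,
    sum_altChooseSum_add_shift, h0, show N + 1 + (q + 1) - 1 = N + 1 + q by omega, pow_add,
    Nat.add_sub_cancel]
  ring

/-- Proposition Φ^∂: if `h : ℕ → ℤ` satisfies `h(0) = 1`, `h(n+1) = 0` and the boundary
Dehn–Sommerville relations for every `ξ` with `ℓ+1 ≤ ξ ≤ ℓ+p`, then the boundary
correction sum equals `(−1)^n·(C(n,ℓ) + (−1)^{p−1}·C(n,ℓ+p))`. -/
theorem skeletal_count_boundary (n l p : ℕ) (hp : 1 ≤ p) (hk : l + p ≤ n) (h : ℕ → ℤ)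
    (h0 : h 0 = 1) (hn1 : h (n + 1) = 0)
    (hDS : ∀ ξ : ℕ, l + 1 ≤ ξ → ξ ≤ l + p →
      ∑ θ ∈ Finset.range (n + 1),
          (-1 : ℤ) ^ θ * (Nat.choose (n - θ) ((n + 1) - ξ) : ℤ) * h θ
        = (-1 : ℤ) ^ n *
          ∑ θ ∈ Finset.range (n + 1),
            (-1 : ℤ) ^ θ * (Nat.choose (n - θ) (ξ - 1) : ℤ) * h θ) :
    (∑ s ∈ Finset.range p, ∑ θ ∈ Finset.range (l + p + 1),
        (-1 : ℤ) ^ θ * (Nat.choose θ s : ℤ) *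
          (Nat.choose (n - θ) ((n - l) - s) : ℤ) * h θ) +
      (-1 : ℤ) ^ (n + p - 1) *
        (∑ s ∈ Finset.range p, ∑ θ ∈ Finset.range ((n - l) + 1),
          (-1 : ℤ) ^ θ * (Nat.choose θ s : ℤ) *
            (Nat.choose (n - θ) ((l + p) - s) : ℤ) * (h (θ + 1) + h θ))
      = (-1 : ℤ) ^ n *
          ((Nat.choose n l : ℤ) + (-1 : ℤ) ^ (p - 1) * (Nat.choose n (l + p) : ℤ)) :=
  skeletal_count_boundary_general n l p hp hk h h0 hDS
end
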